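/- arXiv:math/0402409 — 5 statements merged into one kernel-verified Lean document; each statement's English description precedes it below -/
import Mathlib

section
/- Let H ⊆ G be finite groups. If σ is distributed according to the Plancherel measure of H, and given σ one chooses τ among irreducible representations of G with probability |H| dim(τ) κ(σ,τ)/(|G| dim(σ)), then τ is distributed according to the Plancherel measure of G. -/
open FDRep CategoryTheory

noncomputable section
namespace PlancherelAux
variable {H : Type} [Group H] [Fintype H]

/-- The subrepresentation on an invariant submodule. -/
def subrep (V : FDRep ℂ H) (p : Submodule ℂ V) (hp : ∀ g : H, ∀ x ∈ p, V.ρ g x ∈ p) :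
    Representation ℂ H p where
  toFun g := (V.ρ g).restrict (hp g)
  map_one' := by ext x; simp [LinearMap.restrict_apply]
  map_mul' g g' := by ext x; simp [LinearMap.restrict_apply]

def subFDRep (V : FDRep ℂ H) (p : Submodule ℂ V) (hp : ∀ g : H, ∀ x ∈ p, V.ρ g x ∈ p) :
    FDRep ℂ H := FDRep.of (subrep V p hp)

theorem char_subFDRep (V : FDRep ℂ H) (p : Submodule ℂ V) (hp) (g : H) :
    (subFDRep V p hp).character g = LinearMap.trace ℂ p ((V.ρ g).restrict (hp g)) := rfl

/-- inclusion of a subrepresentation -/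
def inclHom (V : FDRep ℂ H) (p : Submodule ℂ V) (hp : ∀ g : H, ∀ x ∈ p, V.ρ g x ∈ p) :
    subFDRep V p hp ⟶ V where
  hom := FGModuleCat.ofHom p.subtype
  comm g := by ext x; rfl

theorem rho_cancel (V : FDRep ℂ H) (a : H) (y : V) : V.ρ a (V.ρ a⁻¹ y) = y := by
  rw [← Module.End.mul_apply, ← map_mul, mul_inv_cancel, map_one, Module.End.one_apply]

theorem exists_invariant_compl (V : FDRep ℂ H) (p : Submodule ℂ V)
    (hp : ∀ g : H, ∀ x ∈ p, V.ρ g x ∈ p) :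
    ∃ q : Submodule ℂ V, (∀ g : H, ∀ x ∈ q, V.ρ g x ∈ q) ∧ IsCompl p q := by
  obtain ⟨q₀, hq₀⟩ := Submodule.exists_isCompl p
  set π₀ := p.linearProjOfIsCompl q₀ hq₀ with hπ₀
  set N : ℂ := (Fintype.card H : ℂ) with hN
  have hNne : N ≠ 0 := Nat.cast_ne_zero.2 Fintype.card_ne_zero
  set E : V →ₗ[ℂ] V :=
    N⁻¹ • ∑ g : H, (V.ρ g) ∘ₗ p.subtype ∘ₗ π₀ ∘ₗ (V.ρ g⁻¹) with hE
  have hrange : ∀ x : V, E x ∈ p := by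
    intro x
    rw [hE]
    simp only [LinearMap.smul_apply, LinearMap.sum_apply, LinearMap.comp_apply]
    exact Submodule.smul_mem _ _ (Submodule.sum_mem _ fun g _ =>
      hp g _ (Submodule.coe_mem _))
  have hid : ∀ x ∈ p, E x = x := by
    intro x hx
    rw [hE]
    simp only [LinearMap.smul_apply, LinearMap.sum_apply, LinearMap.comp_apply]
    have key1 : ∀ g : H, V.ρ g ((p.subtype) (π₀ (V.ρ g⁻¹ x))) = x := by
      intro g
      have hmem : V.ρ g⁻¹ x ∈ p := hp g⁻¹ x hx
      have h1 : π₀ ((V.ρ g⁻¹) x) = ⟨_, hmem⟩ :=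
        Submodule.linearProjOfIsCompl_apply_left hq₀ ⟨_, hmem⟩
      rw [h1]
      exact rho_cancel V g x
    simp only [key1, Finset.sum_const, Finset.card_univ]
    rw [← Nat.cast_smul_eq_nsmul ℂ, smul_smul, inv_mul_cancel₀ hNne, one_smul]
  have hequiv : ∀ (h : H) (x : V), E (V.ρ h x) = V.ρ h (E x) := by
    intro h x
    rw [hE]
    simp only [LinearMap.smul_apply, LinearMap.sum_apply, LinearMap.comp_apply]
    rw [map_smul]
    congr 1
    rw [map_sum]
    refine Fintype.sum_bijective (fun g => h⁻¹ * g) (Group.mulLeft_bijective h⁻¹) _ _ fun g => ?_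
    simp only [map_mul, mul_inv_rev, inv_inv, Module.End.mul_apply]
    rw [rho_cancel V h]
  refine ⟨LinearMap.ker (E.codRestrict p hrange), ?_, ?_⟩
  · intro g x hx
    simp only [LinearMap.mem_ker] at hx ⊢
    apply Subtype.ext
    have hx' : E x = 0 := congrArg (Subtype.val) hx
    show E (V.ρ g x) = _
    rw [hequiv, hx', map_zero]; rfl
  · exact LinearMap.isCompl_of_proj fun x => Subtype.ext (by
      show E x = x
      exact hid x x.2)

theorem trace_eq_add (V : FDRep ℂ H) {p q : Submodule ℂ V} (hc : IsCompl p q)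
    (f : V →ₗ[ℂ] V) (hfp : ∀ x ∈ p, f x ∈ p) (hfq : ∀ x ∈ q, f x ∈ q) :
    LinearMap.trace ℂ V f =
      LinearMap.trace ℂ p (f.restrict hfp) + LinearMap.trace ℂ q (f.restrict hfq) := by
  set e := Submodule.prodEquivOfIsCompl p q hc with he
  have key : e.conj ((f.restrict hfp).prodMap (f.restrict hfq)) = f := by
    apply LinearMap.ext
    intro x
    obtain ⟨z, rfl⟩ := e.surjective x
    simp only [LinearEquiv.conj_apply, LinearMap.comp_apply, LinearEquiv.coe_coe,
      LinearEquiv.symm_apply_apply]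
    obtain ⟨a, b⟩ := z
    show e (_, _) = f (e (a, b))
    rw [he, Submodule.coe_prodEquivOfIsCompl', Submodule.coe_prodEquivOfIsCompl']
    simp only [LinearMap.restrict_coe_apply, map_add, LinearMap.comp_apply,
      LinearMap.fst_apply, LinearMap.snd_apply]
  conv_lhs => rw [← key]
  rw [LinearMap.trace_conj', LinearMap.trace_prodMap']

theorem hom_ext {V W : FDRep ℂ H} {f g : V ⟶ W} (h : f.hom = g.hom) : f = g :=
  Action.Hom.ext h

theorem simple_of_no_invariants (V : FDRep ℂ H) (h0 : Module.finrank ℂ V ≠ 0)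
    (htriv : ∀ p : Submodule ℂ V, (∀ g : H, ∀ x ∈ p, V.ρ g x ∈ p) → p = ⊥ ∨ p = ⊤) :
    Simple V := by
  constructor
  intro Y f hmono
  constructor
  · intro hiso hf0
    have hzero : f.hom = (0 : Y.V ⟶ V.V) := by rw [hf0]; simp
    have hall : ∀ x : V, x = 0 := by
      intro x
      have h2 : f.hom ((inv f).hom x) = x :=
        congrArg (fun φ : V ⟶ V => φ.hom x) (IsIso.inv_hom_id f)
      rw [hzero] at h2
      rw [← h2]; rfl
    have : Subsingleton V := ⟨fun a b => by rw [hall a, hall b]⟩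
    exact h0 (Module.finrank_zero_iff.2 this)
  · intro hf0
    have hfhom : (f.hom.hom.hom : Y →ₗ[ℂ] V) ≠ 0 := fun h => hf0 (hom_ext (FGModuleCat.hom_ext (by exact h)))
    have hker : ∀ g : H, ∀ x ∈ LinearMap.ker (f.hom.hom.hom : Y →ₗ[ℂ] V), Y.ρ g x ∈
        LinearMap.ker (f.hom.hom.hom : Y →ₗ[ℂ] V) := by
      intro g x hx
      simp only [LinearMap.mem_ker] at hx ⊢
      have hc : (f.hom.hom.hom : Y →ₗ[ℂ] V) (Y.ρ g x) = V.ρ g ((f.hom.hom.hom : Y →ₗ[ℂ] V) x) :=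
        congrArg (fun φ => φ.hom.hom x) (f.comm g)
      exact hc.trans ((congrArg (V.ρ g) hx).trans (map_zero _))
    have hkerbot : LinearMap.ker (f.hom.hom.hom : Y →ₗ[ℂ] V) = ⊥ := by
      set K := LinearMap.ker (f.hom.hom.hom : Y →ₗ[ℂ] V) with hK
      have hι : inclHom Y K hker ≫ f = (0 : subFDRep Y K hker ⟶ V) := by
        apply hom_ext
        apply FGModuleCat.hom_ext
        apply LinearMap.ext
        intro x
        have hx : (f.hom.hom.hom : Y →ₗ[ℂ] V) x.1 = 0 := x.2
        exact hx
      have hz : inclHom Y K hker = 0 := by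
        apply (cancel_mono f).1
        rw [hι, Limits.zero_comp]
      rw [eq_bot_iff]
      intro x hx
      have := congrArg (fun φ : subFDRep Y K hker ⟶ Y => φ.hom (⟨x, hx⟩ : K)) hz
      exact this
    have hrinv : ∀ g : H, ∀ x ∈ LinearMap.range (f.hom.hom.hom : Y →ₗ[ℂ] V),
        V.ρ g x ∈ LinearMap.range (f.hom.hom.hom : Y →ₗ[ℂ] V) := by
      rintro g x ⟨y, rfl⟩
      have hc : (f.hom.hom.hom : Y →ₗ[ℂ] V) (Y.ρ g y) = V.ρ g ((f.hom.hom.hom : Y →ₗ[ℂ] V) y) :=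
        congrArg (fun φ => φ.hom.hom y) (f.comm g)
      exact ⟨Y.ρ g y, hc⟩
    have hrtop : LinearMap.range (f.hom.hom.hom : Y →ₗ[ℂ] V) = ⊤ := by
      rcases htriv (LinearMap.range (f.hom.hom.hom : Y →ₗ[ℂ] V)) hrinv with h | h
      · exact absurd (LinearMap.range_eq_bot.1 h) hfhom
      · exact h
    set e : Y ≃ₗ[ℂ] V := LinearEquiv.ofBijective (f.hom.hom.hom : Y →ₗ[ℂ] V)
      ⟨LinearMap.ker_eq_bot.1 hkerbot, LinearMap.range_eq_top.1 hrtop⟩ with he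
    have hesymm : ∀ (g : H) (x : V), e.symm (V.ρ g x) = Y.ρ g (e.symm x) := by
      intro g x
      apply e.injective
      rw [e.apply_symm_apply]
      have hc : (f.hom.hom.hom : Y →ₗ[ℂ] V) (Y.ρ g (e.symm x)) = V.ρ g ((f.hom.hom.hom : Y →ₗ[ℂ] V) (e.symm x)) :=
        congrArg (fun φ => φ.hom.hom (e.symm x)) (f.comm g)
      symm
      exact hc.trans (congrArg (V.ρ g) (e.apply_symm_apply x))
    refine ⟨⟨⟨FGModuleCat.ofHom (e.symm.toLinearMap : V →ₗ[ℂ] Y), fun g => ?_⟩, ?_, ?_⟩⟩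
    · apply FGModuleCat.hom_ext
      apply LinearMap.ext
      intro x
      exact hesymm g x
    · apply hom_ext
      apply FGModuleCat.hom_ext
      apply LinearMap.ext
      intro x
      show e.symm (e x) = x
      exact e.symm_apply_apply x
    · apply hom_ext
      apply FGModuleCat.hom_ext
      apply LinearMap.ext
      intro x
      show e (e.symm x) = x
      exact e.apply_symm_apply x

def reg : FDRep ℂ H := FDRep.of (Representation.ofMulAction ℂ H H)

open scoped Classical in
theorem char_reg (h : H) :
    (reg : FDRep ℂ H).character h = if h = 1 then (Fintype.card H : ℂ) else 0 := by
  have h1 : (reg : FDRep ℂ H).character h =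
      LinearMap.trace ℂ (H →₀ ℂ) (Finsupp.lmapDomain ℂ ℂ (h • ·)) := by
    show LinearMap.trace ℂ _ ((MonoidAlgebra.coeffLinearEquiv ℂ).symm.toLinearMap ∘ₗ
      Finsupp.lmapDomain ℂ ℂ (h • ·) ∘ₗ (MonoidAlgebra.coeffLinearEquiv ℂ).toLinearMap) = _
    exact LinearMap.trace_conj' (Finsupp.lmapDomain ℂ ℂ (h • ·)) (MonoidAlgebra.coeffLinearEquiv ℂ).symm
  rw [h1]
  rw [LinearMap.trace_eq_matrix_trace ℂ (Finsupp.basisSingleOne (R := ℂ) (ι := H))]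
  rw [Matrix.trace]
  have hdiag : ∀ x : H, Matrix.diag (LinearMap.toMatrix Finsupp.basisSingleOne
      Finsupp.basisSingleOne (Finsupp.lmapDomain ℂ ℂ (h • ·))) x
      = if h = 1 then 1 else 0 := by
    intro x
    rw [Matrix.diag_apply, LinearMap.toMatrix_apply]
    simp only [Finsupp.basisSingleOne_repr, Finsupp.coe_basisSingleOne, LinearEquiv.refl_apply]
    rw [Finsupp.lmapDomain_apply, Finsupp.mapDomain_single, Finsupp.single_apply]
    simp [smul_eq_mul, mul_eq_right]
  simp only [hdiag]
  rw [Finset.sum_const, Finset.card_univ]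
  split <;> simp

open scoped Classical in
theorem char_decomp {κι : Type} [Fintype κι] (σ : κι → FDRep ℂ H)
    (hsimple' : ∀ i, Simple (σ i))
    (hdistinct' : ∀ i j, i ≠ j → ¬ Nonempty (σ i ≅ σ j))
    (hcomplete' : ∀ V : FDRep ℂ H, Simple V → ∃ i, Nonempty (σ i ≅ V)) :
    ∀ (W : FDRep ℂ H) (h : H), W.character h =
      ∑ i, ((Fintype.card H : ℂ)⁻¹ * ∑ g : H, W.character g * (σ i).character g⁻¹) *
        (σ i).character h := by
  suffices key : ∀ (n : ℕ) (W : FDRep ℂ H), Module.finrank ℂ W = n → ∀ h : H, W.character h =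
      ∑ i, ((Fintype.card H : ℂ)⁻¹ * ∑ g : H, W.character g * (σ i).character g⁻¹) *
        (σ i).character h by
    exact fun W => key _ W rfl
  intro n
  induction n using Nat.strong_induction_on with
  | _ n IH =>
  intro W hW h
  rcases Nat.eq_zero_or_pos n with hn0 | hnpos
  · subst hn0
    have hsub : Subsingleton W := Module.finrank_zero_iff.1 hW
    have hchar0 : ∀ g : H, W.character g = 0 := by
      intro g
      have hz : W.ρ g = 0 := Subsingleton.elim _ _
      show LinearMap.trace ℂ W (W.ρ g) = 0
      rw [hz, map_zero]
    simp [hchar0]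
  by_cases hex : ∃ p : Submodule ℂ W, (∀ g : H, ∀ x ∈ p, W.ρ g x ∈ p) ∧ p ≠ ⊥ ∧ p ≠ ⊤
  · obtain ⟨p, hp, hpbot, hptop⟩ := hex
    obtain ⟨q, hq, hcompl⟩ := exists_invariant_compl W p hp
    have hqtop : q ≠ ⊤ := by
      intro hq'
      exact hpbot (disjoint_top.1 (hq' ▸ hcompl.disjoint))
    set S := subFDRep W p hp with hS
    set T := subFDRep W q hq with hT
    have hchar : ∀ g : H, W.character g = S.character g + T.character g := fun g =>
      trace_eq_add W hcompl (W.ρ g) (hp g) (hq g)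
    have hSlt : Module.finrank ℂ S < n := by
      have : Module.finrank ℂ S = Module.finrank ℂ p := rfl
      rw [this, ← hW]
      exact Submodule.finrank_lt hptop
    have hTlt : Module.finrank ℂ T < n := by
      have : Module.finrank ℂ T = Module.finrank ℂ q := rfl
      rw [this, ← hW]
      exact Submodule.finrank_lt hqtop
    have hcS := IH _ hSlt S rfl
    have hcT := IH _ hTlt T rfl
    have hco : ∀ i, ((Fintype.card H : ℂ)⁻¹ * ∑ g : H, W.character g * (σ i).character g⁻¹)
        = ((Fintype.card H : ℂ)⁻¹ * ∑ g : H, S.character g * (σ i).character g⁻¹)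
          + ((Fintype.card H : ℂ)⁻¹ * ∑ g : H, T.character g * (σ i).character g⁻¹) := by
      intro i
      simp only [hchar, add_mul, Finset.sum_add_distrib, mul_add]
    calc W.character h = S.character h + T.character h := hchar h
      _ = (∑ i, ((Fintype.card H : ℂ)⁻¹ * ∑ g : H, S.character g * (σ i).character g⁻¹) *
            (σ i).character h)
          + ∑ i, ((Fintype.card H : ℂ)⁻¹ * ∑ g : H, T.character g * (σ i).character g⁻¹) *
            (σ i).character h := by rw [hcS h, hcT h]
      _ = ∑ i, ((Fintype.card H : ℂ)⁻¹ * ∑ g : H, W.character g * (σ i).character g⁻¹) *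
            (σ i).character h := by
          rw [← Finset.sum_add_distrib]
          exact Finset.sum_congr rfl fun i _ => by rw [hco i, add_mul]
  · push_neg at hex
    have htriv : ∀ p : Submodule ℂ W, (∀ g : H, ∀ x ∈ p, W.ρ g x ∈ p) → p = ⊥ ∨ p = ⊤ := by
      intro p hp
      by_cases hb : p = ⊥
      · exact Or.inl hb
      · exact Or.inr (hex p hp hb)
    haveI hWsimple : Simple W := simple_of_no_invariants W (by rw [hW]; omega) htriv
    obtain ⟨i₀, ⟨e⟩⟩ := hcomplete' W hWsimple
    have horth : ∀ i, ((Fintype.card H : ℂ)⁻¹ * ∑ g : H, W.character g * (σ i).character g⁻¹)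
        = if i = i₀ then 1 else 0 := by
      intro i
      haveI := hsimple' i
      have h1 := FDRep.char_orthonormal W (σ i)
      rw [Nat.card_eq_fintype_card] at h1
      have h2 : ((Fintype.card H : ℂ)⁻¹ * ∑ g : H, W.character g * (σ i).character g⁻¹)
          = if Nonempty (W ≅ σ i) then (1 : ℂ) else 0 := h1
      rw [h2]
      by_cases hi : i = i₀
      · subst hi
        rw [if_pos ⟨e.symm⟩, if_pos rfl]
      · rw [if_neg, if_neg hi]
        rintro ⟨u⟩
        exact hdistinct' i₀ i (fun hh => hi hh.symm) ⟨e.trans u⟩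
    have hWchar : ∀ g : H, W.character g = (σ i₀).character g := fun g =>
      (congrFun (char_iso e) g).symm
    calc W.character h = (σ i₀).character h := hWchar h
      _ = ∑ i, (if i = i₀ then (1:ℂ) else 0) * (σ i).character h := by
          symm
          simp [ite_mul]
      _ = ∑ i, ((Fintype.card H : ℂ)⁻¹ * ∑ g : H, W.character g * (σ i).character g⁻¹) *
            (σ i).character h :=
          Finset.sum_congr rfl fun i _ => by rw [horth i]

theorem finrank_ne_zero' (V : FDRep ℂ H) (hs : Simple V) : Module.finrank ℂ V ≠ 0 := by
  intro h0
  haveI := hs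
  have hsub : Subsingleton V := Module.finrank_zero_iff.1 h0
  have hid : (𝟙 V : V ⟶ V) = 0 := hom_ext (by
    apply FGModuleCat.hom_ext
    apply LinearMap.ext
    intro x
    exact @Subsingleton.elim _ hsub _ _)
  exact (CategoryTheory.id_nonzero V) hid

open scoped Classical in
theorem delta {κι : Type} [Fintype κι] (σ : κι → FDRep ℂ H)
    (hsimple' : ∀ i, Simple (σ i))
    (hdistinct' : ∀ i j, i ≠ j → ¬ Nonempty (σ i ≅ σ j))
    (hcomplete' : ∀ V : FDRep ℂ H, Simple V → ∃ i, Nonempty (σ i ≅ V)) (h : H) :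
    ∑ i, (Module.finrank ℂ (σ i) : ℂ) * (σ i).character h
      = if h = 1 then (Fintype.card H : ℂ) else 0 := by
  have hd := char_decomp σ hsimple' hdistinct' hcomplete' reg h
  rw [char_reg] at hd
  have hc : ∀ i, ((Fintype.card H : ℂ)⁻¹ *
      ∑ g : H, (reg (H := H)).character g * (σ i).character g⁻¹)
      = (Module.finrank ℂ (σ i) : ℂ) := by
    intro i
    have h2 : ∀ g : H, (reg (H := H)).character g * (σ i).character g⁻¹
        = if g = 1 then (Fintype.card H : ℂ) * (σ i).character g⁻¹ else 0 := by
      intro g; rw [char_reg]; split <;> simp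
    rw [Finset.sum_congr rfl fun g _ => h2 g]
    rw [Finset.sum_ite_eq' Finset.univ (1 : H)
      (fun g => (Fintype.card H : ℂ) * (σ i).character g⁻¹)]
    simp only [Finset.mem_univ, if_true, inv_one, FDRep.char_one]
    have hNne : (Fintype.card H : ℂ) ≠ 0 := Nat.cast_ne_zero.2 Fintype.card_ne_zero
    field_simp
  rw [hd]
  exact Finset.sum_congr rfl fun i _ => by rw [hc i]

end PlancherelAux

end

/-- Let `H ⊆ G` be finite groups.  If `σ` is Plancherel distributed on the irreducible
representations of `H`, and given `σ` one chooses an irreducible representation `τ` of `G`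
with probability `|H| · dim(τ) · κ(σ,τ)/(|G| · dim(σ))`, where `κ(σ,τ) = ⟨χ^τ|_H, χ^σ⟩_H`
is the multiplicity of `τ` in `Ind_H^G σ`, then `τ` is Plancherel distributed on the
irreducible representations of `G`. -/
theorem induction_transition_preserves_plancherel
    {G : Type} [Group G] [Fintype G] (H : Subgroup G) [Fintype H]
    {ι : Type} [Fintype ι] (ρ : ι → FDRep ℂ G)
    (hsimple : ∀ i, Simple (ρ i))
    (hdistinct : ∀ i j, i ≠ j → ¬ Nonempty (ρ i ≅ ρ j))
    (hcomplete : ∀ V : FDRep ℂ G, Simple V → ∃ i, Nonempty (ρ i ≅ V))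
    {κι : Type} [Fintype κι] (σ : κι → FDRep ℂ H)
    (hsimple' : ∀ i, Simple (σ i))
    (hdistinct' : ∀ i j, i ≠ j → ¬ Nonempty (σ i ≅ σ j))
    (hcomplete' : ∀ V : FDRep ℂ H, Simple V → ∃ i, Nonempty (σ i ≅ V)) :
    ∀ j, ∑ i, ((Module.finrank ℂ (σ i) : ℂ) ^ 2 / (Fintype.card H : ℂ)) *
        ((Fintype.card H : ℂ) * (Module.finrank ℂ (ρ j) : ℂ) *
          ((∑ h : H, (ρ j).character (↑h) * (starRingEnd ℂ) ((σ i).character h)) /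
            (Fintype.card H : ℂ)) /
          ((Fintype.card G : ℂ) * (Module.finrank ℂ (σ i) : ℂ))) =
      (Module.finrank ℂ (ρ j) : ℂ) ^ 2 / (Fintype.card G : ℂ) := by
  classical
  intro j
  have hNne : ((Fintype.card H : ℂ)) ≠ 0 := Nat.cast_ne_zero.2 Fintype.card_ne_zero
  have hMne : ((Fintype.card G : ℂ)) ≠ 0 := Nat.cast_ne_zero.2 Fintype.card_ne_zero
  have hdelta := PlancherelAux.delta σ hsimple' hdistinct' hcomplete'
  have hconj : ∀ h : H, ∑ i, (Module.finrank ℂ (σ i) : ℂ) *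
      (starRingEnd ℂ) ((σ i).character h) = if h = 1 then (Fintype.card H : ℂ) else 0 := by
    intro h
    have hcc := congrArg (starRingEnd ℂ) (hdelta h)
    rw [map_sum] at hcc
    simp only [map_mul, Complex.conj_natCast, apply_ite, map_natCast, map_zero] at hcc
    split_ifs with hh <;> simpa [hh] using hcc
  have hd0 : ∀ i, (Module.finrank ℂ (σ i) : ℂ) ≠ 0 := fun i =>
    Nat.cast_ne_zero.2 (PlancherelAux.finrank_ne_zero' (σ i) (hsimple' i))
  set D : ℂ := (Module.finrank ℂ (ρ j) : ℂ) with hD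
  have hswap : ∑ i, (Module.finrank ℂ (σ i) : ℂ) *
      (∑ h : H, (ρ j).character (↑h) * (starRingEnd ℂ) ((σ i).character h))
      = (Fintype.card H : ℂ) * D := by
    calc ∑ i, (Module.finrank ℂ (σ i) : ℂ) *
          (∑ h : H, (ρ j).character (↑h) * (starRingEnd ℂ) ((σ i).character h))
        = ∑ i, ∑ h : H, (ρ j).character (↑h) *
            ((Module.finrank ℂ (σ i) : ℂ) * (starRingEnd ℂ) ((σ i).character h)) := by
          refine Finset.sum_congr rfl fun i _ => ?_
          rw [Finset.mul_sum]
          exact Finset.sum_congr rfl fun h _ => by ring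
      _ = ∑ h : H, ∑ i, (ρ j).character (↑h) *
            ((Module.finrank ℂ (σ i) : ℂ) * (starRingEnd ℂ) ((σ i).character h)) :=
          Finset.sum_comm
      _ = ∑ h : H, (ρ j).character (↑h) *
            (∑ i, (Module.finrank ℂ (σ i) : ℂ) * (starRingEnd ℂ) ((σ i).character h)) := by
          exact Finset.sum_congr rfl fun h _ => by rw [Finset.mul_sum]
      _ = ∑ h : H, (ρ j).character (↑h) * (if h = 1 then (Fintype.card H : ℂ) else 0) := by
          exact Finset.sum_congr rfl fun h _ => by rw [hconj h]
      _ = (ρ j).character ((1 : H) : G) * (Fintype.card H : ℂ) := by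
          simp [mul_ite, Finset.sum_ite_eq']
      _ = (Fintype.card H : ℂ) * D := by
          rw [OneMemClass.coe_one, FDRep.char_one, hD]; ring
  calc ∑ i, ((Module.finrank ℂ (σ i) : ℂ) ^ 2 / (Fintype.card H : ℂ)) *
        ((Fintype.card H : ℂ) * D *
          ((∑ h : H, (ρ j).character (↑h) * (starRingEnd ℂ) ((σ i).character h)) /
            (Fintype.card H : ℂ)) /
          ((Fintype.card G : ℂ) * (Module.finrank ℂ (σ i) : ℂ)))
      = ∑ i, D * ((Module.finrank ℂ (σ i) : ℂ) *
          (∑ h : H, (ρ j).character (↑h) * (starRingEnd ℂ) ((σ i).character h)))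
          * ((Fintype.card H : ℂ)⁻¹ * (Fintype.card G : ℂ)⁻¹) := by
        refine Finset.sum_congr rfl fun i _ => ?_
        field_simp [hd0 i, hNne, hMne]
    _ = D * ((Fintype.card H : ℂ) * D) * ((Fintype.card H : ℂ)⁻¹ * (Fintype.card G : ℂ)⁻¹) := by
        rw [← Finset.sum_mul, ← Finset.mul_sum, hswap]
    _ = D ^ 2 / (Fintype.card G : ℂ) := by
        field_simp [hNne, hMne]
end

section
/- Let H ⊆ G be finite groups, C a conjugacy class of G such that C ∩ H is either empty or a single conjugacy class of H, and let σ be an irreducible representation of H. Then the expected value, under the transition probability P(τ) = |H| dim(τ) κ(σ,τ)/(|G| dim(σ)) on irreducible representations τ of G, of |C| χ^τ(C)/dim(τ) equals |C ∩ H| χ^σ(C ∩ H)/dim(σ) (interpreted as 0 when C ∩ H is empty). -/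
open FDRep CategoryTheory Module Polynomial

noncomputable section
lemma aux_char_inv {Γ : Type} [Group Γ] [Fintype Γ] (W : FDRep ℂ Γ) (g : Γ) :
    W.character g⁻¹ = (starRingEnd ℂ) (W.character g) := by
  classical
  set n := Fintype.card Γ with hn_def
  have hn : n ≠ 0 := Fintype.card_ne_zero
  set φ : Module.End ℂ W := W.ρ g with hφ_def
  set ψ : Module.End ℂ W := W.ρ g⁻¹ with hψ_def
  have hφψ : φ * ψ = 1 := by rw [hφ_def, hψ_def, ← map_mul, mul_inv_cancel, map_one]
  have hψφ : ψ * φ = 1 := by rw [hφ_def, hψ_def, ← map_mul, inv_mul_cancel, map_one]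
  have hcomm : Commute φ ψ := by unfold Commute SemiconjBy; rw [hφψ, hψφ]
  have hpow : φ ^ n = 1 := by rw [hφ_def, ← map_pow, pow_card_eq_one, map_one]
  have hss : φ.IsFinitelySemisimple := by
    have h1 : Squarefree ((X : ℂ[X]) ^ n - C 1) :=
      (Polynomial.separable_X_pow_sub_C (1 : ℂ)
        (by exact_mod_cast hn) one_ne_zero).squarefree
    have h2 : Polynomial.aeval φ ((X : ℂ[X]) ^ n - C 1) = 0 := by
      simp [hpow]
    exact (Module.End.isSemisimple_of_squarefree_aeval_eq_zero h1 h2).isFinitelySemisimple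
  set N : ℂ → Submodule ℂ W := fun μ => φ.eigenspace μ with hN_def
  have hind : iSupIndep N := φ.eigenspaces_iSupIndep
  have htop : iSup N = ⊤ := by
    have h := Module.End.iSup_maxGenEigenspace_eq_top φ
    have : ∀ μ, φ.maxGenEigenspace μ = N μ := fun μ =>
      hss.maxGenEigenspace_eq_eigenspace μ
    rw [← h]; exact congrArg iSup (funext fun μ => (this μ).symm)
  have hint : DirectSum.IsInternal N :=
    DirectSum.isInternal_submodule_of_iSupIndep_of_iSup_eq_top hind htop
  have hfin : {μ | N μ ≠ ⊥}.Finite := WellFoundedGT.finite_ne_bot_of_iSupIndep hind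
  have hmapφ : ∀ μ, Set.MapsTo φ (N μ) (N μ) := fun μ =>
    Module.End.mapsTo_genEigenspace_of_comm (Commute.refl φ) μ 1
  have hmapψ : ∀ μ, Set.MapsTo ψ (N μ) (N μ) := fun μ =>
    Module.End.mapsTo_genEigenspace_of_comm hcomm μ 1
  have hμprop : ∀ μ ∈ hfin.toFinset, μ * (starRingEnd ℂ) μ = 1 ∧ μ ≠ 0 := by
    intro μ hμ
    rw [Set.Finite.mem_toFinset] at hμ
    obtain ⟨x, hx, hx0⟩ := Submodule.exists_mem_ne_zero_of_ne_bot hμ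
    have hxe : φ x = μ • x := by
      rw [Module.End.mem_eigenspace_iff] at hx; exact hx
    have hμ0 : μ ≠ 0 := by
      rintro rfl
      apply hx0
      have : ψ (φ x) = x := by
        rw [← Module.End.mul_apply, hψφ]; rfl
      rw [hxe, zero_smul, map_zero] at this; exact this.symm
    have hpowx : φ ^ n = 1 := hpow
    have hiter : ∀ m : ℕ, (φ ^ m) x = μ ^ m • x := by
      intro m
      induction m with
      | zero => simp
      | succ k ih =>
        rw [pow_succ, Module.End.mul_apply, hxe, map_smul, ih, smul_smul, pow_succ]
        ring_nf
    have hμn : μ ^ n = 1 := by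
      have h1 : (φ ^ n) x = x := by rw [hpowx]; rfl
      rw [hiter n] at h1
      have := sub_eq_zero.mpr h1
      rw [show μ ^ n • x - x = (μ ^ n - 1) • x by rw [sub_smul, one_smul]] at this
      rcases smul_eq_zero.mp this with h | h
      · exact sub_eq_zero.mp h
      · exact absurd h hx0
    have habs : ‖μ‖ = 1 := by
      have : (‖μ‖) ^ n = 1 := by
        rw [← norm_pow, hμn, norm_one]
      rcases (pow_eq_one_iff_cases.mp this) with h | h | h
      · exact absurd h hn
      · exact h
      · exfalso; nlinarith [norm_nonneg μ, h.1]
    refine ⟨?_, hμ0⟩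
    rw [Complex.mul_conj]
    have : Complex.normSq μ = (‖μ‖) ^ 2 := (Complex.sq_norm μ).symm
    rw [this, habs]; norm_num
  have htrφ := LinearMap.trace_eq_sum_trace_restrict' hint hfin hmapφ
  have htrψ := LinearMap.trace_eq_sum_trace_restrict' hint hfin hmapψ
  have hres : ∀ μ ∈ hfin.toFinset,
      (LinearMap.trace ℂ (N μ)) (φ.restrict (hmapφ μ)) = μ * (finrank ℂ (N μ) : ℂ) ∧
      (LinearMap.trace ℂ (N μ)) (ψ.restrict (hmapψ μ)) =
        (starRingEnd ℂ) μ * (finrank ℂ (N μ) : ℂ) := by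
    intro μ hμ
    obtain ⟨hμc, hμ0⟩ := hμprop μ hμ
    have hconj_inv : (starRingEnd ℂ) μ = μ⁻¹ := by
      field_simp
      linear_combination hμc
    have hφr : φ.restrict (hmapφ μ) = μ • LinearMap.id := by
      ext x
      have hx := x.2
      rw [Module.End.mem_eigenspace_iff] at hx
      exact hx
    have hψr : ψ.restrict (hmapψ μ) = (starRingEnd ℂ) μ • LinearMap.id := by
      ext x
      have hx := x.2
      rw [Module.End.mem_eigenspace_iff] at hx
      have h1 : ψ (φ (x : W)) = (x : W) := by
        rw [← Module.End.mul_apply, hψφ]; rfl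
      rw [hx, map_smul] at h1
      have h2 : ψ (x : W) = μ⁻¹ • (x : W) := by
        have h3 := congrArg (fun y => μ⁻¹ • y) h1
        simpa [smul_smul, inv_mul_cancel₀ hμ0] using h3
      rw [hconj_inv]; exact h2
    constructor
    · rw [hφr, map_smul, LinearMap.trace_id, smul_eq_mul]
    · rw [hψr, map_smul, LinearMap.trace_id, smul_eq_mul]
  have hchar_g : W.character g = ∑ μ ∈ hfin.toFinset, μ * (finrank ℂ (N μ) : ℂ) := by
    rw [show W.character g = LinearMap.trace ℂ W φ from rfl, htrφ]
    exact Finset.sum_congr rfl fun μ hμ => (hres μ hμ).1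
  have hchar_ginv : W.character g⁻¹ =
      ∑ μ ∈ hfin.toFinset, (starRingEnd ℂ) μ * (finrank ℂ (N μ) : ℂ) := by
    rw [show W.character g⁻¹ = LinearMap.trace ℂ W ψ from rfl, htrψ]
    exact Finset.sum_congr rfl fun μ hμ => (hres μ hμ).2
  rw [hchar_g, hchar_ginv, map_sum]
  exact Finset.sum_congr rfl fun μ _ => by
    rw [map_mul]
    norm_num

/-- The subrepresentation on an invariant subspace. -/
def subRep {Γ : Type} [Group Γ] (W : FDRep ℂ Γ) (p : Submodule ℂ W)
    (hp : ∀ (γ : Γ), ∀ x, x ∈ p → W.ρ γ x ∈ p) : FDRep ℂ Γ :=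
  FDRep.of (V := ↥p)
    { toFun := fun γ => (W.ρ γ).restrict (fun x hx => hp γ x hx)
      map_one' := by ext x; simp [LinearMap.restrict_apply]
      map_mul' := fun γ₁ γ₂ => by ext x; simp [LinearMap.restrict_apply] }

/-- The inclusion morphism of a subrepresentation. -/
def subRepIncl {Γ : Type} [Group Γ] (W : FDRep ℂ Γ) (p : Submodule ℂ W)
    (hp : ∀ (γ : Γ), ∀ x, x ∈ p → W.ρ γ x ∈ p) : subRep W p hp ⟶ W where
  hom := ObjectProperty.homMk (ModuleCat.ofHom p.subtype)
  comm := fun γ => by ext x; rfl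

lemma aux_comm {Γ : Type} [Group Γ] {Y W : FDRep ℂ Γ} (f : Y ⟶ W) (γ : Γ) (x : Y) :
    f.hom.hom.hom (Y.ρ γ x) = W.ρ γ (f.hom.hom.hom x) := by
  have := congrArg (fun ψ => ψ.hom.hom x) (f.comm γ)
  simpa using this

lemma aux_simple_of {Γ : Type} [Group Γ] (W : FDRep ℂ Γ) (hnt : ∃ x : W, x ≠ 0)
    (hdich : ∀ p : Submodule ℂ W, (∀ (γ : Γ), ∀ x, x ∈ p → W.ρ γ x ∈ p) → p = ⊥ ∨ p = ⊤) :
    Simple W := by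
  constructor
  intro Y f hm
  constructor
  · intro hiso h0
    obtain ⟨x, hx⟩ := hnt
    subst h0
    have h1 : inv (0 : Y ⟶ W) ≫ (0 : Y ⟶ W) = 𝟙 W := IsIso.inv_hom_id _
    rw [Limits.comp_zero] at h1
    apply hx
    have h2 := congrArg (fun (φ : W ⟶ W) => φ.hom.hom.hom x) h1
    have h3 : (0 : W ⟶ W).hom.hom.hom x = (𝟙 W : W ⟶ W).hom.hom.hom x := h2
    simpa using h3.symm
  · intro hne
    have hker : LinearMap.ker f.hom.hom.hom = ⊥ := by
      set p := LinearMap.ker f.hom.hom.hom with hp_def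
      have hp : ∀ (γ : Γ), ∀ x, x ∈ p → Y.ρ γ x ∈ p := by
        intro γ x hx
        rw [hp_def, LinearMap.mem_ker] at hx ⊢
        have hc := aux_comm f γ x
        change f.hom.hom.hom (Y.ρ γ x) = 0
        rw [show f.hom.hom.hom ((Y.ρ γ) x) = W.ρ γ (f.hom.hom.hom x) from hc]
        rw [hx, map_zero]
      let ι : subRep Y p hp ⟶ Y := subRepIncl Y p hp
      have hcomp : ι ≫ f = 0 := by
        ext x
        exact x.2
      have hι : ι = 0 := Mono.right_cancellation (f := f) ι 0
        (by rw [hcomp, Limits.zero_comp])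
      rw [Submodule.eq_bot_iff]
      intro x hx
      have h3 := congrArg (fun (ψ : subRep Y p hp ⟶ Y) => ψ.hom.hom.hom ⟨x, hx⟩) hι
      exact h3
    have hinj : Function.Injective f.hom.hom.hom := LinearMap.ker_eq_bot.mp hker
    have hrangeinv : ∀ (γ : Γ), ∀ x, x ∈ LinearMap.range f.hom.hom.hom →
        W.ρ γ x ∈ LinearMap.range f.hom.hom.hom := by
      rintro γ x ⟨y, rfl⟩
      refine ⟨Y.ρ γ y, ?_⟩
      have hc := aux_comm f γ y
      simpa using hc
    rcases hdich (LinearMap.range f.hom.hom.hom) hrangeinv with hb | ht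
    · exfalso
      apply hne
      ext y
      have : f.hom.hom.hom y ∈ LinearMap.range f.hom.hom.hom := ⟨y, rfl⟩
      rw [hb] at this
      simpa using this
    · have hsurj : Function.Surjective f.hom.hom.hom := LinearMap.range_eq_top.mp ht
      let e : Y.V ≃ₗ[ℂ] W.V := LinearEquiv.ofBijective f.hom.hom.hom ⟨hinj, hsurj⟩
      let g : W ⟶ Y :=
        ⟨ObjectProperty.homMk (ModuleCat.ofHom (e.symm.toLinearMap : W →ₗ[ℂ] Y)), by
          intro γ
          ext x
          show e.symm (W.ρ γ x) = Y.ρ γ (e.symm x)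
          apply hinj
          have h4 : f.hom.hom.hom (e.symm x) = x := e.apply_symm_apply x
          have hc := aux_comm f γ (e.symm x)
          change f.hom.hom.hom (e.symm ((W.ρ γ) x)) = f.hom.hom.hom ((Y.ρ γ) (e.symm x))
          rw [show f.hom.hom.hom ((Y.ρ γ) (e.symm x)) = W.ρ γ (f.hom.hom.hom (e.symm x)) from hc]
          rw [h4]
          exact (e.apply_symm_apply _)⟩
      refine ⟨⟨g, ?_, ?_⟩⟩
      · ext y
        show e.symm (f.hom.hom.hom y) = y
        exact e.symm_apply_apply y
      · ext x
        show f.hom.hom.hom (e.symm x) = x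
        exact e.apply_symm_apply x

lemma aux_complete {G : Type} [Group G] [Fintype G]
    {ι : Type} [Fintype ι] (ρ : ι → FDRep ℂ G)
    (hcomplete : ∀ V : FDRep ℂ G, Simple V → ∃ i, Nonempty (ρ i ≅ V))
    (f : G → ℂ) (hf : ∀ s t : G, f (s * t * s⁻¹) = f t)
    (h0 : ∀ i, ∑ g : G, f g * (ρ i).character g = 0) (g₀ : G) :
    f g₀ = 0 := by
  classical
  haveI : NeZero ((Fintype.card G : ℂ)) := ⟨Nat.cast_ne_zero.mpr Fintype.card_ne_zero⟩
  set A := MonoidAlgebra ℂ G with hA_def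
  haveI : Module.Finite ℂ A :=
    Module.Finite.equiv (MonoidAlgebra.coeffLinearEquiv ℂ).symm
  set a : A := ∑ g : G, MonoidAlgebra.single g (f g) with ha_def
  have hcen : ∀ b : A, a * b = b * a := by
    intro b
    induction b using MonoidAlgebra.induction_on with
    | of t =>
      have h1 : a * MonoidAlgebra.of ℂ G t = ∑ g : G, MonoidAlgebra.single (g * t) (f g) := by
        rw [ha_def, Finset.sum_mul]
        exact Finset.sum_congr rfl fun g _ => by
          rw [MonoidAlgebra.of_apply, MonoidAlgebra.single_mul_single, mul_one]
      have h2 : MonoidAlgebra.of ℂ G t * a = ∑ g : G, MonoidAlgebra.single (t * g) (f g) := by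
        rw [ha_def, Finset.mul_sum]
        exact Finset.sum_congr rfl fun g _ => by
          rw [MonoidAlgebra.of_apply, MonoidAlgebra.single_mul_single, one_mul]
      rw [h1, h2]
      refine Fintype.sum_equiv ((Equiv.mulLeft t⁻¹).trans (Equiv.mulRight t)) _ _ fun x => ?_
      simp only [Equiv.trans_apply, Equiv.coe_mulLeft, Equiv.coe_mulRight]
      have hfx : f (t⁻¹ * x * t) = f x := by
        have h6 := hf t⁻¹ x
        rwa [inv_inv] at h6
      rw [hfx]
      congr 1
      group
    | add b c hb hc => rw [mul_add, add_mul, hb, hc]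
    | smul c b hb => rw [mul_smul_comm, hb, smul_mul_assoc]
  -- Step: a annihilates every simple submodule of A
  have hsimple_zero : ∀ S : Submodule A A, IsSimpleModule A ↥S → ∀ x ∈ S, a * x = 0 := by
    intro S hSsimple x hxS
    haveI := hSsimple
    have hatom : IsAtom S := isSimpleModule_iff_isAtom.mp hSsimple
    set V : Submodule ℂ A := Submodule.restrictScalars ℂ S with hV_def
    have hmemV : ∀ y : A, y ∈ V ↔ y ∈ S := fun y => Iff.rfl
    have hmaps : ∀ g : G, Set.MapsTo (LinearMap.mulLeft ℂ (MonoidAlgebra.single g (1:ℂ)))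
        V V := by
      intro g y hy
      have : MonoidAlgebra.single g (1:ℂ) * y ∈ S := S.smul_mem _ ((hmemV y).mp hy)
      exact (hmemV _).mpr this
    have hmapa : Set.MapsTo (LinearMap.mulLeft ℂ a) V V := by
      intro y hy
      have : a * y ∈ S := S.smul_mem a ((hmemV y).mp hy)
      exact (hmemV _).mpr this
    set T : ↥V →ₗ[ℂ] ↥V := (LinearMap.mulLeft ℂ a).restrict hmapa with hT_def
    obtain ⟨x₁, hx₁S, hx₁0⟩ := Submodule.exists_mem_ne_zero_of_ne_bot hatom.1
    haveI : Nontrivial ↥V := ⟨⟨⟨x₁, (hmemV x₁).mpr hx₁S⟩, 0, by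
      simp only [ne_eq, Submodule.mk_eq_zero]
      exact hx₁0⟩⟩
    obtain ⟨μ, hμ⟩ := Module.End.exists_eigenvalue T
    obtain ⟨v, hv⟩ := hμ.exists_hasEigenvector
    have hveq : a * (v : A) = μ • (v : A) := by
      have h1 : T v = μ • v := hv.apply_eq_smul
      have h2 := congrArg (Subtype.val) h1
      exact h2
    -- the eigenspace inside S is an A-submodule
    set K : Submodule A A :=
      { carrier := {y | y ∈ S ∧ a * y = μ • y}
        add_mem' := by
          rintro y z ⟨hyS, hy⟩ ⟨hzS, hz⟩
          exact ⟨S.add_mem hyS hzS, by rw [mul_add, hy, hz, smul_add]⟩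
        zero_mem' := ⟨S.zero_mem, by simp⟩
        smul_mem' := by
          rintro b y ⟨hyS, hy⟩
          refine ⟨S.smul_mem b hyS, ?_⟩
          show a * (b * y) = μ • (b * y)
          rw [← mul_assoc, hcen b, mul_assoc, hy, mul_smul_comm] } with hK_def
    have hKS : K ≤ S := fun y hy => hy.1
    have hKne : K ≠ ⊥ := by
      rw [Submodule.ne_bot_iff]
      refine ⟨(v : A), ⟨(hmemV _).mp v.2, hveq⟩, ?_⟩
      intro h
      exact hv.2 (Subtype.ext h)
    have hKeq : K = S := by
      rcases lt_or_eq_of_le hKS with hlt | heq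
      · exact absurd (hatom.2 K hlt) hKne
      · exact heq
    have hact : ∀ y ∈ S, a * y = μ • y := by
      intro y hy
      rw [← hKeq] at hy
      exact hy.2
    -- the representation of G on V
    set r : Representation ℂ G ↥V :=
      { toFun := fun g => (LinearMap.mulLeft ℂ (MonoidAlgebra.single g (1:ℂ))).restrict (hmaps g)
        map_one' := by
          refine LinearMap.ext fun y => Subtype.ext ?_
          show MonoidAlgebra.single (1:G) (1:ℂ) * (y : A) = (y : A)
          rw [← MonoidAlgebra.one_def, one_mul]
        map_mul' := fun g g' => by
          refine LinearMap.ext fun y => Subtype.ext ?_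
          show MonoidAlgebra.single (g * g') (1:ℂ) * (y : A)
            = MonoidAlgebra.single g (1:ℂ) * (MonoidAlgebra.single g' (1:ℂ) * (y : A))
          rw [← mul_assoc, MonoidAlgebra.single_mul_single, one_mul] } with hr_def
    set VS : FDRep ℂ G := FDRep.of r with hVS_def
    have hVSsimple : Simple VS := by
      apply aux_simple_of
      · exact ⟨v, hv.2⟩
      · intro p hp
        set P₀ : Submodule ℂ A := p.map V.subtype with hP₀_def
        have hmulP₀ : ∀ b : A, ∀ y ∈ P₀, b * y ∈ P₀ := by
          intro b
          induction b using MonoidAlgebra.induction_on with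
          | of t =>
            rintro y ⟨z, hz, rfl⟩
            exact ⟨r t z, hp t z hz, rfl⟩
          | add b c hb hc =>
            intro y hy
            rw [add_mul]
            exact P₀.add_mem (hb y hy) (hc y hy)
          | smul c b hb =>
            intro y hy
            rw [smul_mul_assoc]
            exact P₀.smul_mem c (hb y hy)
        set Q : Submodule A A :=
          { carrier := ↑P₀
            add_mem' := fun hy hz => P₀.add_mem hy hz
            zero_mem' := P₀.zero_mem
            smul_mem' := fun b y hy => hmulP₀ b y hy } with hQ_def
        have hQS : Q ≤ S := by
          rintro y ⟨z, hz, rfl⟩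
          exact (hmemV _).mp z.2
        rcases lt_or_eq_of_le hQS with hlt | heq
        · left
          have hQbot : Q = ⊥ := hatom.2 Q hlt
          have hball : ∀ z : ↥V, z ∈ p → z = 0 := by
            intro z hz
            have h5 : (z : A) ∈ P₀ := ⟨z, hz, rfl⟩
            have hz0 : (z : A) = 0 := by
              have h6 : (z : A) ∈ Q := h5
              rw [hQbot] at h6
              simpa using h6
            exact Subtype.ext hz0
          rw [Submodule.eq_bot_iff]
          exact fun z hz => hball z hz
        · right
          have hball : ∀ z : ↥V, z ∈ p := by
            intro z
            have h5 : (z : A) ∈ Q := heq.symm ▸ ((hmemV _).mp z.2)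
            obtain ⟨w, hw, hwz⟩ := h5
            rwa [show w = z from Subtype.ext hwz] at hw
          rw [Submodule.eq_top_iff']
          exact fun z => hball z
    obtain ⟨i, ⟨iso⟩⟩ := hcomplete VS hVSsimple
    have hchar : ∀ g : G, (ρ i).character g = LinearMap.trace ℂ ↥V (r g) := by
      intro g
      rw [FDRep.char_iso iso]
      show LinearMap.trace ℂ ↥V (VS.ρ g) = _
      congr 1
    have hTsum : T = ∑ g : G, f g • (r g : ↥V →ₗ[ℂ] ↥V) := by
      refine LinearMap.ext fun y => Subtype.ext ?_
      have hcoe : ((((∑ g : G, f g • (r g : ↥V →ₗ[ℂ] ↥V))) y : ↥V) : A)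
          = ∑ g : G, f g • (MonoidAlgebra.single g (1:ℂ) * (y : A)) := by
        rw [LinearMap.sum_apply]
        rw [AddSubmonoidClass.coe_finset_sum]
        exact Finset.sum_congr rfl fun g _ => by
          simp only [LinearMap.smul_apply, SetLike.val_smul]
          rfl
      have hcoe2 : ((T y : ↥V) : A) = a * (y : A) := rfl
      rw [hcoe, hcoe2, ha_def, Finset.sum_mul]
      exact Finset.sum_congr rfl fun g _ => by
        rw [← smul_mul_assoc, MonoidAlgebra.smul_single', mul_one]
    have htrace0 : LinearMap.trace ℂ ↥V T = 0 := by
      rw [hTsum, map_sum]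
      have : ∀ g : G, (LinearMap.trace ℂ ↥V) (f g • (r g : ↥V →ₗ[ℂ] ↥V))
          = f g * (ρ i).character g := fun g => by
        rw [map_smul, hchar g, smul_eq_mul]
      rw [Finset.sum_congr rfl fun g _ => this g]
      exact h0 i
    have htraceμ : LinearMap.trace ℂ ↥V T = μ * (finrank ℂ ↥V : ℂ) := by
      have hTid : T = μ • LinearMap.id := by
        refine LinearMap.ext fun y => Subtype.ext ?_
        show a * (y : A) = μ • (y : A)
        exact hact _ ((hmemV _).mp y.2)
      rw [hTid, map_smul, LinearMap.trace_id, smul_eq_mul]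
    have hμ0 : μ = 0 := by
      have hfr : (finrank ℂ ↥V : ℂ) ≠ 0 := by
        have : 0 < finrank ℂ ↥V := finrank_pos
        exact_mod_cast this.ne'
      have := htraceμ ▸ htrace0
      exact (mul_eq_zero.mp this).resolve_right hfr
    have := hact x hxS
    rw [hμ0, zero_smul] at this
    exact this
  -- conclude a = 0
  haveI : IsSemisimpleModule A A := inferInstance
  set Z : Submodule A A :=
    { carrier := {y | a * y = 0}
      add_mem' := fun hy hz => by
        show a * _ = 0
        rw [mul_add]
        show a * _ + a * _ = 0
        rw [hy, hz, add_zero]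
      zero_mem' := by show a * 0 = 0; rw [mul_zero]
      smul_mem' := fun b y hy => by
        show a * (b * y) = 0
        rw [← mul_assoc, hcen b, mul_assoc, hy, mul_zero] } with hZ_def
  have hZtop : (⊤ : Submodule A A) ≤ Z := by
    rw [← IsSemisimpleModule.sSup_simples_eq_top A A]
    apply sSup_le
    intro S hS
    intro y hy
    exact hsimple_zero S hS y hy
  have ha0 : a = 0 := by
    have h1 : a * 1 = 0 := hZtop (Submodule.mem_top) 
    rwa [mul_one] at h1
  have : a.coeff g₀ = f g₀ := by
    rw [ha_def]
    rw [MonoidAlgebra.coeff_sum, Finset.sum_apply']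
    rw [Finset.sum_eq_single g₀]
    · exact Finsupp.single_eq_same
    · intro g _ hg
      exact Finsupp.single_eq_of_ne hg.symm
    · intro h
      exact absurd (Finset.mem_univ g₀) h
  rw [← this, ha0]
  rfl

lemma aux_isConj_inv {Γ : Type} [Group Γ] {x y : Γ} (h : IsConj x y) : IsConj x⁻¹ y⁻¹ := by
  obtain ⟨z, hz⟩ := isConj_iff.mp h
  exact isConj_iff.mpr ⟨z, by rw [← hz]; group⟩

lemma aux_char_eq_of_isConj {Γ : Type} [Group Γ] (W : FDRep ℂ Γ) {x y : Γ}
    (h : IsConj x y) : W.character x = W.character y := by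
  obtain ⟨z, hz⟩ := isConj_iff.mp h
  rw [← hz, FDRep.char_conj]

lemma aux_finrank_ne_zero {Γ : Type} [Group Γ] (W : FDRep ℂ Γ) (h : Simple W) :
    (finrank ℂ W : ℂ) ≠ 0 := by
  haveI := h
  have h1 : finrank ℂ W ≠ 0 := by
    intro h0
    haveI : Subsingleton W := (finrank_zero_iff (R := ℂ) (M := W)).mp h0
    apply CategoryTheory.id_nonzero W
    ext x
    exact @Subsingleton.elim _ ((finrank_zero_iff (R := ℂ) (M := W)).mp h0) _ _
  exact_mod_cast h1

open scoped Classical in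
lemma aux_orth {G : Type} [Group G] [Fintype G] {ι : Type} (ρ : ι → FDRep ℂ G)
    (hsimple : ∀ i, Simple (ρ i))
    (hdistinct : ∀ i j, i ≠ j → ¬ Nonempty (ρ i ≅ ρ j)) (i j : ι) :
    ∑ g : G, (ρ i).character g * (ρ j).character g⁻¹
      = if i = j then (Fintype.card G : ℂ) else 0 := by
  haveI := hsimple i
  haveI := hsimple j
  letI hF : Fintype G := ‹Fintype G›
  letI : Invertible ((Nat.card G : ℂ)) :=
    invertibleOfNonzero (Nat.cast_ne_zero.mpr Nat.card_pos.ne')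
  have h0 := FDRep.char_orthonormal (k := ℂ) (G := G) (ρ i) (ρ j)
  have h : ⅟(Nat.card G : ℂ) • ∑ g : G, (ρ i).character g * (ρ j).character g⁻¹
      = if Nonempty (ρ i ≅ ρ j) then (1 : ℂ) else 0 := h0
  have h2 := congrArg (fun z => (Nat.card G : ℂ) * z) h
  simp only [smul_eq_mul, ← mul_assoc, mul_invOf_self, one_mul, Nat.card_eq_fintype_card] at h2
  by_cases hij : i = j
  · subst hij
    rw [if_pos rfl]
    rw [if_pos ⟨Iso.refl _⟩, mul_one] at h2
    exact h2
  · rw [if_neg hij]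
    rw [if_neg (hdistinct i j hij), mul_zero] at h2
    exact h2

open scoped Classical in
lemma aux_key {G : Type} [Group G] [Fintype G]
    {ι : Type} [Fintype ι] (ρ : ι → FDRep ℂ G)
    (hsimple : ∀ i, Simple (ρ i))
    (hdistinct : ∀ i j, i ≠ j → ¬ Nonempty (ρ i ≅ ρ j))
    (hcomplete : ∀ V : FDRep ℂ G, Simple V → ∃ i, Nonempty (ρ i ≅ V))
    (c : G) (g : G) :
    (Nat.card {x : G // IsConj c x} : ℂ) * ∑ i, (ρ i).character c⁻¹ * (ρ i).character g
      = if IsConj c g then (Fintype.card G : ℂ) else 0 := by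
  set nC : ℂ := (Nat.card {x : G // IsConj c x} : ℂ) with hnC_def
  have hnCcard : (Nat.card {x : G // IsConj c x}) =
      (Finset.univ.filter (fun x : G => IsConj c x)).card := by
    rw [Nat.card_eq_fintype_card, Fintype.card_subtype]
  set f₀ : G → ℂ := fun x =>
    (if IsConj c x then (Fintype.card G : ℂ) else 0)
      - nC * ∑ i, (ρ i).character c⁻¹ * (ρ i).character x with hf₀_def
  have hf₀class : ∀ s t : G, f₀ (s * t * s⁻¹) = f₀ t := by
    intro s t
    have h1 : IsConj c (s * t * s⁻¹) ↔ IsConj c t := by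
      constructor
      · intro h; exact h.trans (isConj_iff.mpr ⟨s⁻¹, by group⟩)
      · intro h; exact h.trans (isConj_iff.mpr ⟨s, rfl⟩)
    simp only [hf₀_def, FDRep.char_conj, h1]
  have hpair : ∀ j, ∑ g : G, f₀ g * (ρ j).character g⁻¹ = 0 := by
    intro j
    have hterm1 : ∑ g : G, (if IsConj c g then (Fintype.card G : ℂ) else 0)
        * (ρ j).character g⁻¹
        = nC * ((Fintype.card G : ℂ) * (ρ j).character c⁻¹) := by
      have hh : ∀ g : G, (if IsConj c g then (Fintype.card G : ℂ) else 0)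
          * (ρ j).character g⁻¹
          = if IsConj c g then (Fintype.card G : ℂ) * (ρ j).character c⁻¹ else 0 := by
        intro g
        by_cases hg : IsConj c g
        · rw [if_pos hg, if_pos hg]
          congr 1
          exact (aux_char_eq_of_isConj (ρ j) (aux_isConj_inv hg)).symm
        · rw [if_neg hg, if_neg hg, zero_mul]
      rw [Finset.sum_congr rfl fun g _ => hh g, Finset.sum_ite, Finset.sum_const,
        Finset.sum_const_zero, add_zero, nsmul_eq_mul, hnC_def, hnCcard]
    have hterm2 : ∑ g : G, (nC * ∑ i, (ρ i).character c⁻¹ * (ρ i).character g)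
        * (ρ j).character g⁻¹
        = nC * ((Fintype.card G : ℂ) * (ρ j).character c⁻¹) := by
      have hh : ∀ g : G, (nC * ∑ i, (ρ i).character c⁻¹ * (ρ i).character g)
          * (ρ j).character g⁻¹
          = nC * ∑ i, (ρ i).character c⁻¹
              * ((ρ i).character g * (ρ j).character g⁻¹) := by
        intro g
        rw [mul_assoc, Finset.sum_mul]
        congr 1
        exact Finset.sum_congr rfl fun i _ => by ring
      rw [Finset.sum_congr rfl fun g _ => hh g, ← Finset.mul_sum]
      congr 1
      rw [Finset.sum_comm]
      have hin : ∀ i, ∑ g : G, (ρ i).character c⁻¹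
          * ((ρ i).character g * (ρ j).character g⁻¹)
          = (ρ i).character c⁻¹ * (if i = j then (Fintype.card G : ℂ) else 0) := by
        intro i
        rw [← Finset.mul_sum, aux_orth ρ hsimple hdistinct i j]
      rw [Finset.sum_congr rfl fun i _ => hin i]
      rw [Finset.sum_eq_single j]
      · rw [if_pos rfl]; ring
      · intro i _ hi; rw [if_neg hi, mul_zero]
      · intro h; exact absurd (Finset.mem_univ j) h
    have : ∀ g : G, f₀ g * (ρ j).character g⁻¹
        = (if IsConj c g then (Fintype.card G : ℂ) else 0) * (ρ j).character g⁻¹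
          - (nC * ∑ i, (ρ i).character c⁻¹ * (ρ i).character g) * (ρ j).character g⁻¹ := by
      intro g
      rw [hf₀_def]
      ring
    rw [Finset.sum_congr rfl fun g _ => this g, Finset.sum_sub_distrib, hterm1, hterm2,
      sub_self]
  have hzero : ∀ g : G, f₀ g⁻¹ = 0 := by
    apply aux_complete ρ hcomplete (fun g => f₀ g⁻¹)
    · intro s t
      have h1 := hf₀class s t⁻¹
      have h2 : (s * t * s⁻¹)⁻¹ = s * t⁻¹ * s⁻¹ := by group
      rw [h2]
      exact h1
    · intro i
      have := hpair i
      rw [← this]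
      refine Fintype.sum_equiv (Equiv.inv G) _ _ fun x => ?_
      simp only [Equiv.inv_apply, inv_inv]
  have hfg : f₀ g = 0 := by
    have := hzero g⁻¹
    rwa [inv_inv] at this
  have := sub_eq_zero.mp hfg
  exact this.symm

lemma aux_selfinv {G : Type} [Group G] [Fintype G]
    {ι : Type} [Fintype ι] (ρ : ι → FDRep ℂ G)
    (hsimple : ∀ i, Simple (ρ i))
    (hdistinct : ∀ i j, i ≠ j → ¬ Nonempty (ρ i ≅ ρ j))
    (hcomplete : ∀ V : FDRep ℂ G, Simple V → ∃ i, Nonempty (ρ i ≅ V))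
    (c : G)
    (hreal : ∀ i, ∀ g : G, IsConj c g → ∃ r : ℝ, (ρ i).character g = (r : ℂ)) :
    IsConj c c⁻¹ := by
  have hkey_c := aux_key ρ hsimple hdistinct hcomplete c c
  have hkey_ci := aux_key ρ hsimple hdistinct hcomplete c c⁻¹
  have hchar : ∀ i, (ρ i).character c⁻¹ = (ρ i).character c := by
    intro i
    obtain ⟨r, hr⟩ := hreal i c (IsConj.refl c)
    rw [aux_char_inv (ρ i) c, hr, Complex.conj_ofReal]
  have hsum_eq : ∑ i, (ρ i).character c⁻¹ * (ρ i).character c⁻¹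
      = ∑ i, (ρ i).character c⁻¹ * (ρ i).character c :=
    Finset.sum_congr rfl fun i _ => by rw [hchar i]
  rw [if_pos (IsConj.refl c)] at hkey_c
  by_contra hcon
  rw [if_neg hcon, hsum_eq, hkey_c] at hkey_ci
  exact (Nat.cast_ne_zero.mpr Fintype.card_ne_zero) hkey_ci


end

/-- Martingale property of character ratios.  Let `H ⊆ G` be finite groups, `C` the conjugacy
class of `c` in `G`, such that `C ∩ H` is either empty or a single conjugacy class of `H`
(and all irreducible characters of `G` are real on `C`).  Let `σ` be an irreducible
representation of `H`, and let `k₀ ∈ H` be a representative of `C ∩ H` whenever the latter is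
nonempty.  Then the expected value, under the transition probability
`P(τ) = |H| · dim(τ) · κ(σ,τ)/(|G| · dim(σ))` on irreducible representations `τ` of `G`,
of `|C| · χ^τ(C)/dim(τ)` equals `|C ∩ H| · χ^σ(C ∩ H)/dim(σ)` (which is `0` when `C ∩ H`
is empty, since then `|C ∩ H| = 0`). -/
theorem character_ratio_martingale_step
    {G : Type} [Group G] [Fintype G] (H : Subgroup G) [Fintype H]
    {ι : Type} [Fintype ι] (ρ : ι → FDRep ℂ G)
    (hsimple : ∀ i, Simple (ρ i))
    (hdistinct : ∀ i j, i ≠ j → ¬ Nonempty (ρ i ≅ ρ j))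
    (hcomplete : ∀ V : FDRep ℂ G, Simple V → ∃ i, Nonempty (ρ i ≅ V))
    (σ : FDRep ℂ H) (hσ : Simple σ)
    (c : G)
    (hreal : ∀ i, ∀ g : G, IsConj c g → ∃ r : ℝ, (ρ i).character g = (r : ℂ))
    (hsingle : ∀ h₁ h₂ : H, IsConj c (↑h₁) → IsConj c (↑h₂) → IsConj h₁ h₂)
    (k₀ : H) (hk₀ : (∃ h : H, IsConj c (↑h : G)) → IsConj c (↑k₀ : G)) :
    ∑ i, ((Fintype.card H : ℂ) * (Module.finrank ℂ (ρ i) : ℂ) *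
        ((∑ h : H, (ρ i).character (↑h) * (starRingEnd ℂ) (σ.character h)) /
          (Fintype.card H : ℂ)) /
        ((Fintype.card G : ℂ) * (Module.finrank ℂ σ : ℂ))) *
        ((Nat.card {g : G // IsConj c g} : ℂ) * (ρ i).character c /
          (Module.finrank ℂ (ρ i) : ℂ)) =
      (Nat.card {h : H // IsConj c (↑h : G)} : ℂ) * σ.character k₀ /
        (Module.finrank ℂ σ : ℂ) := by
    classical
  set nC : ℂ := (Nat.card {g : G // IsConj c g} : ℂ) with hnC_def
  set nCH : ℂ := (Nat.card {h : H // IsConj c (↑h : G)} : ℂ) with hnCH_def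
  set dσ : ℂ := (Module.finrank ℂ σ : ℂ) with hdσ_def
  set cG : ℂ := (Fintype.card G : ℂ) with hcG_def
  set cH : ℂ := (Fintype.card H : ℂ) with hcH_def
  set T : ι → ℂ := fun i => ∑ h : H, (ρ i).character (↑h) * (starRingEnd ℂ) (σ.character h)
    with hT_def
  have hdσ0 : dσ ≠ 0 := aux_finrank_ne_zero σ hσ
  have hcG0 : cG ≠ 0 := Nat.cast_ne_zero.mpr Fintype.card_ne_zero
  have hcH0 : cH ≠ 0 := Nat.cast_ne_zero.mpr Fintype.card_ne_zero
  have hd0 : ∀ i, ((Module.finrank ℂ (ρ i) : ℂ)) ≠ 0 :=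
    fun i => aux_finrank_ne_zero _ (hsimple i)
  have hnC0 : nC ≠ 0 := by
    haveI : Nonempty {g : G // IsConj c g} := ⟨⟨c, IsConj.refl c⟩⟩
    have : 0 < Nat.card {g : G // IsConj c g} := Nat.card_pos
    rw [hnC_def]
    exact_mod_cast this.ne'
  have hselfinv : IsConj c c⁻¹ := aux_selfinv ρ hsimple hdistinct hcomplete c hreal
  have hchar_real : ∀ i, (ρ i).character c = (ρ i).character c⁻¹ := by
    intro i
    obtain ⟨r, hr⟩ := hreal i c (IsConj.refl c)
    rw [aux_char_inv (ρ i) c, hr, Complex.conj_ofReal]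
  -- Step 1: simplify each term
  have hterm : ∀ i, (cH * (Module.finrank ℂ (ρ i) : ℂ) * (T i / cH) / (cG * dσ)) *
      (nC * (ρ i).character c / (Module.finrank ℂ (ρ i) : ℂ))
      = nC / (cG * dσ) * ((ρ i).character c * T i) := by
    intro i
    rw [show cH * (Module.finrank ℂ (ρ i) : ℂ) * (T i / cH)
        = (Module.finrank ℂ (ρ i) : ℂ) * T i from by
      field_simp]
    rw [div_mul_div_comm, div_mul_eq_mul_div,
      div_eq_div_iff (by exact mul_ne_zero (mul_ne_zero hcG0 hdσ0) (hd0 i))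
        (mul_ne_zero hcG0 hdσ0)]
    ring
  rw [Finset.sum_congr rfl fun i _ => hterm i, ← Finset.mul_sum]
  -- Step 2: swap summation order
  have hswap : ∑ i, (ρ i).character c * T i
      = ∑ h : H, (starRingEnd ℂ) (σ.character h)
          * ∑ i, (ρ i).character c⁻¹ * (ρ i).character (↑h : G) := by
    rw [hT_def]
    simp only [Finset.mul_sum]
    rw [Finset.sum_comm]
    refine Finset.sum_congr rfl fun h _ => ?_
    refine Finset.sum_congr rfl fun i _ => ?_
    rw [← hchar_real i]
    ring
  rw [hswap]
  -- Step 3: apply the key column-orthogonality identity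
  have hkey : ∀ h : H, ∑ i, (ρ i).character c⁻¹ * (ρ i).character (↑h : G)
      = nC⁻¹ * (if IsConj c (↑h : G) then cG else 0) := by
    intro h
    have hk := aux_key ρ hsimple hdistinct hcomplete c (↑h : G)
    rw [← hk, ← mul_assoc, inv_mul_cancel₀ hnC0, one_mul]
  rw [Finset.sum_congr rfl fun h _ => by rw [hkey h]]
  -- Step 4: compute the sum over the subgroup
  have hinv_iff : ∀ h : H, IsConj c ((↑(h⁻¹) : G)) ↔ IsConj c (↑h : G) := by
    intro h
    have hcoe : ((↑(h⁻¹) : G)) = ((↑h : G))⁻¹ := rfl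
    rw [hcoe]
    constructor
    · intro hc
      have := aux_isConj_inv hc
      rw [inv_inv] at this
      exact hselfinv.trans this
    · intro hc
      exact hselfinv.trans (aux_isConj_inv hc)
  have hconjval : ∀ h : H, (starRingEnd ℂ) (σ.character h) = σ.character h⁻¹ :=
    fun h => (aux_char_inv σ h).symm
  have hsub : ∑ h : H, (starRingEnd ℂ) (σ.character h)
      * (nC⁻¹ * (if IsConj c (↑h : G) then cG else 0))
      = nC⁻¹ * cG * (nCH * σ.character k₀) := by
    have h1 : ∀ h : H, (starRingEnd ℂ) (σ.character h)
        * (nC⁻¹ * (if IsConj c (↑h : G) then cG else 0))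
        = nC⁻¹ * cG * (if IsConj c (↑h : G) then σ.character h⁻¹ else 0) := by
      intro h
      by_cases hc : IsConj c (↑h : G)
      · rw [if_pos hc, if_pos hc, hconjval h]; ring
      · rw [if_neg hc, if_neg hc]; ring
    rw [Finset.sum_congr rfl fun h _ => h1 h, ← Finset.mul_sum]
    congr 1
    have h2 : ∑ h : H, (if IsConj c (↑h : G) then σ.character h⁻¹ else 0)
        = ∑ h : H, (if IsConj c (↑h : G) then σ.character h else 0) := by
      refine Fintype.sum_equiv (Equiv.inv H) _ _ fun h => ?_
      simp only [Equiv.inv_apply]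
      by_cases hc : IsConj c (↑h : G)
      · rw [if_pos hc, if_pos ((hinv_iff h).mpr hc)]
      · rw [if_neg hc, if_neg (fun hcc => hc ((hinv_iff h).mp hcc))]
    rw [h2, Finset.sum_ite, Finset.sum_const_zero, add_zero]
    have h3 : ∀ h ∈ Finset.univ.filter (fun h : H => IsConj c (↑h : G)),
        σ.character h = σ.character k₀ := by
      intro h hh
      rw [Finset.mem_filter] at hh
      exact aux_char_eq_of_isConj σ (hsingle h k₀ hh.2 (hk₀ ⟨h, hh.2⟩))
    rw [Finset.sum_congr rfl h3, Finset.sum_const, nsmul_eq_mul]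
    congr 1
    rw [hnCH_def, Nat.card_eq_fintype_card, Fintype.card_subtype]
  rw [hsub]
  field_simp
end

section
/- Kerov's first moment identity: for any partition λ of j, the sum over partitions Λ of j+1 obtained from λ by adding a box, of the Plancherel transition probability dim(Λ)/((j+1) dim(λ)) times the content of the added box, equals 0. Equivalently, Σ_Λ dim(Λ) c(Λ/λ) = 0, where the sum is over Λ obtained by adding one box to λ and c(Λ/λ) is the content of that box. -/
/-- The total content of a Young diagram: the sum of `j − i` over the boxes `(i,j)`. -/
def YoungDiagram.contentSum (μ : YoungDiagram) : ℤ :=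
  ∑ x ∈ μ.cells, ((x.2 : ℤ) - (x.1 : ℤ))

/-- The number of standard Young tableaux of shape `μ`, i.e. the number of maximal chains
`⊥ = c 0 ⊆ c 1 ⊆ ⋯ ⊆ c |μ| = μ` of Young diagrams, each obtained from the previous by
adding one box. -/
noncomputable def sytCount (μ : YoungDiagram) : ℕ :=
  Nat.card {c : Fin (μ.card + 1) → YoungDiagram //
    c 0 = ⊥ ∧ c (Fin.last μ.card) = μ ∧
    ∀ i : Fin μ.card, c i.castSucc ≤ c i.succ ∧ (c i.succ).card = (c i.castSucc).card + 1}

namespace YoungDiagram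

/-- Row `i` is addable: we may add a cell at `(i, rowLen i)`. -/
def Addable (μ : YoungDiagram) (i : ℕ) : Prop :=
  i = 0 ∨ μ.rowLen i < μ.rowLen (i - 1)

/-- Row `i` is removable: we may remove the cell `(i, rowLen i - 1)`. -/
def Removable (μ : YoungDiagram) (i : ℕ) : Prop :=
  μ.rowLen (i + 1) < μ.rowLen i

instance (μ : YoungDiagram) (i : ℕ) : Decidable (μ.Addable i) := by
  unfold Addable; infer_instance

instance (μ : YoungDiagram) (i : ℕ) : Decidable (μ.Removable i) := by
  unfold Removable; infer_instance

lemma rowLen_eq_of_forall {ν : YoungDiagram} {k n : ℕ}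
    (h : ∀ j, (k, j) ∈ ν ↔ j < n) : ν.rowLen k = n := by
  have h1 := h (ν.rowLen k)
  have h2 := h n
  simp only [mem_iff_lt_rowLen] at h1 h2
  omega

lemma addable_lowerset {μ : YoungDiagram} {i : ℕ} (h : μ.Addable i) :
    IsLowerSet (↑(insert (i, μ.rowLen i) μ.cells) : Set (ℕ × ℕ)) := by
  intro hi lo hle hmem
  obtain ⟨a', b'⟩ := hi
  obtain ⟨a, b⟩ := lo
  obtain ⟨ha, hb⟩ := hle
  simp only [Finset.coe_insert, Set.mem_insert_iff, Finset.mem_coe, mem_cells,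
    Prod.mk.injEq] at hmem ⊢
  simp only [] at ha hb
  rcases hmem with ⟨h1, h2⟩ | hmem
  · by_cases hab : a = i ∧ b = μ.rowLen i
    · left; exact hab
    · right
      rw [mem_iff_lt_rowLen]
      rcases Nat.lt_or_ge a i with haa | haa
      · rcases h with rfl | h
        · omega
        · calc b ≤ μ.rowLen i := by omega
          _ < μ.rowLen (i - 1) := h
          _ ≤ μ.rowLen a := μ.rowLen_anti _ _ (by omega)
      · have : a = i := by omega
        subst this
        omega
  · right
    exact μ.up_left_mem ha hb hmem

/-- Add a cell at the end of row `i` (if possible; otherwise return `μ`). -/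
def addRow (μ : YoungDiagram) (i : ℕ) : YoungDiagram :=
  if h : μ.Addable i then ⟨insert (i, μ.rowLen i) μ.cells, addable_lowerset h⟩ else μ

lemma notMem_self_rowLen (μ : YoungDiagram) (i : ℕ) : (i, μ.rowLen i) ∉ μ := by
  rw [mem_iff_lt_rowLen]; omega

lemma cells_addRow {μ : YoungDiagram} {i : ℕ} (h : μ.Addable i) :
    (μ.addRow i).cells = insert (i, μ.rowLen i) μ.cells := by
  rw [addRow, dif_pos h]

lemma mem_addRow {μ : YoungDiagram} {i : ℕ} (h : μ.Addable i) {x : ℕ × ℕ} :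
    x ∈ μ.addRow i ↔ x = (i, μ.rowLen i) ∨ x ∈ μ := by
  rw [← mem_cells, cells_addRow h, Finset.mem_insert, mem_cells]

lemma card_addRow {μ : YoungDiagram} {i : ℕ} (h : μ.Addable i) :
    (μ.addRow i).card = μ.card + 1 := by
  show (μ.addRow i).cells.card = _
  rw [cells_addRow h, Finset.card_insert_of_notMem]
  exact μ.notMem_self_rowLen i

lemma le_addRow {μ : YoungDiagram} {i : ℕ} : μ ≤ μ.addRow i := by
  by_cases h : μ.Addable i
  · rw [← cells_subset_iff, cells_addRow h]
    exact Finset.subset_insert _ _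
  · rw [addRow, dif_neg h]

lemma rowLen_addRow {μ : YoungDiagram} {i : ℕ} (h : μ.Addable i) (k : ℕ) :
    (μ.addRow i).rowLen k = if k = i then μ.rowLen i + 1 else μ.rowLen k := by
  split_ifs with hk
  · subst hk
    apply rowLen_eq_of_forall
    intro j
    rw [mem_addRow h, mem_iff_lt_rowLen]
    simp only [Prod.mk.injEq, true_and]
    omega
  · apply rowLen_eq_of_forall
    intro j
    rw [mem_addRow h, mem_iff_lt_rowLen]
    simp only [Prod.mk.injEq]
    constructor
    · rintro (⟨rfl, rfl⟩ | hm)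
      · exact absurd rfl hk
      · exact hm
    · exact Or.inr

end YoungDiagram

namespace YoungDiagram

lemma removable_lowerset {μ : YoungDiagram} {i : ℕ} (h : μ.Removable i) :
    IsLowerSet (↑(μ.cells.erase (i, μ.rowLen i - 1)) : Set (ℕ × ℕ)) := by
  have hpos : 0 < μ.rowLen i := by unfold Removable at h; omega
  intro hi lo hle hmem
  obtain ⟨a', b'⟩ := hi
  obtain ⟨a, b⟩ := lo
  obtain ⟨ha, hb⟩ := hle
  simp only [Finset.coe_erase, Set.mem_diff, Finset.mem_coe, mem_cells, Set.mem_singleton_iff,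
    Prod.mk.injEq, not_and] at hmem ⊢
  simp only [] at ha hb
  obtain ⟨hmem, hne⟩ := hmem
  refine ⟨μ.up_left_mem ha hb hmem, ?_⟩
  intro h1 h2
  rcases Nat.lt_or_ge i a' with haa | haa
  · have h3 : (i + 1, b') ∈ μ := μ.up_left_mem (by omega) le_rfl hmem
    rw [mem_iff_lt_rowLen] at h3
    unfold Removable at h
    omega
  · have h4 : a' = i := by omega
    have h5 := hne h4
    rw [mem_iff_lt_rowLen, h4] at hmem
    omega

/-- Remove the last cell of row `i` (if possible; otherwise return `μ`). -/
def removeRow (μ : YoungDiagram) (i : ℕ) : YoungDiagram :=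
  if h : μ.Removable i then ⟨μ.cells.erase (i, μ.rowLen i - 1), removable_lowerset h⟩ else μ

lemma cells_removeRow {μ : YoungDiagram} {i : ℕ} (h : μ.Removable i) :
    (μ.removeRow i).cells = μ.cells.erase (i, μ.rowLen i - 1) := by
  rw [removeRow, dif_pos h]

lemma mem_removeRow {μ : YoungDiagram} {i : ℕ} (h : μ.Removable i) {x : ℕ × ℕ} :
    x ∈ μ.removeRow i ↔ x ∈ μ ∧ x ≠ (i, μ.rowLen i - 1) := by
  rw [← mem_cells, cells_removeRow h, Finset.mem_erase, mem_cells, and_comm]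

lemma mem_self_rowLen_sub_one {μ : YoungDiagram} {i : ℕ} (h : 0 < μ.rowLen i) :
    (i, μ.rowLen i - 1) ∈ μ := by
  rw [mem_iff_lt_rowLen]; omega

lemma card_removeRow {μ : YoungDiagram} {i : ℕ} (h : μ.Removable i) :
    μ.card = (μ.removeRow i).card + 1 := by
  have hpos : 0 < μ.rowLen i := by unfold Removable at h; omega
  show μ.cells.card = (μ.removeRow i).cells.card + 1
  rw [cells_removeRow h, Finset.card_erase_of_mem]
  · have : 0 < μ.cells.card := Finset.card_pos.mpr ⟨_, (mem_cells _).mpr (mem_self_rowLen_sub_one hpos)⟩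
    omega
  · exact (mem_cells _).mpr (mem_self_rowLen_sub_one hpos)

lemma removeRow_le {μ : YoungDiagram} {i : ℕ} : μ.removeRow i ≤ μ := by
  by_cases h : μ.Removable i
  · rw [← cells_subset_iff, cells_removeRow h]
    exact Finset.erase_subset _ _
  · rw [removeRow, dif_neg h]

lemma rowLen_removeRow {μ : YoungDiagram} {i : ℕ} (h : μ.Removable i) (k : ℕ) :
    (μ.removeRow i).rowLen k = if k = i then μ.rowLen i - 1 else μ.rowLen k := by
  have hpos : 0 < μ.rowLen i := by unfold Removable at h; omega
  split_ifs with hk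
  · subst hk
    apply rowLen_eq_of_forall
    intro j
    rw [mem_removeRow h, mem_iff_lt_rowLen]
    simp only [Prod.mk.injEq, ne_eq, not_and, true_and]
    omega
  · apply rowLen_eq_of_forall
    intro j
    rw [mem_removeRow h, mem_iff_lt_rowLen]
    simp only [Prod.mk.injEq, ne_eq, not_and]
    constructor
    · exact fun hx => hx.1
    · intro hj
      exact ⟨hj, fun hki => absurd hki hk⟩

end YoungDiagram

namespace YoungDiagram

lemma removable_addRow_self {μ : YoungDiagram} {i : ℕ} (h : μ.Addable i) :
    (μ.addRow i).Removable i := by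
  unfold Removable
  rw [rowLen_addRow h, rowLen_addRow h, if_pos rfl, if_neg (by omega)]
  have := μ.rowLen_anti i (i + 1) (by omega)
  omega

lemma removeRow_addRow_self {μ : YoungDiagram} {i : ℕ} (h : μ.Addable i) :
    (μ.addRow i).removeRow i = μ := by
  ext1
  rw [cells_removeRow (removable_addRow_self h), cells_addRow h,
    rowLen_addRow h, if_pos rfl]
  simp only [Nat.add_sub_cancel]
  rw [Finset.erase_insert]
  rw [mem_cells]
  exact μ.notMem_self_rowLen i

lemma addable_removeRow_self {μ : YoungDiagram} {i : ℕ} (h : μ.Removable i) :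
    (μ.removeRow i).Addable i := by
  rcases Nat.eq_zero_or_pos i with rfl | hp
  · exact Or.inl rfl
  · right
    rw [rowLen_removeRow h, rowLen_removeRow h, if_pos rfl, if_neg (by omega)]
    have h1 := μ.rowLen_anti (i - 1) i (by omega)
    unfold Removable at h
    omega

lemma addRow_removeRow_self {μ : YoungDiagram} {i : ℕ} (h : μ.Removable i) :
    (μ.removeRow i).addRow i = μ := by
  have hpos : 0 < μ.rowLen i := by unfold Removable at h; omega
  ext1
  rw [cells_addRow (addable_removeRow_self h), cells_removeRow h,
    rowLen_removeRow h, if_pos rfl]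
  rw [Finset.insert_erase]
  rw [mem_cells]
  exact mem_self_rowLen_sub_one hpos

lemma cover_iff_addRow {μ Λ : YoungDiagram} :
    (μ ≤ Λ ∧ Λ.card = μ.card + 1) ↔ ∃ i, μ.Addable i ∧ Λ = μ.addRow i := by
  constructor
  · rintro ⟨hle, hcard⟩
    have hsub : μ.cells ⊆ Λ.cells := cells_subset_iff.mpr hle
    have hcd : (Λ.cells \ μ.cells).card = 1 := by
      have hcard' : Λ.cells.card = μ.cells.card + 1 := hcard
      have hle2 := Finset.card_le_card hsub
      rw [Finset.card_sdiff_of_subset hsub]; omega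
    obtain ⟨c, hc⟩ := Finset.card_eq_one.mp hcd
    obtain ⟨i, j⟩ := c
    have hcells : Λ.cells = insert (i, j) μ.cells := by
      ext x
      rw [Finset.mem_insert]
      constructor
      · intro hx
        by_cases hxm : x ∈ μ.cells
        · right; exact hxm
        · left
          have : x ∈ Λ.cells \ μ.cells := Finset.mem_sdiff.mpr ⟨hx, hxm⟩
          rw [hc, Finset.mem_singleton] at this
          exact this
      · rintro (rfl | hx)
        · have : (i, j) ∈ Λ.cells \ μ.cells := by rw [hc]; exact Finset.mem_singleton_self _
          exact (Finset.mem_sdiff.mp this).1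
        · exact hsub hx
    have hijΛ : (i, j) ∈ Λ := by rw [← mem_cells, hcells]; exact Finset.mem_insert_self _ _
    have hijμ : (i, j) ∉ μ := by
      intro hm
      have : (i, j) ∈ Λ.cells \ μ.cells := by rw [hc]; exact Finset.mem_singleton_self _
      exact (Finset.mem_sdiff.mp this).2 ((mem_cells _).mpr hm)
    have hj : j = μ.rowLen i := by
      rw [mem_iff_lt_rowLen] at hijμ
      push_neg at hijμ
      rcases Nat.lt_or_ge (μ.rowLen i) j with hlt | hge
      · exfalso
        have h1 : (i, μ.rowLen i) ∈ Λ := Λ.up_left_mem le_rfl (by omega) hijΛ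
        rw [← mem_cells, hcells, Finset.mem_insert] at h1
        rcases h1 with heq | hm
        · simp only [Prod.mk.injEq] at heq; omega
        · exact μ.notMem_self_rowLen i ((mem_cells _).mp hm)
      · omega
    subst hj
    have hadd : μ.Addable i := by
      rcases Nat.eq_zero_or_pos i with rfl | hp
      · exact Or.inl rfl
      · right
        have h1 : (i - 1, μ.rowLen i) ∈ Λ := Λ.up_left_mem (by omega) le_rfl hijΛ
        rw [← mem_cells, hcells, Finset.mem_insert] at h1
        rcases h1 with heq | hm
        · simp only [Prod.mk.injEq] at heq; omega
        · rw [mem_cells, mem_iff_lt_rowLen] at hm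
          exact hm
    refine ⟨i, hadd, ?_⟩
    ext1
    rw [hcells, cells_addRow hadd]
  · rintro ⟨i, hadd, rfl⟩
    exact ⟨le_addRow, card_addRow hadd⟩

lemma cover_iff_removeRow {μ ν : YoungDiagram} :
    (ν ≤ μ ∧ μ.card = ν.card + 1) ↔ ∃ i, μ.Removable i ∧ ν = μ.removeRow i := by
  constructor
  · intro hc
    obtain ⟨i, hadd, rfl⟩ := cover_iff_addRow.mp hc
    have hrem : (ν.addRow i).Removable i := removable_addRow_self hadd
    exact ⟨i, hrem, (removeRow_addRow_self hadd).symm⟩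
  · rintro ⟨i, hrem, rfl⟩
    exact ⟨removeRow_le, card_removeRow hrem⟩

lemma addRow_injOn {μ : YoungDiagram} {i i' : ℕ} (h : μ.Addable i) (h' : μ.Addable i')
    (heq : μ.addRow i = μ.addRow i') : i = i' := by
  by_contra hne
  have h1 : (i, μ.rowLen i) ∈ μ.addRow i' := by
    rw [← heq, mem_addRow h]; left; rfl
  rw [mem_addRow h'] at h1
  rcases h1 with heq2 | hm
  · exact hne (by simpa using congrArg Prod.fst heq2)
  · exact μ.notMem_self_rowLen i hm

lemma removeRow_injOn {μ : YoungDiagram} {i i' : ℕ} (h : μ.Removable i) (h' : μ.Removable i')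
    (heq : μ.removeRow i = μ.removeRow i') : i = i' := by
  have hpos : 0 < μ.rowLen i := by unfold Removable at h; omega
  by_contra hne
  have h1 : (i, μ.rowLen i - 1) ∉ μ.removeRow i := by
    rw [mem_removeRow h]; rintro ⟨-, hne2⟩; exact hne2 rfl
  rw [heq, mem_removeRow h'] at h1
  push_neg at h1
  have h2 := h1 (mem_self_rowLen_sub_one hpos)
  simp only [Prod.mk.injEq, not_and] at h2
  exact hne h2.1

end YoungDiagram


namespace YoungDiagram

lemma contentSum_addRow {μ : YoungDiagram} {i : ℕ} (h : μ.Addable i) :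
    (μ.addRow i).contentSum = μ.contentSum + ((μ.rowLen i : ℤ) - i) := by
  unfold contentSum
  rw [cells_addRow h, Finset.sum_insert (by rw [mem_cells]; exact μ.notMem_self_rowLen i)]
  ring

lemma contentSum_removeRow {μ : YoungDiagram} {i : ℕ} (h : μ.Removable i) :
    μ.contentSum = (μ.removeRow i).contentSum + ((μ.rowLen i : ℤ) - 1 - i) := by
  have := contentSum_addRow (addable_removeRow_self h)
  rw [addRow_removeRow_self h, rowLen_removeRow h, if_pos rfl] at this
  have hpos : 0 < μ.rowLen i := by unfold Removable at h; omega
  rw [this]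
  have : ((μ.rowLen i - 1 : ℕ) : ℤ) = (μ.rowLen i : ℤ) - 1 := by omega
  rw [this]

lemma removable_addRow_ne {μ : YoungDiagram} {i k : ℕ} (hA : μ.Addable i) (hik : k ≠ i) :
    (μ.addRow i).Removable k ↔
      μ.Removable k ∧ ¬(i = k + 1 ∧ μ.rowLen k = μ.rowLen i + 1) := by
  unfold Removable
  rw [rowLen_addRow hA, rowLen_addRow hA, if_neg hik]
  split_ifs with h1
  · subst h1
    omega
  · omega

lemma addable_removeRow_ne {μ : YoungDiagram} {i k : ℕ} (hR : μ.Removable k) (hik : i ≠ k) :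
    (μ.removeRow k).Addable i ↔
      μ.Addable i ∧ ¬(i = k + 1 ∧ μ.rowLen k = μ.rowLen i + 1) := by
  have hpos : 0 < μ.rowLen k := by unfold Removable at hR; omega
  unfold Addable
  rw [rowLen_removeRow hR, rowLen_removeRow hR, if_neg hik]
  split_ifs with h1
  · subst h1
    omega
  · omega

lemma removeRow_addRow_comm {μ : YoungDiagram} {i k : ℕ} (hA : μ.Addable i)
    (hR : μ.Removable k) (hik : i ≠ k) (h2 : (μ.addRow i).Removable k)
    (h3 : (μ.removeRow k).Addable i) :
    (μ.addRow i).removeRow k = (μ.removeRow k).addRow i := by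
  have hpos : 0 < μ.rowLen k := by unfold Removable at hR; omega
  ext1
  rw [cells_removeRow h2, cells_addRow hA, cells_addRow h3, cells_removeRow hR,
    rowLen_addRow hA, if_neg hik.symm, rowLen_removeRow hR, if_neg hik]
  ext x
  simp only [Finset.mem_erase, Finset.mem_insert, ne_eq]
  have hne : (i, μ.rowLen i) ≠ (k, μ.rowLen k - 1) := by
    simp only [ne_eq, Prod.mk.injEq, not_and]
    intro hx; exact absurd hx hik
  constructor
  · rintro ⟨hx1, rfl | hx2⟩
    · left; rfl
    · right; exact ⟨hx1, hx2⟩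
  · rintro (rfl | ⟨hx2, hx3⟩)
    · exact ⟨hne, Or.inl rfl⟩
    · exact ⟨hx2, Or.inr hx3⟩

/-- The Finset of addable row indices. -/
def addables (μ : YoungDiagram) : Finset ℕ :=
  (Finset.range (μ.colLen 0 + 1)).filter μ.Addable

/-- The Finset of removable row indices. -/
def removables (μ : YoungDiagram) : Finset ℕ :=
  (Finset.range (μ.colLen 0 + 1)).filter μ.Removable

lemma rowLen_pos_iff {μ : YoungDiagram} {i : ℕ} : 0 < μ.rowLen i ↔ i < μ.colLen 0 := by
  rw [← mem_iff_lt_rowLen, mem_iff_lt_colLen]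

lemma mem_addables {μ : YoungDiagram} {i : ℕ} : i ∈ μ.addables ↔ μ.Addable i := by
  rw [addables, Finset.mem_filter, Finset.mem_range]
  constructor
  · exact fun h => h.2
  · intro h
    refine ⟨?_, h⟩
    rcases h with rfl | h
    · omega
    · have : 0 < μ.rowLen (i - 1) := by omega
      rw [rowLen_pos_iff] at this
      omega

lemma mem_removables {μ : YoungDiagram} {i : ℕ} : i ∈ μ.removables ↔ μ.Removable i := by
  rw [removables, Finset.mem_filter, Finset.mem_range]
  constructor
  · exact fun h => h.2
  · intro h
    refine ⟨?_, h⟩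
    have : 0 < μ.rowLen i := by unfold Removable at h; omega
    rw [rowLen_pos_iff] at this
    omega

end YoungDiagram

namespace YoungDiagram

lemma rowLen_colLen (μ : YoungDiagram) : μ.rowLen (μ.colLen 0) = 0 := by
  by_contra h
  have h2 : 0 < μ.rowLen (μ.colLen 0) := Nat.pos_of_ne_zero h
  rw [rowLen_pos_iff] at h2
  omega

lemma removable_iff_addable_succ {μ : YoungDiagram} {i : ℕ} :
    μ.Removable i ↔ μ.Addable (i + 1) := by
  unfold Removable Addable
  simp [Nat.add_sub_cancel]

/-- Kerov's interlacing identity: the sum of contents of the addable corners equals the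
sum of contents of the removable corners. -/
lemma sum_addables_eq_sum_removables (μ : YoungDiagram) :
    ∑ i ∈ μ.addables, ((μ.rowLen i : ℤ) - i) =
    ∑ i ∈ μ.removables, ((μ.rowLen i : ℤ) - 1 - i) := by
  have h0 : 0 ∈ μ.addables := mem_addables.mpr (Or.inl rfl)
  have step1 : ∑ i ∈ μ.removables, ((μ.rowLen i : ℤ) - 1 - i)
      = ∑ j ∈ μ.addables.erase 0, ((μ.rowLen (j - 1) : ℤ) - j) := by
    apply Finset.sum_nbij' (fun i => i + 1) (fun j => j - 1)
    · intro a ha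
      rw [mem_removables] at ha
      rw [Finset.mem_erase, mem_addables]
      exact ⟨by omega, removable_iff_addable_succ.mp ha⟩
    · intro b hb
      rw [Finset.mem_erase, mem_addables] at hb
      obtain ⟨hb0, hb⟩ := hb
      rw [mem_removables, removable_iff_addable_succ]
      have : b - 1 + 1 = b := by omega
      rw [this]
      exact hb
    · intro a _; omega
    · intro b hb
      rw [Finset.mem_erase] at hb
      omega
    · intro a _
      simp only [Nat.add_sub_cancel]
      push_cast
      ring
  rw [step1, ← Finset.add_sum_erase _ _ h0]
  have hsub : μ.addables.erase 0 ⊆ (Finset.range (μ.colLen 0 + 1)).erase 0 :=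
    Finset.erase_subset_erase _ (Finset.filter_subset _ _)
  have key : ∑ j ∈ μ.addables.erase 0, ((μ.rowLen (j - 1) : ℤ) - μ.rowLen j)
      = (μ.rowLen 0 : ℤ) := by
    rw [Finset.sum_subset hsub ?_]
    · have expand : ∑ j ∈ (Finset.range (μ.colLen 0 + 1)).erase 0,
          ((μ.rowLen (j - 1) : ℤ) - μ.rowLen j)
          = ∑ j ∈ Finset.range (μ.colLen 0 + 1), ((μ.rowLen (j - 1) : ℤ) - μ.rowLen j) := by
        rw [← Finset.add_sum_erase _ _ (Finset.mem_range.mpr (by omega : 0 < μ.colLen 0 + 1))]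
        simp
      rw [expand, Finset.sum_range_succ' (fun j => ((μ.rowLen (j - 1) : ℤ) - μ.rowLen j))]
      simp only [Nat.add_sub_cancel, Nat.zero_sub, sub_self, add_zero]
      rw [Finset.sum_range_sub' (fun j => (μ.rowLen j : ℤ))]
      rw [rowLen_colLen]
      simp
    · intro j hj hja
      rw [Finset.mem_erase, Finset.mem_range] at hj
      have hna : ¬ μ.Addable j := by
        intro h
        exact hja (Finset.mem_erase.mpr ⟨hj.1, mem_addables.mpr h⟩)
      unfold Addable at hna
      push_neg at hna
      have h2 := hna.2
      have h3 := μ.rowLen_anti (j - 1) j (by omega)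
      have : μ.rowLen (j - 1) = μ.rowLen j := by omega
      rw [this]
      ring
  have split : ∑ j ∈ μ.addables.erase 0, ((μ.rowLen (j - 1) : ℤ) - j)
      = ∑ j ∈ μ.addables.erase 0, ((μ.rowLen (j - 1) : ℤ) - μ.rowLen j)
        + ∑ j ∈ μ.addables.erase 0, ((μ.rowLen j : ℤ) - j) := by
    rw [← Finset.sum_add_distrib]
    apply Finset.sum_congr rfl
    intros; ring
  rw [split, key]
  push_cast
  ring

end YoungDiagram

namespace YoungDiagram

/-- The chain predicate used in `sytCount`. -/
def IsSYTChain (n : ℕ) (μ : YoungDiagram) (c : Fin (n + 1) → YoungDiagram) : Prop :=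
  c 0 = ⊥ ∧ c (Fin.last n) = μ ∧
    ∀ i : Fin n, c i.castSucc ≤ c i.succ ∧ (c i.succ).card = (c i.castSucc).card + 1

/-- The number of maximal chains from `⊥` to `μ` of prescribed length. -/
noncomputable def chainCount (n : ℕ) (μ : YoungDiagram) : ℕ :=
  Nat.card {c : Fin (n + 1) → YoungDiagram // IsSYTChain n μ c}

lemma chain_mono {n : ℕ} {μ : YoungDiagram} {c : Fin (n + 1) → YoungDiagram}
    (h : IsSYTChain n μ c) : Monotone c :=
  Fin.monotone_iff_le_succ.mpr fun i => (h.2.2 i).1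

lemma chain_le {n : ℕ} {μ : YoungDiagram} {c : Fin (n + 1) → YoungDiagram}
    (h : IsSYTChain n μ c) (i : Fin (n + 1)) : c i ≤ μ := by
  rw [← h.2.1]
  exact chain_mono h (Fin.le_last i)

instance finite_le (μ : YoungDiagram) : Finite {ν : YoungDiagram // ν ≤ μ} := by
  apply Finite.of_injective (fun ν => (⟨ν.1.cells, Finset.mem_powerset.mpr
    (cells_subset_iff.mpr ν.2)⟩ : {s // s ∈ μ.cells.powerset}))
  intro a b hab
  ext1
  ext1
  simpa using congrArg Subtype.val hab

instance finite_chains (n : ℕ) (μ : YoungDiagram) :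
    Finite {c : Fin (n + 1) → YoungDiagram // IsSYTChain n μ c} := by
  apply Finite.of_injective
    (fun c => (fun i => (⟨c.1 i, chain_le c.2 i⟩ : {ν : YoungDiagram // ν ≤ μ})))
  intro a b hab
  ext1
  funext i
  simpa using congrFun hab i

instance finite_covers (Λ : YoungDiagram) :
    Finite {ν : YoungDiagram // ν ≤ Λ ∧ Λ.card = ν.card + 1} := by
  apply Finite.of_injective (fun ν => (⟨ν.1, ν.2.1⟩ : {ν : YoungDiagram // ν ≤ Λ}))
  intro a b hab
  ext1
  simpa using congrArg Subtype.val hab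

/-- Splitting off the last step of a chain. -/
noncomputable def chainSplit (n : ℕ) (Λ : YoungDiagram) :
    {c : Fin (n + 2) → YoungDiagram // IsSYTChain (n + 1) Λ c} ≃
    (Σ ν : {ν : YoungDiagram // ν ≤ Λ ∧ Λ.card = ν.card + 1},
      {c : Fin (n + 1) → YoungDiagram // IsSYTChain n ν.1 c}) where
  toFun c := by
    refine ⟨⟨c.1 (Fin.last n).castSucc, ?_⟩, ⟨fun i => c.1 i.castSucc, ?_, rfl, ?_⟩⟩
    · have h := c.2.2.2 (Fin.last n)
      rw [Fin.succ_last, c.2.2.1] at h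
      exact h
    · show c.1 (0 : Fin (n + 1)).castSucc = ⊥
      rw [Fin.castSucc_zero']
      exact c.2.1
    · intro i
      have h := c.2.2.2 i.castSucc
      rwa [Fin.succ_castSucc] at h
  invFun p := by
    refine ⟨Fin.snoc p.2.1 Λ, ?_, Fin.snoc_last _ _, ?_⟩
    · rw [show (0 : Fin (n + 2)) = (0 : Fin (n + 1)).castSucc from (Fin.castSucc_zero').symm,
        Fin.snoc_castSucc]
      exact p.2.2.1
    · intro i
      induction i using Fin.lastCases with
      | last =>
        rw [Fin.succ_last, Fin.snoc_last, Fin.snoc_castSucc, p.2.2.2.1]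
        exact p.1.2
      | cast j =>
        rw [Fin.succ_castSucc, Fin.snoc_castSucc, Fin.snoc_castSucc]
        exact p.2.2.2.2 j
  left_inv c := by
    apply Subtype.ext
    funext i
    induction i using Fin.lastCases with
    | last =>
      simp only [Fin.snoc_last]
      exact c.2.2.1.symm
    | cast j => simp only [Fin.snoc_castSucc]
  right_inv p := by
    apply Sigma.subtype_ext
    · apply Subtype.ext
      simp only [Fin.snoc_castSucc]
      exact p.2.2.2.1
    · funext i
      simp only [Fin.snoc_castSucc]

lemma chainCount_succ (n : ℕ) (Λ : YoungDiagram) :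
    chainCount (n + 1) Λ = ∑ k ∈ Λ.removables, chainCount n (Λ.removeRow k) := by
  classical
  haveI : Fintype {ν : YoungDiagram // ν ≤ Λ ∧ Λ.card = ν.card + 1} := Fintype.ofFinite _
  haveI : ∀ μ' : YoungDiagram,
      Fintype {c : Fin (n + 1) → YoungDiagram // IsSYTChain n μ' c} :=
    fun μ' => Fintype.ofFinite _
  rw [chainCount, Nat.card_congr (chainSplit n Λ), Nat.card_eq_fintype_card,
    Fintype.card_sigma]
  rw [Finset.sum_bij (fun (k : ℕ) (hk : k ∈ Λ.removables) =>
    (⟨Λ.removeRow k, removeRow_le, card_removeRow (mem_removables.mp hk)⟩ :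
      {ν : YoungDiagram // ν ≤ Λ ∧ Λ.card = ν.card + 1}))]
  · intro k hk
    exact Finset.mem_univ _
  · intro a ha b hb hab
    exact removeRow_injOn (mem_removables.mp ha) (mem_removables.mp hb)
      (by simpa using congrArg Subtype.val hab)
  · intro ν _
    obtain ⟨k, hk, hν⟩ := cover_iff_removeRow.mp ν.2
    exact ⟨k, mem_removables.mpr hk, by apply Subtype.ext; exact hν.symm⟩
  · intro k hk
    rw [chainCount, Nat.card_eq_fintype_card]

end YoungDiagram


namespace YoungDiagram

lemma sytCount_eq_chainCount (μ : YoungDiagram) : sytCount μ = chainCount μ.card μ := rfl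

lemma sytCount_succ {Λ : YoungDiagram} {n : ℕ} (h : Λ.card = n + 1) :
    sytCount Λ = ∑ k ∈ Λ.removables, sytCount (Λ.removeRow k) := by
  rw [sytCount_eq_chainCount, h, chainCount_succ]
  apply Finset.sum_congr rfl
  intro k hk
  have hR := mem_removables.mp hk
  have hc : (Λ.removeRow k).card = n := by
    have := card_removeRow hR
    omega
  rw [sytCount_eq_chainCount, hc]

/-- The Kerov sum `Σ_Λ dim Λ · c(Λ/μ)` over diagrams obtained by adding a box. -/
noncomputable def kerovSum (μ : YoungDiagram) : ℤ :=
  ∑ i ∈ μ.addables, (sytCount (μ.addRow i) : ℤ) * ((μ.rowLen i : ℤ) - i)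

lemma removables_addRow_erase {μ : YoungDiagram} {i : ℕ} (hA : μ.Addable i) :
    ((μ.addRow i).removables).erase i
      = μ.removables.filter
          (fun k => i ≠ k ∧ ¬(i = k + 1 ∧ μ.rowLen k = μ.rowLen i + 1)) := by
  ext k
  rw [Finset.mem_erase, Finset.mem_filter, mem_removables, mem_removables]
  constructor
  · rintro ⟨hki, hrem⟩
    rw [removable_addRow_ne hA hki] at hrem
    exact ⟨hrem.1, fun h => (hki h.symm).elim, hrem.2⟩
  · rintro ⟨hrem, hik, hcond⟩
    have hki : k ≠ i := fun h => hik h.symm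
    exact ⟨hki, (removable_addRow_ne hA hki).mpr ⟨hrem, hcond⟩⟩

lemma addables_removeRow_erase {μ : YoungDiagram} {k : ℕ} (hR : μ.Removable k) :
    ((μ.removeRow k).addables).erase k
      = μ.addables.filter
          (fun i => i ≠ k ∧ ¬(i = k + 1 ∧ μ.rowLen k = μ.rowLen i + 1)) := by
  ext i
  rw [Finset.mem_erase, Finset.mem_filter, mem_addables, mem_addables]
  constructor
  · rintro ⟨hik, hadd⟩
    rw [addable_removeRow_ne hR hik] at hadd
    exact ⟨hadd.1, hik, hadd.2⟩
  · rintro ⟨hadd, hik, hcond⟩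
    exact ⟨hik, (addable_removeRow_ne hR hik).mpr ⟨hadd, hcond⟩⟩

lemma kerovSum_eq_zero (μ : YoungDiagram) : kerovSum μ = 0 := by
  suffices H : ∀ n (μ : YoungDiagram), μ.card = n → kerovSum μ = 0 from H _ μ rfl
  intro n
  induction n using Nat.strong_induction_on with
  | _ n ih =>
  intro μ hcard
  classical
  set L := μ.rowLen with hL
  -- the two-variable condition
  set cond : ℕ → ℕ → Prop :=
    fun i k => i ≠ k ∧ ¬(i = k + 1 ∧ μ.rowLen k = μ.rowLen i + 1) with hcond
  -- the cross term, as a double sum with `ite`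
  set T : ℤ := ∑ i ∈ μ.addables, ∑ k ∈ μ.removables,
    if cond i k then
      (sytCount ((μ.addRow i).removeRow k) : ℤ) * ((μ.rowLen i : ℤ) - i)
    else 0 with hT
  -- Step 1 : expand `kerovSum μ`
  have step1 : kerovSum μ
      = (sytCount μ : ℤ) * (∑ i ∈ μ.addables, ((μ.rowLen i : ℤ) - i)) + T := by
    rw [kerovSum, Finset.mul_sum, hT, ← Finset.sum_add_distrib]
    apply Finset.sum_congr rfl
    intro i hi
    have hA := mem_addables.mp hi
    have hcnt : (sytCount (μ.addRow i) : ℕ)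
        = sytCount μ + ∑ k ∈ ((μ.addRow i).removables).erase i,
            sytCount ((μ.addRow i).removeRow k) := by
      rw [sytCount_succ (card_addRow hA),
        ← Finset.add_sum_erase _ _ (mem_removables.mpr (removable_addRow_self hA)),
        removeRow_addRow_self hA]
    have hinner : ∑ k ∈ μ.removables,
        (if cond i k then
          (sytCount ((μ.addRow i).removeRow k) : ℤ) * ((μ.rowLen i : ℤ) - i) else 0)
        = (∑ k ∈ ((μ.addRow i).removables).erase i,
            (sytCount ((μ.addRow i).removeRow k) : ℤ)) * ((μ.rowLen i : ℤ) - i) := by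
      rw [removables_addRow_erase hA, Finset.sum_filter, Finset.sum_mul]
      apply Finset.sum_congr rfl
      intro k hk
      split_ifs with h
      · rfl
      · ring
    rw [hinner, hcnt]
    push_cast
    ring
  -- Step 2 : the cross term from below
  have step2 : (0 : ℤ)
      = (sytCount μ : ℤ) * (∑ k ∈ μ.removables, ((μ.rowLen k : ℤ) - 1 - k)) + T := by
    have expand : ∀ k ∈ μ.removables, (0 : ℤ)
        = (sytCount μ : ℤ) * ((μ.rowLen k : ℤ) - 1 - k)
          + ∑ i ∈ μ.addables, (if cond i k then
              (sytCount ((μ.removeRow k).addRow i) : ℤ) * ((μ.rowLen i : ℤ) - i) else 0) := by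
      intro k hk
      have hR := mem_removables.mp hk
      have hcardlt : (μ.removeRow k).card < n := by
        have := card_removeRow hR
        omega
      have h0 := ih _ hcardlt (μ.removeRow k) rfl
      rw [kerovSum, ← Finset.add_sum_erase _ _
        (mem_addables.mpr (addable_removeRow_self hR))] at h0
      rw [addRow_removeRow_self hR, rowLen_removeRow hR, if_pos rfl] at h0
      have hcast : ((μ.rowLen k - 1 : ℕ) : ℤ) = (μ.rowLen k : ℤ) - 1 := by
        have : 0 < μ.rowLen k := by unfold Removable at hR; omega
        omega
      rw [hcast] at h0
      have hinner2 : ∑ i ∈ μ.addables, (if cond i k then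
            (sytCount ((μ.removeRow k).addRow i) : ℤ) * ((μ.rowLen i : ℤ) - i) else 0)
          = ∑ i ∈ ((μ.removeRow k).addables).erase k,
              (sytCount ((μ.removeRow k).addRow i) : ℤ) * (((μ.removeRow k).rowLen i : ℤ) - i) := by
        rw [addables_removeRow_erase hR, Finset.sum_filter]
        apply Finset.sum_congr rfl
        intro i hi
        split_ifs with h
        · rw [rowLen_removeRow hR, if_neg h.1]
        · rfl
      rw [hinner2]
      linarith [h0]
    calc (0 : ℤ) = ∑ k ∈ μ.removables, (0 : ℤ) := by simp
    _ = ∑ k ∈ μ.removables, ((sytCount μ : ℤ) * ((μ.rowLen k : ℤ) - 1 - k)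
          + ∑ i ∈ μ.addables, (if cond i k then
              (sytCount ((μ.removeRow k).addRow i) : ℤ) * ((μ.rowLen i : ℤ) - i) else 0)) := by
        apply Finset.sum_congr rfl
        intro k hk
        exact expand k hk
    _ = (sytCount μ : ℤ) * (∑ k ∈ μ.removables, ((μ.rowLen k : ℤ) - 1 - k)) + T := by
        have hTT : ∑ k ∈ μ.removables, ∑ i ∈ μ.addables, (if cond i k then
              (sytCount ((μ.removeRow k).addRow i) : ℤ) * ((μ.rowLen i : ℤ) - i) else 0)
            = T := by
          rw [hT, Finset.sum_comm]
          apply Finset.sum_congr rfl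
          intro i hi
          apply Finset.sum_congr rfl
          intro k hk
          have hA := mem_addables.mp hi
          have hR := mem_removables.mp hk
          split_ifs with h
          · simp only [hcond] at h
            have h2 : (μ.addRow i).Removable k :=
              (removable_addRow_ne hA (fun hx => h.1 hx.symm)).mpr ⟨hR, h.2⟩
            have h3 : (μ.removeRow k).Addable i :=
              (addable_removeRow_ne hR h.1).mpr ⟨hA, h.2⟩
            rw [removeRow_addRow_comm hA hR h.1 h2 h3]
          · rfl
        rw [Finset.sum_add_distrib, Finset.mul_sum, hTT]
  have lemA := sum_addables_eq_sum_removables μ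
  have e : (sytCount μ : ℤ) * (∑ i ∈ μ.addables, ((μ.rowLen i : ℤ) - i))
      = (sytCount μ : ℤ) * (∑ i ∈ μ.removables, ((μ.rowLen i : ℤ) - 1 - i)) := by
    rw [lemA]
  linarith [step1, step2, e]

end YoungDiagram

/-- Kerov's first moment identity: for any Young diagram `μ`,
`Σ_Λ dim(Λ) · c(Λ/μ) = 0`, the sum being over diagrams `Λ` obtained from `μ` by adding one
box, where `dim` is the number of standard Young tableaux and `c(Λ/μ)` is the content of the
added box (the difference of total contents).  Equivalently, under the Plancherel growth
process, the expected content of the box added to `μ` is `0`. -/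
theorem kerov_first_moment (μ : YoungDiagram) :
    (∑ᶠ Λ ∈ {Λ : YoungDiagram | μ ≤ Λ ∧ Λ.card = μ.card + 1},
      (sytCount Λ : ℤ) * (Λ.contentSum - μ.contentSum)) = 0 := by
  classical
  have hset : {Λ : YoungDiagram | μ ≤ Λ ∧ Λ.card = μ.card + 1}
      = ↑((μ.addables).image μ.addRow) := by
    ext Λ
    simp only [Set.mem_setOf_eq, Finset.coe_image, Set.mem_image, Finset.mem_coe,
      YoungDiagram.mem_addables]
    rw [YoungDiagram.cover_iff_addRow]
    constructor
    · rintro ⟨i, h1, h2⟩; exact ⟨i, h1, h2.symm⟩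
    · rintro ⟨i, h1, h2⟩; exact ⟨i, h1, h2.symm⟩
  rw [hset, finsum_mem_coe_finset,
    Finset.sum_image (fun a ha b hb hab => YoungDiagram.addRow_injOn
      (YoungDiagram.mem_addables.mp ha) (YoungDiagram.mem_addables.mp hb) hab)]
  have hcongr : ∀ i ∈ μ.addables,
      (sytCount (μ.addRow i) : ℤ) * ((μ.addRow i).contentSum - μ.contentSum)
      = (sytCount (μ.addRow i) : ℤ) * ((μ.rowLen i : ℤ) - i) := by
    intro i hi
    rw [YoungDiagram.contentSum_addRow (YoungDiagram.mem_addables.mp hi)]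
    ring
  rw [Finset.sum_congr rfl hcongr]
  exact YoungDiagram.kerovSum_eq_zero μ
end

section
/- Kerov's second moment identity: for any partition λ of j, Σ_Λ (dim(Λ)/((j+1) dim(λ))) · c(Λ/λ)^2 = j, where the sum is over partitions Λ of j+1 obtained from λ by adding a box, and c(Λ/λ) is the content of the added box. -/
open Finset

namespace KerovAux

open Classical in
noncomputable instance : DecidableEq YoungDiagram := Classical.decEq _

lemma rowLen_pos_iff (μ : YoungDiagram) (i : ℕ) : 0 < μ.rowLen i ↔ (i, 0) ∈ μ := by
  rw [YoungDiagram.mem_iff_lt_rowLen]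

lemma rowLen_eq_zero_of_card_le (μ : YoungDiagram) {i : ℕ} (h : μ.card ≤ i) :
    μ.rowLen i = 0 := by
  by_contra hne
  have hpos : 0 < μ.rowLen i := Nat.pos_of_ne_zero hne
  have hmem : (i, 0) ∈ μ := (rowLen_pos_iff μ i).1 hpos
  -- then the column 0 has at least i+1 cells
  have hsub : (Finset.range (i+1)).image (fun a => (a, 0)) ⊆ μ.cells := by
    intro x hx
    simp only [Finset.mem_image, Finset.mem_range] at hx
    obtain ⟨a, ha, rfl⟩ := hx
    exact μ.up_left_mem (Nat.le_of_lt_succ ha) le_rfl hmem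
  have hcard : i + 1 ≤ μ.card := by
    have := Finset.card_le_card hsub
    rwa [Finset.card_image_of_injective _ (fun a b hab => by simpa using hab),
      Finset.card_range] at this
  omega

/-- `μ.card` is the sum of row lengths. -/
lemma card_eq_sum_rowLen (μ : YoungDiagram) {n : ℕ} (h : μ.card ≤ n) :
    μ.card = ∑ i ∈ Finset.range n, μ.rowLen i := by
  classical
  have : μ.cells = (Finset.range n).biUnion (fun i => μ.row i) := by
    ext x
    simp only [Finset.mem_biUnion, Finset.mem_range, YoungDiagram.mem_row_iff]
    constructor
    · intro hx
      refine ⟨x.1, ?_, by simpa using hx, rfl⟩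
      by_contra hle
      push_neg at hle
      have h0 : μ.rowLen x.1 = 0 := rowLen_eq_zero_of_card_le μ (le_trans h hle)
      have := YoungDiagram.mem_iff_lt_rowLen.1 (show (x.1, x.2) ∈ μ by simpa using hx)
      omega
    · rintro ⟨i, _, hx, _⟩
      simpa using hx
  rw [show μ.card = μ.cells.card from rfl, this, Finset.card_biUnion]
  · exact Finset.sum_congr rfl fun i _ => (μ.rowLen_eq_card (i := i)).symm
  · intro a _ b _ hab
    intro s hsa hsb x hx
    have h1 := hsa hx; have h2 := hsb hx
    rw [YoungDiagram.mem_row_iff] at h1 h2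
    exact absurd (h1.2 ▸ h2.2) (by omega)

end KerovAux

namespace KerovAux

/-- One can add a box at the end of row `i`. -/
def Addable (μ : YoungDiagram) (i : ℕ) : Prop :=
  i = 0 ∨ μ.rowLen i < μ.rowLen (i - 1)

/-- One can remove the last box of row `i`. -/
def Removable (μ : YoungDiagram) (i : ℕ) : Prop :=
  μ.rowLen (i + 1) < μ.rowLen i

instance (μ : YoungDiagram) : DecidablePred (Addable μ) := fun _ => by
  unfold Addable; infer_instance

instance (μ : YoungDiagram) : DecidablePred (Removable μ) := fun _ => by
  unfold Removable; infer_instance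

lemma isLowerSet_insert {μ : YoungDiagram} {i : ℕ} (h : Addable μ i) :
    IsLowerSet (insert (i, μ.rowLen i) (μ.cells : Set (ℕ × ℕ))) := by
  intro x y hyx hx
  rcases hx with rfl | hx
  · obtain ⟨a, b⟩ := y
    have ha : a ≤ i := hyx.1
    have hb : b ≤ μ.rowLen i := hyx.2
    by_cases hai : a = i
    · subst hai
      rcases Nat.lt_or_ge b (μ.rowLen a) with hlt | hge
      · exact Or.inr (by exact_mod_cast YoungDiagram.mem_iff_lt_rowLen.2 hlt)
      · exact Or.inl (by rw [Nat.le_antisymm hge hb])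
    · right
      have hai' : a < i := lt_of_le_of_ne ha hai
      rcases h with h0 | h
      · omega
      · have hmono : μ.rowLen (i - 1) ≤ μ.rowLen a := μ.rowLen_anti a (i-1) (by omega)
        exact_mod_cast YoungDiagram.mem_iff_lt_rowLen.2 (by omega)
  · exact Or.inr (μ.isLowerSet hyx hx)

/-- Add a box at the end of row `i` (when possible, else return `μ`). -/
noncomputable def grow (μ : YoungDiagram) (i : ℕ) : YoungDiagram :=
  if h : Addable μ i then ⟨insert (i, μ.rowLen i) μ.cells, by
    simpa using isLowerSet_insert h⟩ else μ

lemma grow_cells {μ : YoungDiagram} {i : ℕ} (h : Addable μ i) :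
    (grow μ i).cells = insert (i, μ.rowLen i) μ.cells := by
  rw [grow, dif_pos h]

lemma mem_grow {μ : YoungDiagram} {i : ℕ} (h : Addable μ i) {x : ℕ × ℕ} :
    x ∈ grow μ i ↔ x = (i, μ.rowLen i) ∨ x ∈ μ := by
  rw [← YoungDiagram.mem_cells, grow_cells h, Finset.mem_insert]; rfl

lemma not_mem_self {μ : YoungDiagram} (i : ℕ) : (i, μ.rowLen i) ∉ μ := by
  rw [YoungDiagram.mem_iff_lt_rowLen]; omega

lemma card_grow {μ : YoungDiagram} {i : ℕ} (h : Addable μ i) :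
    (grow μ i).card = μ.card + 1 := by
  show (grow μ i).cells.card = μ.cells.card + 1
  rw [grow_cells h, Finset.card_insert_of_notMem (by simpa using not_mem_self i)]

lemma rowLen_grow {μ : YoungDiagram} {i : ℕ} (h : Addable μ i) (j : ℕ) :
    (grow μ i).rowLen j = if j = i then μ.rowLen i + 1 else μ.rowLen j := by
  have key : ∀ b, (j, b) ∈ grow μ i ↔ (j = i ∧ b = μ.rowLen i) ∨ b < μ.rowLen j := by
    intro b
    rw [mem_grow h, YoungDiagram.mem_iff_lt_rowLen]
    constructor
    · rintro (hb | hb)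
      · exact Or.inl ⟨congrArg Prod.fst hb, congrArg Prod.snd hb⟩
      · exact Or.inr hb
    · rintro (⟨rfl, rfl⟩ | hb)
      · exact Or.inl rfl
      · exact Or.inr hb
  split_ifs with hj
  · subst hj
    have h1 : (j, μ.rowLen j) ∈ grow μ j := (key _).2 (Or.inl ⟨rfl, rfl⟩)
    have h2 : (j, μ.rowLen j + 1) ∉ grow μ j := by
      intro hc
      rcases (key _).1 hc with ⟨_, hb⟩ | hb <;> omega
    rw [YoungDiagram.mem_iff_lt_rowLen] at h1 h2
    omega
  · rcases Nat.eq_zero_or_pos (μ.rowLen j) with h0 | hpos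
    · rw [h0]
      by_contra hne
      have hmem : (j, 0) ∈ grow μ i := YoungDiagram.mem_iff_lt_rowLen.2 (by omega)
      rcases (key _).1 hmem with ⟨hji, _⟩ | hb
      · exact hj hji
      · omega
    · have h1 : (j, μ.rowLen j - 1) ∈ grow μ i := (key _).2 (Or.inr (by omega))
      have h2 : (j, μ.rowLen j) ∉ grow μ i := by
        intro hc
        rcases (key _).1 hc with ⟨hji, _⟩ | hb
        · exact hj hji
        · omega
      rw [YoungDiagram.mem_iff_lt_rowLen] at h1 h2
      omega
end KerovAux
namespace KerovAux

lemma isLowerSet_erase {μ : YoungDiagram} {i : ℕ} (h : Removable μ i) :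
    IsLowerSet (↑(μ.cells.erase (i, μ.rowLen i - 1)) : Set (ℕ × ℕ)) := by
  intro x y hyx hx
  simp only [Finset.coe_erase, Set.mem_diff, Set.mem_singleton_iff] at hx ⊢
  refine ⟨μ.isLowerSet hyx hx.1, ?_⟩
  rintro rfl
  obtain ⟨c, d⟩ := x
  have hc : i ≤ c := hyx.1
  have hd : μ.rowLen i - 1 ≤ d := hyx.2
  have hmem : d < μ.rowLen c := YoungDiagram.mem_iff_lt_rowLen.1 hx.1
  have hd2 : μ.rowLen c ≤ μ.rowLen i := μ.rowLen_anti i c hc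
  have hci : c = i := by
    by_contra hne
    have : μ.rowLen c ≤ μ.rowLen (i+1) := μ.rowLen_anti (i+1) c (by omega)
    unfold Removable at h
    omega
  subst hci
  have hd3 : d = μ.rowLen c - 1 := by omega
  exact hx.2 (by rw [hd3])

/-- Remove the last box of row `i` (when possible, else return `μ`). -/
noncomputable def shrink (μ : YoungDiagram) (i : ℕ) : YoungDiagram :=
  if h : Removable μ i then ⟨μ.cells.erase (i, μ.rowLen i - 1), isLowerSet_erase h⟩ else μ

lemma shrink_cells {μ : YoungDiagram} {i : ℕ} (h : Removable μ i) :
    (shrink μ i).cells = μ.cells.erase (i, μ.rowLen i - 1) := by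
  rw [shrink, dif_pos h]

lemma mem_shrink {μ : YoungDiagram} {i : ℕ} (h : Removable μ i) {x : ℕ × ℕ} :
    x ∈ shrink μ i ↔ x ≠ (i, μ.rowLen i - 1) ∧ x ∈ μ := by
  rw [← YoungDiagram.mem_cells, shrink_cells h, Finset.mem_erase]; rfl

lemma rowLen_pos_of_removable {μ : YoungDiagram} {i : ℕ} (h : Removable μ i) :
    0 < μ.rowLen i := by unfold Removable at h; omega

lemma card_shrink {μ : YoungDiagram} {i : ℕ} (h : Removable μ i) :
    (shrink μ i).card = μ.card - 1 := by
  show (shrink μ i).cells.card = μ.cells.card - 1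
  rw [shrink_cells h, Finset.card_erase_of_mem]
  rw [YoungDiagram.mem_cells, YoungDiagram.mem_iff_lt_rowLen]
  have := rowLen_pos_of_removable h
  omega

lemma card_pos_of_removable {μ : YoungDiagram} {i : ℕ} (h : Removable μ i) :
    0 < μ.card := by
  have : (i, 0) ∈ μ.cells := by
    rw [YoungDiagram.mem_cells, YoungDiagram.mem_iff_lt_rowLen]
    exact rowLen_pos_of_removable h
  exact Finset.card_pos.2 ⟨_, this⟩

lemma rowLen_shrink {μ : YoungDiagram} {i : ℕ} (h : Removable μ i) (j : ℕ) :
    (shrink μ i).rowLen j = if j = i then μ.rowLen i - 1 else μ.rowLen j := by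
  have key : ∀ b, (j, b) ∈ shrink μ i ↔ b < μ.rowLen j ∧ ¬(j = i ∧ b = μ.rowLen i - 1) := by
    intro b
    rw [mem_shrink h, YoungDiagram.mem_iff_lt_rowLen]
    constructor
    · rintro ⟨hne, hb⟩
      refine ⟨hb, ?_⟩
      rintro ⟨rfl, rfl⟩
      exact hne rfl
    · rintro ⟨hb, hne⟩
      exact ⟨fun hc => hne ⟨congrArg Prod.fst hc, congrArg Prod.snd hc⟩, hb⟩
  have hpos := rowLen_pos_of_removable h
  split_ifs with hj
  · subst hj
    rcases Nat.eq_zero_or_pos (μ.rowLen j - 1) with h0 | hp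
    · rw [h0]
      by_contra hne
      have hmem : (j, 0) ∈ shrink μ j := YoungDiagram.mem_iff_lt_rowLen.2 (by omega)
      have := (key 0).1 hmem
      omega
    · have h1 : (j, μ.rowLen j - 2) ∈ shrink μ j := (key _).2 (by omega)
      have h2 : (j, μ.rowLen j - 1) ∉ shrink μ j := fun hc => by
        have := (key _).1 hc; omega
      rw [YoungDiagram.mem_iff_lt_rowLen] at h1 h2
      omega
  · rcases Nat.eq_zero_or_pos (μ.rowLen j) with h0 | hp
    · rw [h0]
      by_contra hne
      have hmem : (j, 0) ∈ shrink μ i := YoungDiagram.mem_iff_lt_rowLen.2 (by omega)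
      have := (key 0).1 hmem
      omega
    · have h1 : (j, μ.rowLen j - 1) ∈ shrink μ i := (key _).2 (by omega)
      have h2 : (j, μ.rowLen j) ∉ shrink μ i := fun hc => by
        have := (key _).1 hc; omega
      rw [YoungDiagram.mem_iff_lt_rowLen] at h1 h2
      omega

lemma eq_of_rowLen_eq {μ ν : YoungDiagram} (h : ∀ i, μ.rowLen i = ν.rowLen i) : μ = ν := by
  ext x
  obtain ⟨i, j⟩ := x
  rw [show ((i,j) ∈ μ.cells) ↔ (i,j) ∈ μ from Iff.rfl,
    show ((i,j) ∈ ν.cells) ↔ (i,j) ∈ ν from Iff.rfl,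
    YoungDiagram.mem_iff_lt_rowLen, YoungDiagram.mem_iff_lt_rowLen, h i]

end KerovAux
namespace KerovAux

lemma removable_grow_self {μ : YoungDiagram} {i : ℕ} (h : Addable μ i) :
    Removable (grow μ i) i := by
  unfold Removable
  rw [rowLen_grow h, rowLen_grow h, if_pos rfl, if_neg (by omega)]
  have := μ.rowLen_anti i (i+1) (by omega)
  omega

lemma shrink_grow {μ : YoungDiagram} {i : ℕ} (h : Addable μ i) :
    shrink (grow μ i) i = μ := by
  apply eq_of_rowLen_eq
  intro j
  rw [rowLen_shrink (removable_grow_self h), rowLen_grow h, rowLen_grow h]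
  split_ifs <;> subst_vars <;> omega

lemma addable_shrink_self {μ : YoungDiagram} {k : ℕ} (h : Removable μ k) :
    Addable (shrink μ k) k := by
  rcases Nat.eq_zero_or_pos k with rfl | hk
  · exact Or.inl rfl
  · right
    rw [rowLen_shrink h, rowLen_shrink h, if_pos rfl, if_neg (by omega)]
    have := μ.rowLen_anti (k-1) k (by omega)
    have := rowLen_pos_of_removable h
    omega

lemma grow_shrink {μ : YoungDiagram} {k : ℕ} (h : Removable μ k) :
    grow (shrink μ k) k = μ := by
  apply eq_of_rowLen_eq
  intro j
  rw [rowLen_grow (addable_shrink_self h), rowLen_shrink h, rowLen_shrink h]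
  have := rowLen_pos_of_removable h
  split_ifs <;> subst_vars <;> omega

lemma pair_iff {μ : YoungDiagram} {i k : ℕ} (hik : i ≠ k) :
    (Addable μ i ∧ Removable (grow μ i) k) ↔
      (Removable μ k ∧ Addable (shrink μ k) i) := by
  constructor
  · rintro ⟨hA, hR⟩
    unfold Removable at hR
    rw [rowLen_grow hA, rowLen_grow hA, if_neg (Ne.symm hik)] at hR
    by_cases h1 : k + 1 = i
    · rw [if_pos h1] at hR
      have hRk : Removable μ k := by
        unfold Removable
        have := μ.rowLen_anti i (k+1) (by omega)
        omega
      refine ⟨hRk, Or.inr ?_⟩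
      rw [rowLen_shrink hRk, rowLen_shrink hRk, if_neg hik, if_pos (by omega)]
      omega
    · rw [if_neg h1] at hR
      refine ⟨hR, ?_⟩
      rcases hA with rfl | hA'
      · exact Or.inl rfl
      · refine Or.inr ?_
        rw [rowLen_shrink hR, rowLen_shrink hR, if_neg hik]
        by_cases h2 : i - 1 = k
        · rcases Nat.eq_zero_or_pos i with rfl | hi0
          · rw [if_pos h2]
            have := rowLen_pos_of_removable hR
            have := μ.rowLen_anti 0 k (by omega)
            omega
          · exact absurd (by omega : k + 1 = i) h1
        · rw [if_neg h2]
          exact hA'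
  · rintro ⟨hRk, hA2⟩
    have hA : Addable μ i := by
      rcases hA2 with rfl | hA2'
      · exact Or.inl rfl
      · rw [rowLen_shrink hRk, rowLen_shrink hRk, if_neg hik] at hA2'
        right
        by_cases h2 : i - 1 = k
        · rw [if_pos h2] at hA2'
          have := rowLen_pos_of_removable hRk
          rw [h2]
          omega
        · rwa [if_neg h2] at hA2'
    refine ⟨hA, ?_⟩
    unfold Removable
    rw [rowLen_grow hA, rowLen_grow hA, if_neg (Ne.symm hik)]
    by_cases h1 : k + 1 = i
    · rw [if_pos h1]
      rcases hA2 with rfl | hA2'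
      · omega
      · rw [rowLen_shrink hRk, rowLen_shrink hRk, if_neg hik, if_pos (by omega)] at hA2'
        have := rowLen_pos_of_removable hRk
        omega
    · rw [if_neg h1]
      exact hRk

lemma grow_shrink_comm {μ : YoungDiagram} {i k : ℕ} (hik : i ≠ k)
    (hA : Addable μ i) (hR : Removable (grow μ i) k) :
    shrink (grow μ i) k = grow (shrink μ k) i := by
  obtain ⟨hRk, hA2⟩ := (pair_iff hik).1 ⟨hA, hR⟩
  apply eq_of_rowLen_eq
  intro j
  rw [rowLen_shrink hR, rowLen_grow hA, rowLen_grow hA,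
    rowLen_grow hA2, rowLen_shrink hRk, rowLen_shrink hRk]
  have h1 := rowLen_pos_of_removable hRk
  split_ifs <;> subst_vars <;> omega

lemma addable_le {μ : YoungDiagram} {i : ℕ} (h : Addable μ i) : i ≤ μ.card := by
  rcases h with rfl | h'
  · exact Nat.zero_le _
  · by_contra hc
    have h0 : μ.rowLen (i - 1) = 0 := rowLen_eq_zero_of_card_le μ (by omega)
    omega

lemma removable_lt {μ : YoungDiagram} {i : ℕ} (h : Removable μ i) : i < μ.card := by
  by_contra hc
  unfold Removable at h
  have h0 : μ.rowLen i = 0 := rowLen_eq_zero_of_card_le μ (by omega)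
  omega

lemma contentSum_grow {μ : YoungDiagram} {i : ℕ} (h : Addable μ i) :
    (grow μ i).contentSum = μ.contentSum + ((μ.rowLen i : ℤ) - (i : ℤ)) := by
  unfold YoungDiagram.contentSum
  rw [grow_cells h, Finset.sum_insert (by simpa using not_mem_self i)]
  ring

end KerovAux
namespace KerovAux

/-- Rows where a box can be added. -/
noncomputable def AF (μ : YoungDiagram) : Finset ℕ :=
  (Finset.range (μ.card + 1)).filter (Addable μ)

/-- Rows where a box can be removed. -/
noncomputable def RF (μ : YoungDiagram) : Finset ℕ :=
  (Finset.range (μ.card + 1)).filter (Removable μ)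

lemma mem_AF {μ : YoungDiagram} {i : ℕ} : i ∈ AF μ ↔ Addable μ i := by
  unfold AF
  simp only [Finset.mem_filter, Finset.mem_range]
  exact ⟨fun h => h.2, fun h => ⟨by have := addable_le h; omega, h⟩⟩

lemma mem_RF {μ : YoungDiagram} {i : ℕ} : i ∈ RF μ ↔ Removable μ i := by
  unfold RF
  simp only [Finset.mem_filter, Finset.mem_range]
  exact ⟨fun h => h.2, fun h => ⟨by have := removable_lt h; omega, h⟩⟩

lemma addable_succ_iff {μ : YoungDiagram} {j : ℕ} :
    Addable μ (j + 1) ↔ Removable μ j := by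
  unfold Addable Removable
  simp

lemma card_eq_zero_iff {μ : YoungDiagram} : μ.card = 0 ↔ μ = ⊥ := by
  constructor
  · intro h
    ext x
    simp only [Finset.card_eq_zero] at h
    simp [h, YoungDiagram.cells_bot]
  · rintro rfl
    simp [show (⊥ : YoungDiagram).card = (∅ : Finset (ℕ × ℕ)).card from rfl]

lemma exists_removable {μ : YoungDiagram} (h : 0 < μ.card) :
    Removable μ (μ.colLen 0 - 1) := by
  have h00 : (0, 0) ∈ μ := by
    obtain ⟨⟨a, b⟩, hx⟩ := Finset.card_pos.1 h
    exact μ.up_left_mem (Nat.zero_le _) (Nat.zero_le _) hx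
  have hm : 0 < μ.colLen 0 := YoungDiagram.mem_iff_lt_colLen.1 h00
  set m := μ.colLen 0 with hmdef
  have h1 : 0 < μ.rowLen (m - 1) := by
    rw [rowLen_pos_iff]
    rw [YoungDiagram.mem_iff_lt_colLen]
    omega
  have h2 : μ.rowLen m = 0 := by
    by_contra hc
    have : (m, 0) ∈ μ := (rowLen_pos_iff μ m).1 (Nat.pos_of_ne_zero hc)
    rw [YoungDiagram.mem_iff_lt_colLen] at this
    omega
  unfold Removable
  rw [show m - 1 + 1 = m by omega]
  omega

open Classical in
/-- The number of standard Young tableaux of shape `μ` if `μ.card = k`, else `0`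
(as a rational number), defined by the down-recursion. -/
noncomputable def e : ℕ → YoungDiagram → ℚ
  | 0, μ => if μ = ⊥ then 1 else 0
  | k+1, μ => ∑ j ∈ RF μ, e k (shrink μ j)

lemma e_succ (k : ℕ) (μ : YoungDiagram) : e (k+1) μ = ∑ j ∈ RF μ, e k (shrink μ j) := rfl

lemma e_nonneg (k : ℕ) (μ : YoungDiagram) : 0 ≤ e k μ := by
  induction k generalizing μ with
  | zero => unfold e; split <;> norm_num
  | succ k ih => rw [e_succ]; exact Finset.sum_nonneg fun j _ => ih _

lemma e_eq_zero (k : ℕ) (μ : YoungDiagram) (h : μ.card ≠ k) : e k μ = 0 := by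
  induction k generalizing μ with
  | zero =>
    unfold e
    rw [if_neg]
    intro hb
    exact h (hb ▸ card_eq_zero_iff.2 rfl)
  | succ k ih =>
    rw [e_succ]
    refine Finset.sum_eq_zero fun j hj => ?_
    have hr := mem_RF.1 hj
    refine ih _ ?_
    rw [card_shrink hr]
    have := card_pos_of_removable hr
    omega

lemma e_pos (μ : YoungDiagram) : 0 < e μ.card μ := by
  suffices h : ∀ k μ, μ.card = k → (0:ℚ) < e k μ from h _ μ rfl
  intro k
  induction k with
  | zero =>
    intro μ hμ
    unfold e
    rw [if_pos (card_eq_zero_iff.1 hμ)]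
    norm_num
  | succ k ih =>
    intro μ hμ
    rw [e_succ]
    have hrem := exists_removable (μ := μ) (by omega)
    refine Finset.sum_pos' (fun j _ => e_nonneg _ _) ⟨_, mem_RF.2 hrem, ?_⟩
    refine ih _ ?_
    rw [card_shrink hrem]
    omega

/-- The key local identity: the sum of squared contents of addable corners minus that of
removable corners equals `2·|μ|`. -/
lemma fact3 (μ : YoungDiagram) :
    ∑ i ∈ AF μ, ((μ.rowLen i : ℚ) - i)^2
      = ∑ j ∈ RF μ, ((μ.rowLen j : ℚ) - 1 - j)^2 + 2 * μ.card := by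
  set m := μ.card with hm
  set A : ℕ → ℚ := fun i => ((μ.rowLen i : ℚ) - i) with hA
  have hsA : ∑ i ∈ AF μ, (A i)^2
      = (A 0)^2 + ∑ j ∈ Finset.range m, (if Removable μ j then (A (j+1))^2 else 0) := by
    unfold AF
    rw [Finset.sum_filter, Finset.sum_range_succ' _ m]
    rw [if_pos (show Addable μ 0 from Or.inl rfl)]
    rw [add_comm]
    congr 1
    refine Finset.sum_congr rfl fun j _ => ?_
    by_cases hr : Removable μ j
    · rw [if_pos (addable_succ_iff.2 hr), if_pos hr]
    · rw [if_neg (fun hc => hr (addable_succ_iff.1 hc)), if_neg hr]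
  have hsR : ∑ j ∈ RF μ, (A j - 1)^2
      = ∑ j ∈ Finset.range m, (if Removable μ j then (A j - 1)^2 else 0) := by
    unfold RF
    rw [Finset.sum_filter, Finset.sum_range_succ]
    rw [if_neg (fun hc => by have := removable_lt hc; omega)]
    rw [add_zero]
  have hterm : ∀ j, (if Removable μ j then (A (j+1))^2 else 0)
      = (if Removable μ j then (A j - 1)^2 else 0) + ((A (j+1))^2 - (A j - 1)^2) := by
    intro j
    by_cases hr : Removable μ j
    · rw [if_pos hr, if_pos hr]; ring
    · rw [if_neg hr, if_neg hr]
      have h1 : μ.rowLen (j+1) ≤ μ.rowLen j := μ.rowLen_anti j (j+1) (by omega)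
      have h2 : μ.rowLen j ≤ μ.rowLen (j+1) := by
        unfold Removable at hr; omega
      have h3 : A (j+1) = A j - 1 := by
        simp only [hA]
        have : μ.rowLen (j+1) = μ.rowLen j := le_antisymm h1 h2
        rw [this]
        push_cast
        ring
      rw [h3]; ring
  have htel : ∑ j ∈ Finset.range m, ((A (j+1))^2 - (A j)^2) = (A m)^2 - (A 0)^2 :=
    Finset.sum_range_sub (fun j => (A j)^2) m
  have hgauss : ∀ n : ℕ, ∑ j ∈ Finset.range n, (j:ℚ) = n * (n-1) / 2 := by
    intro n
    induction n with
    | zero => simp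
    | succ n ih => rw [Finset.sum_range_succ, ih]; push_cast; ring
  have hrsum : ∑ j ∈ Finset.range m, (μ.rowLen j : ℚ) = m := by
    have := card_eq_sum_rowLen μ (le_refl m)
    exact_mod_cast congrArg (Nat.cast (R := ℚ)) this.symm
  have hAsum : ∑ j ∈ Finset.range m, A j = m - m * (m-1) / 2 := by
    simp only [hA]
    rw [Finset.sum_sub_distrib, hrsum, hgauss]
  have hAm : A m = -(m:ℚ) := by
    simp only [hA]
    rw [rowLen_eq_zero_of_card_le μ (le_refl m)]
    push_cast; ring
  have hsplit : ∑ j ∈ Finset.range m, ((A (j+1))^2 - (A j - 1)^2)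
      = (∑ j ∈ Finset.range m, ((A (j+1))^2 - (A j)^2))
        + (∑ j ∈ Finset.range m, (2 * A j - 1)) := by
    rw [← Finset.sum_add_distrib]
    exact Finset.sum_congr rfl fun j _ => by ring
  have hlin : ∑ j ∈ Finset.range m, (2 * A j - 1) = 2 * (∑ j ∈ Finset.range m, A j) - m := by
    rw [Finset.sum_sub_distrib, ← Finset.mul_sum]
    simp
  have hfin : ∑ j ∈ RF μ, ((μ.rowLen j : ℚ) - 1 - (j:ℚ))^2 = ∑ j ∈ RF μ, (A j - 1)^2 :=
    Finset.sum_congr rfl fun j _ => by simp only [hA]; ring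
  rw [hfin]
  calc ∑ i ∈ AF μ, (A i)^2
      = (A 0)^2 + ∑ j ∈ Finset.range m, (if Removable μ j then (A (j+1))^2 else 0) := hsA
    _ = (A 0)^2 + ∑ j ∈ Finset.range m,
          ((if Removable μ j then (A j - 1)^2 else 0) + ((A (j+1))^2 - (A j - 1)^2)) := by
        rw [Finset.sum_congr rfl fun j _ => hterm j]
    _ = (A 0)^2 + (∑ j ∈ Finset.range m, (if Removable μ j then (A j - 1)^2 else 0))
          + (∑ j ∈ Finset.range m, ((A (j+1))^2 - (A j - 1)^2)) := by
        rw [Finset.sum_add_distrib]; ring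
    _ = ∑ j ∈ RF μ, (A j - 1)^2 + 2 * m := by
        rw [← hsR, hsplit, htel, hlin, hAsum, hAm]
        ring

end KerovAux
namespace KerovAux

/-- Second-moment weighted down-transition sum. -/
noncomputable def Dw (k : ℕ) (μ : YoungDiagram) : ℚ :=
  ∑ i ∈ AF μ, ((μ.rowLen i : ℚ) - i)^2 * e k (grow μ i)

lemma Dw_rec (k : ℕ) (μ : YoungDiagram) :
    Dw (k+1) μ = (∑ j ∈ RF μ, Dw k (shrink μ j)) + 2 * μ.card * e k μ := by
  classical
  set N := μ.card + 2 with hN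
  have hAF' : AF μ = (Finset.range N).filter (Addable μ) := by
    ext i
    simp only [mem_AF, Finset.mem_filter, Finset.mem_range]
    exact ⟨fun h => ⟨by have := addable_le h; omega, h⟩, fun h => h.2⟩
  have hRFerase : ∀ i, Addable μ i →
      (RF (grow μ i)).erase i
        = (Finset.range N).filter (fun j => i ≠ j ∧ Removable (grow μ i) j) := by
    intro i hA
    ext j
    simp only [Finset.mem_erase, mem_RF, Finset.mem_filter, Finset.mem_range]
    constructor
    · rintro ⟨hji, hRem⟩
      have := removable_lt hRem
      rw [card_grow hA] at this
      exact ⟨by omega, Ne.symm hji, hRem⟩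
    · rintro ⟨_, hij, hRem⟩
      exact ⟨Ne.symm hij, hRem⟩
  have hAFerase : ∀ j, Removable μ j →
      (AF (shrink μ j)).erase j
        = (Finset.range N).filter (fun i => i ≠ j ∧ Addable (shrink μ j) i) := by
    intro j hR
    ext i
    simp only [Finset.mem_erase, mem_AF, Finset.mem_filter, Finset.mem_range]
    constructor
    · rintro ⟨hij, hAdd⟩
      have h1 := addable_le hAdd
      have h2 : (shrink μ j).card ≤ μ.card := by
        rw [card_shrink hR]; omega
      exact ⟨by omega, hij, hAdd⟩
    · rintro ⟨_, hij, hAdd⟩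
      exact ⟨hij, hAdd⟩
  -- step 1 : peel off the diagonal term
  have step1 : Dw (k+1) μ = (∑ i ∈ AF μ, ((μ.rowLen i : ℚ) - i)^2 * e k μ)
      + ∑ i ∈ AF μ, ((μ.rowLen i : ℚ) - i)^2 *
          ∑ j ∈ (RF (grow μ i)).erase i, e k (shrink (grow μ i) j) := by
    rw [Dw, ← Finset.sum_add_distrib]
    refine Finset.sum_congr rfl fun i hi => ?_
    have hA := mem_AF.1 hi
    rw [e_succ, ← Finset.add_sum_erase _ _ (mem_RF.2 (removable_grow_self hA)),
      shrink_grow hA]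
    ring
  -- the double-sum swap
  have swap : (∑ i ∈ Finset.range N, ∑ j ∈ Finset.range N,
        if i ≠ j ∧ Addable μ i ∧ Removable (grow μ i) j
        then ((μ.rowLen i : ℚ) - i)^2 * e k (shrink (grow μ i) j) else 0)
      = ∑ j ∈ Finset.range N, ∑ i ∈ Finset.range N,
        if i ≠ j ∧ Removable μ j ∧ Addable (shrink μ j) i
        then (((shrink μ j).rowLen i : ℚ) - i)^2 * e k (grow (shrink μ j) i) else 0 := by
    rw [Finset.sum_comm]
    refine Finset.sum_congr rfl fun j _ => Finset.sum_congr rfl fun i _ => ?_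
    by_cases hij : i = j
    · rw [if_neg (by tauto), if_neg (by tauto)]
    · by_cases hc : Addable μ i ∧ Removable (grow μ i) j
      · have hc2 := (pair_iff hij).1 hc
        rw [if_pos ⟨hij, hc⟩, if_pos ⟨hij, hc2⟩, grow_shrink_comm hij hc.1 hc.2,
          rowLen_shrink hc2.1, if_neg hij]
      · rw [if_neg (by tauto), if_neg (fun hh => hc ((pair_iff hij).2 ⟨hh.2.1, hh.2.2⟩))]
  -- convert the left double sum
  have convA : (∑ i ∈ AF μ, ((μ.rowLen i : ℚ) - i)^2 *
          ∑ j ∈ (RF (grow μ i)).erase i, e k (shrink (grow μ i) j))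
      = ∑ i ∈ Finset.range N, ∑ j ∈ Finset.range N,
        if i ≠ j ∧ Addable μ i ∧ Removable (grow μ i) j
        then ((μ.rowLen i : ℚ) - i)^2 * e k (shrink (grow μ i) j) else 0 := by
    rw [hAF', Finset.sum_filter]
    refine Finset.sum_congr rfl fun i _ => ?_
    by_cases hA : Addable μ i
    · rw [if_pos hA, hRFerase i hA, Finset.sum_filter, Finset.mul_sum]
      refine Finset.sum_congr rfl fun j _ => ?_
      rw [mul_ite, mul_zero]
      exact if_congr (by tauto) rfl rfl
    · rw [if_neg hA]
      exact (Finset.sum_eq_zero fun j _ => if_neg (by tauto)).symm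
  -- convert the right double sum
  have convR : (∑ j ∈ Finset.range N, ∑ i ∈ Finset.range N,
        if i ≠ j ∧ Removable μ j ∧ Addable (shrink μ j) i
        then (((shrink μ j).rowLen i : ℚ) - i)^2 * e k (grow (shrink μ j) i) else 0)
      = ∑ j ∈ RF μ, (Dw k (shrink μ j)
          - ((μ.rowLen j : ℚ) - 1 - j)^2 * e k μ) := by
    have hRF' : RF μ = (Finset.range N).filter (Removable μ) := by
      ext j
      simp only [mem_RF, Finset.mem_filter, Finset.mem_range]
      exact ⟨fun h => ⟨by have := removable_lt h; omega, h⟩, fun h => h.2⟩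
    rw [hRF', Finset.sum_filter]
    refine Finset.sum_congr rfl fun j _ => ?_
    by_cases hR : Removable μ j
    · rw [if_pos hR]
      have hsum : (∑ i ∈ Finset.range N,
          if i ≠ j ∧ Removable μ j ∧ Addable (shrink μ j) i
          then (((shrink μ j).rowLen i : ℚ) - i)^2 * e k (grow (shrink μ j) i) else 0)
          = ∑ i ∈ (AF (shrink μ j)).erase j,
              (((shrink μ j).rowLen i : ℚ) - i)^2 * e k (grow (shrink μ j) i) := by
        rw [hAFerase j hR, Finset.sum_filter]
        refine Finset.sum_congr rfl fun i _ => ?_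
        exact if_congr (by tauto) rfl rfl
      rw [hsum, Finset.sum_erase_eq_sub (mem_AF.2 (addable_shrink_self hR))]
      have h1 : grow (shrink μ j) j = μ := grow_shrink hR
      have h2 : ((shrink μ j).rowLen j : ℚ) = (μ.rowLen j : ℚ) - 1 := by
        rw [rowLen_shrink hR, if_pos rfl]
        have := rowLen_pos_of_removable hR
        push_cast [Nat.cast_sub (by omega : 1 ≤ μ.rowLen j)]
        ring
      rw [h1, h2, Dw]
    · rw [if_neg hR]
      exact Finset.sum_eq_zero fun i _ => if_neg (by tauto)
  rw [step1, convA, swap, convR, Finset.sum_sub_distrib]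
  have hfact := fact3 μ
  rw [← Finset.sum_mul, ← Finset.sum_mul]
  rw [hfact]
  ring

lemma Dw_eq (k : ℕ) (μ : YoungDiagram) :
    Dw k μ = (k : ℚ) * ((k : ℚ) - 1) * e (k - 1) μ := by
  induction k generalizing μ with
  | zero =>
    rw [Dw]
    rw [Finset.sum_eq_zero, Nat.cast_zero]
    · ring
    · intro i hi
      have hA := mem_AF.1 hi
      rw [e_eq_zero 0 _ (by rw [card_grow hA]; omega)]
      ring
  | succ k ih =>
    rw [Dw_rec]
    have hsum : ∑ j ∈ RF μ, Dw k (shrink μ j)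
        = (k : ℚ) * ((k : ℚ) - 1) * ∑ j ∈ RF μ, e (k - 1) (shrink μ j) := by
      rw [Finset.mul_sum]
      exact Finset.sum_congr rfl fun j _ => ih _
    rw [hsum]
    rcases Nat.eq_zero_or_pos k with rfl | hk
    · simp only [Nat.cast_zero]
      by_cases hb : μ = ⊥
      · subst hb
        rw [show (⊥ : YoungDiagram).card = 0 from card_eq_zero_iff.2 rfl]
        push_cast
        ring
      · rw [e_eq_zero 0 _ (fun hc => hb (card_eq_zero_iff.1 hc))]
        push_cast
        ring
    · have hk1 : k - 1 + 1 = k := by omega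
      have : ∑ j ∈ RF μ, e (k - 1) (shrink μ j) = e k μ := by
        rw [← e_succ, hk1]
      rw [this]
      have hk2 : (k + 1 : ℕ) - 1 = k := by omega
      rw [hk2]
      by_cases hc : μ.card = k
      · rw [hc]
        push_cast
        ring
      · rw [e_eq_zero k μ hc]
        ring

end KerovAux
namespace KerovAux

lemma cover_exists {μ Λ : YoungDiagram} (hle : μ ≤ Λ) (hcard : Λ.card = μ.card + 1) :
    ∃ i, Addable μ i ∧ Λ = grow μ i := by
  have hsub : μ.cells ⊆ Λ.cells := YoungDiagram.cells_subset_iff.2 hle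
  have hsd : (Λ.cells \ μ.cells).card = 1 := by
    rw [Finset.card_sdiff_of_subset hsub]
    show Λ.card - μ.card = 1
    omega
  obtain ⟨x, hx⟩ := Finset.card_eq_one.1 hsd
  obtain ⟨a, b⟩ := x
  have hxmem : (a, b) ∈ Λ.cells \ μ.cells := hx ▸ Finset.mem_singleton_self _
  have hxΛ : (a, b) ∈ Λ := (Finset.mem_sdiff.1 hxmem).1
  have hxμ : (a, b) ∉ μ := (Finset.mem_sdiff.1 hxmem).2
  have hmem : ∀ y : ℕ × ℕ, y ∈ Λ ↔ y = (a, b) ∨ y ∈ μ := by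
    intro y
    constructor
    · intro hy
      by_cases hyμ : y ∈ μ
      · exact Or.inr hyμ
      · left
        have : y ∈ Λ.cells \ μ.cells := Finset.mem_sdiff.2 ⟨hy, hyμ⟩
        rw [hx] at this
        exact Finset.mem_singleton.1 this
    · rintro (rfl | hy)
      · exact hxΛ
      · exact hsub hy
  have hble : μ.rowLen a ≤ b := by
    by_contra hc
    exact hxμ (YoungDiagram.mem_iff_lt_rowLen.2 (by omega))
  have hb : b = μ.rowLen a := by
    by_contra hc
    have h1 : (a, μ.rowLen a) ∈ Λ :=
      Λ.up_left_mem le_rfl (by omega) hxΛ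
    rcases (hmem _).1 h1 with heq | hmem'
    · have := congrArg Prod.snd heq
      simp at this
      omega
    · exact not_mem_self a hmem'
  have hAdd : Addable μ a := by
    rcases Nat.eq_zero_or_pos a with rfl | ha
    · exact Or.inl rfl
    · right
      have h1 : (a - 1, b) ∈ Λ := Λ.up_left_mem (by omega) le_rfl hxΛ
      rcases (hmem _).1 h1 with heq | hmem'
      · have := congrArg Prod.fst heq
        simp at this
        omega
      · have := YoungDiagram.mem_iff_lt_rowLen.1 hmem'
        omega
  refine ⟨a, hAdd, ?_⟩
  ext y
  rw [show (y ∈ Λ.cells) = (y ∈ Λ) from rfl, hmem y,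
    show (y ∈ (grow μ a).cells) = (y ∈ grow μ a) from rfl, mem_grow hAdd, hb]

lemma cover_shrink {μ ν : YoungDiagram} (hle : ν ≤ μ) (hcard : μ.card = ν.card + 1) :
    ∃ j, Removable μ j ∧ shrink μ j = ν := by
  obtain ⟨i, hA, rfl⟩ := cover_exists hle hcard
  exact ⟨i, removable_grow_self hA, shrink_grow hA⟩

lemma shrink_inj {μ : YoungDiagram} {j j' : ℕ} (h : Removable μ j) (h' : Removable μ j')
    (he : shrink μ j = shrink μ j') : j = j' := by
  by_contra hne
  have h1 : (shrink μ j).rowLen j = μ.rowLen j - 1 := by rw [rowLen_shrink h, if_pos rfl]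
  have h2 : (shrink μ j').rowLen j = μ.rowLen j := by rw [rowLen_shrink h', if_neg hne]
  have := rowLen_pos_of_removable h
  rw [he, h2] at h1
  omega

lemma grow_inj {μ : YoungDiagram} {i i' : ℕ} (h : Addable μ i) (h' : Addable μ i')
    (he : grow μ i = grow μ i') : i = i' := by
  by_contra hne
  have h1 : (grow μ i).rowLen i = μ.rowLen i + 1 := by rw [rowLen_grow h, if_pos rfl]
  have h2 : (grow μ i').rowLen i = μ.rowLen i := by rw [rowLen_grow h', if_neg hne]
  rw [he, h2] at h1
  omega

open Classical in
/-- The row from which `ν` was obtained by removing a box of `μ`. -/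
noncomputable def rowOf (μ ν : YoungDiagram) : ℕ :=
  if h : ∃ j, Removable μ j ∧ shrink μ j = ν then h.choose else 0

lemma rowOf_spec {μ ν : YoungDiagram} (h : ∃ j, Removable μ j ∧ shrink μ j = ν) :
    Removable μ (rowOf μ ν) ∧ shrink μ (rowOf μ ν) = ν := by
  classical
  rw [rowOf]
  rw [dif_pos h]
  exact h.choose_spec

lemma rowOf_eq {μ ν : YoungDiagram} {j : ℕ} (hj : Removable μ j) (hsh : shrink μ j = ν) :
    rowOf μ ν = j := by
  have h : ∃ j, Removable μ j ∧ shrink μ j = ν := ⟨j, hj, hsh⟩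
  obtain ⟨h1, h2⟩ := rowOf_spec h
  exact shrink_inj h1 hj (h2.trans hsh.symm)

/-- Chains of Young diagrams of length `n+1` from `⊥` to `μ`, adding one box at a time. -/
def Ch (n : ℕ) (μ : YoungDiagram) : Type :=
  {c : Fin (n + 1) → YoungDiagram //
    c 0 = ⊥ ∧ c (Fin.last n) = μ ∧
    ∀ i : Fin n, c i.castSucc ≤ c i.succ ∧ (c i.succ).card = (c i.castSucc).card + 1}

lemma chain_card' {n : ℕ} (c : Fin (n + 1) → YoungDiagram) (h0 : c 0 = ⊥)
    (hstep : ∀ i : Fin n, (c i.succ).card = (c i.castSucc).card + 1) (i : Fin (n + 1)) :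
    (c i).card = i.val := by
  induction i using Fin.induction with
  | zero => rw [h0, card_eq_zero_iff.2 rfl]; rfl
  | succ i ih =>
    rw [hstep i, ih]
    simp

lemma chain_card {n : ℕ} {μ : YoungDiagram} (c : Ch n μ) (i : Fin (n + 1)) :
    (c.1 i).card = i.val :=
  chain_card' c.1 c.2.1 (fun i => (c.2.2.2 i).2) i

lemma card_le_of_mem {μ : YoungDiagram} {a b : ℕ} (h : (a, b) ∈ μ) :
    a < μ.card ∧ b < μ.card := by
  constructor
  · have : (Finset.range (a+1)).image (fun t => (t, b)) ⊆ μ.cells := by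
      intro y hy
      simp only [Finset.mem_image, Finset.mem_range] at hy
      obtain ⟨t, ht, rfl⟩ := hy
      exact μ.up_left_mem (by omega) le_rfl h
    have := Finset.card_le_card this
    rw [Finset.card_image_of_injective _ (fun u v huv => by simpa using huv),
      Finset.card_range] at this
    have hcc : μ.card = μ.cells.card := rfl
    omega
  · have : (Finset.range (b+1)).image (fun t => (a, t)) ⊆ μ.cells := by
      intro y hy
      simp only [Finset.mem_image, Finset.mem_range] at hy
      obtain ⟨t, ht, rfl⟩ := hy
      exact μ.up_left_mem le_rfl (by omega) h
    have := Finset.card_le_card this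
    rw [Finset.card_image_of_injective _ (fun u v huv => by simpa using huv),
      Finset.card_range] at this
    have hcc : μ.card = μ.cells.card := rfl
    omega

instance finite_card_le (m : ℕ) : Finite {ν : YoungDiagram // ν.card ≤ m} := by
  classical
  have : ∀ ν : {ν : YoungDiagram // ν.card ≤ m},
      ν.1.cells ∈ (Finset.range m ×ˢ Finset.range m).powerset := by
    intro ν
    rw [Finset.mem_powerset]
    intro x hx
    obtain ⟨a, b⟩ := x
    have := card_le_of_mem (show (a,b) ∈ ν.1 from hx)
    simp only [Finset.mem_product, Finset.mem_range]
    obtain ⟨h1, h2⟩ := this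
    have := ν.2
    omega
  refine Finite.of_injective
    (fun ν : {ν : YoungDiagram // ν.card ≤ m} =>
      (⟨ν.1.cells, this ν⟩ : ((Finset.range m ×ˢ Finset.range m).powerset : Finset (Finset (ℕ × ℕ))))) ?_
  intro ν ν' h
  apply Subtype.ext
  ext1
  simpa using congrArg Subtype.val h

instance finite_Ch (n : ℕ) (μ : YoungDiagram) : Finite (Ch n μ) := by
  refine Finite.of_injective
    (fun c : Ch n μ => fun i : Fin (n+1) =>
      (⟨c.1 i, by rw [chain_card c i]; omega⟩ : {ν : YoungDiagram // ν.card ≤ n})) ?_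
  intro c c' h
  apply Subtype.ext
  funext i
  have := congrFun h i
  simpa using congrArg Subtype.val this

end KerovAux
namespace KerovAux

/-- Auxiliary type: a removable row together with a chain up to the shrunken diagram. -/
def T (n : ℕ) (μ : YoungDiagram) : Type :=
  {p : {j // j ∈ RF μ} × (Fin (n + 1) → YoungDiagram) //
    p.2 0 = ⊥ ∧ p.2 (Fin.last n) = shrink μ p.1.1 ∧
    ∀ i : Fin n, p.2 i.castSucc ≤ p.2 i.succ ∧ (p.2 i.succ).card = (p.2 i.castSucc).card + 1}

noncomputable def chEquiv (n : ℕ) (μ : YoungDiagram) : Ch (n + 1) μ ≃ T n μ where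
  toFun c := by
    have hle : c.1 (Fin.castSucc (Fin.last n)) ≤ μ := by
      have h := (c.2.2.2 (Fin.last n)).1
      rwa [Fin.succ_last, c.2.2.1] at h
    have hcard : μ.card = (c.1 (Fin.castSucc (Fin.last n))).card + 1 := by
      have h := (c.2.2.2 (Fin.last n)).2
      rwa [Fin.succ_last, c.2.2.1] at h
    have hex : ∃ j, Removable μ j ∧ shrink μ j = c.1 (Fin.castSucc (Fin.last n)) :=
      cover_shrink hle hcard
    exact ⟨(⟨rowOf μ _, mem_RF.2 (rowOf_spec hex).1⟩, Fin.init c.1), by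
      refine ⟨?_, ?_, fun i => ?_⟩
      · show c.1 (Fin.castSucc 0) = ⊥
        rw [Fin.castSucc_zero, c.2.1]
      · exact (rowOf_spec hex).2.symm
      · refine ⟨?_, ?_⟩
        · show c.1 (Fin.castSucc (Fin.castSucc i)) ≤ c.1 (Fin.castSucc (Fin.succ i))
          rw [← Fin.succ_castSucc]
          exact (c.2.2.2 i.castSucc).1
        · show (c.1 (Fin.castSucc (Fin.succ i))).card
            = (c.1 (Fin.castSucc (Fin.castSucc i))).card + 1
          rw [← Fin.succ_castSucc]
          exact (c.2.2.2 i.castSucc).2⟩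
  invFun p := by
    have hj : Removable μ p.1.1.1 := mem_RF.1 p.1.1.2
    exact ⟨Fin.snoc p.1.2 μ, by
      refine ⟨?_, ?_, fun i => ?_⟩
      · rw [show (0 : Fin (n + 2)) = Fin.castSucc 0 from (Fin.castSucc_zero).symm,
          Fin.snoc_castSucc, p.2.1]
      · exact Fin.snoc_last _ _
      · induction i using Fin.lastCases with
        | last =>
          rw [Fin.succ_last, Fin.snoc_last, Fin.snoc_castSucc, p.2.2.1]
          refine ⟨?_, ?_⟩
          · intro x hx
            exact (mem_shrink hj).1 hx |>.2
          · rw [card_shrink hj]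
            have := card_pos_of_removable hj
            omega
        | cast i =>
          rw [Fin.succ_castSucc, Fin.snoc_castSucc, Fin.snoc_castSucc]
          exact p.2.2.2 i⟩
  left_inv c := by
    apply Subtype.ext
    funext x
    show Fin.snoc (Fin.init c.1) μ x = c.1 x
    induction x using Fin.lastCases with
    | last => rw [Fin.snoc_last, c.2.2.1]
    | cast i => rw [Fin.snoc_castSucc]; rfl
  right_inv p := by
    apply Subtype.ext
    have hj : Removable μ p.1.1.1 := mem_RF.1 p.1.1.2
    have h1 : (Fin.snoc p.1.2 μ : Fin (n + 2) → YoungDiagram) (Fin.castSucc (Fin.last n))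
        = shrink μ p.1.1.1 := by
      rw [Fin.snoc_castSucc, p.2.2.1]
    refine Prod.ext (Subtype.ext ?_) ?_
    · exact rowOf_eq hj h1.symm
    · show Fin.init (Fin.snoc p.1.2 μ : Fin (n + 2) → YoungDiagram) = p.1.2
      exact Fin.init_snoc _ _

lemma count (n : ℕ) : ∀ μ : YoungDiagram, (Nat.card (Ch n μ) : ℚ) = e n μ := by
  classical
  induction n with
  | zero =>
    intro μ
    by_cases hb : μ = ⊥
    · subst hb
      haveI : Unique (Ch 0 ⊥) := by
        refine ⟨⟨⟨fun _ => ⊥, rfl, rfl, fun i => i.elim0⟩⟩, ?_⟩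
        intro c
        apply Subtype.ext
        funext x
        rw [Fin.fin_one_eq_zero x, c.2.1]
        rfl
      rw [Nat.card_unique]
      show (1 : ℚ) = if (⊥ : YoungDiagram) = ⊥ then 1 else 0
      rw [if_pos rfl]
    · haveI : IsEmpty (Ch 0 μ) := by
        refine ⟨fun c => hb ?_⟩
        exact c.2.2.1.symm.trans ((congrArg c.1 (Fin.fin_one_eq_zero _)).trans c.2.1)
      rw [Nat.card_of_isEmpty]
      show (0 : ℚ) = if μ = ⊥ then 1 else 0
      rw [if_neg hb]
  | succ n ih =>
    intro μ
    haveI : ∀ a : {j // j ∈ RF μ}, Fintype (Ch n (shrink μ a.1)) := fun a =>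
      Fintype.ofFinite _
    have E2 : T n μ ≃ Σ a : {j // j ∈ RF μ}, Ch n (shrink μ a.1) :=
      Equiv.subtypeProdEquivSigmaSubtype
        (fun (a : {j // j ∈ RF μ}) (b : Fin (n+1) → YoungDiagram) =>
          b 0 = ⊥ ∧ b (Fin.last n) = shrink μ a.1 ∧
          ∀ i : Fin n, b i.castSucc ≤ b i.succ ∧ (b i.succ).card = (b i.castSucc).card + 1)
    rw [Nat.card_congr ((chEquiv n μ).trans E2), Nat.card_eq_fintype_card,
      Fintype.card_sigma, Finset.univ_eq_attach]
    push_cast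
    rw [e_succ, ← Finset.sum_attach (RF μ) (fun j => e n (shrink μ j))]
    refine Finset.sum_congr rfl fun a _ => ?_
    rw [← Nat.card_eq_fintype_card]
    exact ih _

end KerovAux

namespace KerovAux

lemma sytCount_eq (μ : YoungDiagram) : (sytCount μ : ℚ) = e μ.card μ := by
  have h : sytCount μ = Nat.card (Ch μ.card μ) := rfl
  rw [h, count]

end KerovAux

open KerovAux

/-- Kerov's second moment identity: for any Young diagram `μ` of size `j = |μ|`,
`Σ_Λ (dim(Λ)/((j+1)·dim(μ))) · c(Λ/μ)^2 = j`, the sum being over diagrams `Λ` obtained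
from `μ` by adding one box, where the transition probabilities are those of the Plancherel
growth process and `c(Λ/μ)` is the content of the added box. -/
theorem kerov_second_moment (μ : YoungDiagram) :
    (∑ᶠ Λ ∈ {Λ : YoungDiagram | μ ≤ Λ ∧ Λ.card = μ.card + 1},
      ((sytCount Λ : ℚ) / ((μ.card + 1) * (sytCount μ : ℚ))) *
        ((Λ.contentSum : ℚ) - (μ.contentSum : ℚ)) ^ 2) = (μ.card : ℚ) := by
  classical
  have hset : {Λ : YoungDiagram | μ ≤ Λ ∧ Λ.card = μ.card + 1}
      = ↑((AF μ).image (grow μ)) := by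
    ext Λ
    simp only [Set.mem_setOf_eq, Finset.coe_image, Set.mem_image, Finset.mem_coe, mem_AF]
    constructor
    · rintro ⟨hle, hcard⟩
      obtain ⟨i, hA, rfl⟩ := cover_exists hle hcard
      exact ⟨i, hA, rfl⟩
    · rintro ⟨i, hA, rfl⟩
      refine ⟨?_, card_grow hA⟩
      rw [← YoungDiagram.cells_subset_iff, grow_cells hA]
      exact Finset.subset_insert _ _
  rw [hset, finsum_mem_coe_finset,
    Finset.sum_image (fun x hx y hy h => grow_inj (mem_AF.1 hx) (mem_AF.1 hy) h)]
  have hepos := e_pos μ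
  have hsum : (∑ i ∈ AF μ,
      ((sytCount (grow μ i) : ℚ) / ((μ.card + 1) * (sytCount μ : ℚ))) *
        (((grow μ i).contentSum : ℚ) - (μ.contentSum : ℚ)) ^ 2)
      = Dw (μ.card + 1) μ / ((μ.card + 1) * e μ.card μ) := by
    rw [Dw, Finset.sum_div]
    refine Finset.sum_congr rfl fun i hi => ?_
    have hA := mem_AF.1 hi
    have h1 : (sytCount (grow μ i) : ℚ) = e (μ.card + 1) (grow μ i) := by
      rw [sytCount_eq, card_grow hA]
    have h2 : ((grow μ i).contentSum : ℚ) - (μ.contentSum : ℚ)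
        = (μ.rowLen i : ℚ) - i := by
      rw [contentSum_grow hA]
      push_cast
      ring
    rw [h1, h2, sytCount_eq]
    ring
  rw [hsum, Dw_eq]
  have hne : e μ.card μ ≠ 0 := ne_of_gt hepos
  have hn1 : ((μ.card : ℚ) + 1) ≠ 0 := by positivity
  rw [show (μ.card + 1 : ℕ) - 1 = μ.card from rfl]
  push_cast
  field_simp
  ring
end

section
/- Under the Plancherel growth process on partitions, with Y_j = Σ_{x∈λ(j)} c(x) the total content of the partition λ(j) of size j, the sequence (Y_1^2, Y_2^2 − C(2,2), ..., Y_n^2 − C(n,2)) is a martingale; i.e., for any partition μ of size j, Σ_Λ P(λ(j+1)=Λ | λ(j)=μ) · ((Σ_{x∈Λ} c(x))^2 − C(j+1,2)) = (Σ_{x∈μ} c(x))^2 − C(j,2). -/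
open scoped Classical

namespace YoungPG


open YoungDiagram Finset

lemma rowLen_eq_of (μ : YoungDiagram) {i m : ℕ} (h : ∀ b, (i, b) ∈ μ ↔ b < m) :
    μ.rowLen i = m := by
  have h1 : ¬ m < μ.rowLen i := by
    rw [← YoungDiagram.mem_iff_lt_rowLen]
    simp [h]
  have h2 : m ≤ μ.rowLen i := by
    rcases Nat.eq_zero_or_pos m with hm | hm
    · omega
    · have : (i, m - 1) ∈ μ := (h _).2 (by omega)
      rw [YoungDiagram.mem_iff_lt_rowLen] at this
      omega
  omega

lemma rowLen_pos_iff {μ : YoungDiagram} {i : ℕ} : 0 < μ.rowLen i ↔ i < μ.colLen 0 := by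
  rw [← YoungDiagram.mem_iff_lt_rowLen, YoungDiagram.mem_iff_lt_colLen]

lemma rowLen_colLen (μ : YoungDiagram) : μ.rowLen (μ.colLen 0) = 0 := by
  have := (rowLen_pos_iff (μ := μ) (i := μ.colLen 0))
  omega

/-- row `i` is an addable corner of `μ`. -/
def addable (μ : YoungDiagram) (i : ℕ) : Prop := ∀ k < i, μ.rowLen i < μ.rowLen k

lemma addable_le {μ : YoungDiagram} {i : ℕ} (h : addable μ i) : i ≤ μ.colLen 0 := by
  by_contra hc
  have := h (μ.colLen 0) (by omega)
  rw [rowLen_colLen] at this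
  omega

lemma addable_zero (μ : YoungDiagram) : addable μ 0 := by intro k hk; omega

lemma addable_succ_iff {μ : YoungDiagram} {k : ℕ} :
    addable μ (k + 1) ↔ μ.rowLen (k + 1) < μ.rowLen k := by
  constructor
  · exact fun h => h k (by omega)
  · intro h j hj
    exact lt_of_lt_of_le h (μ.rowLen_anti j k (by omega))

/-- row `i` is a removable corner of `μ`. -/
def removable (μ : YoungDiagram) (i : ℕ) : Prop := μ.rowLen (i + 1) < μ.rowLen i

lemma removable_lt {μ : YoungDiagram} {i : ℕ} (h : removable μ i) : i < μ.colLen 0 := by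
  rw [← rowLen_pos_iff]
  unfold removable at h
  omega

/-- Add a box at the end of row `i` (if addable; junk value otherwise). -/
noncomputable def addCell (μ : YoungDiagram) (i : ℕ) : YoungDiagram :=
  if h : addable μ i then
    { cells := insert (i, μ.rowLen i) μ.cells
      isLowerSet := by
        intro a b hba ha
        simp only [Finset.coe_insert, Set.mem_insert_iff, Finset.mem_coe,
          YoungDiagram.mem_cells] at ha ⊢
        obtain ⟨a1, a2⟩ := a
        obtain ⟨b1, b2⟩ := b
        obtain ⟨h1, h2⟩ := Prod.mk_le_mk.mp hba
        rcases ha with ha | ha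
        · obtain ⟨rfl, rfl⟩ := Prod.mk.injEq .. ▸ ha
          rcases Nat.lt_or_ge b1 a1 with hb | hb
          · right
            rw [YoungDiagram.mem_iff_lt_rowLen]
            exact lt_of_le_of_lt h2 (h b1 hb)
          · have hb1 : b1 = a1 := by omega
            subst hb1
            rcases Nat.lt_or_ge b2 (μ.rowLen b1) with hb2 | hb2
            · right; rwa [YoungDiagram.mem_iff_lt_rowLen]
            · left; simp; omega
        · right
          exact μ.up_left_mem h1 h2 ha }
  else μ

lemma cells_addCell {μ : YoungDiagram} {i : ℕ} (h : addable μ i) :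
    (addCell μ i).cells = insert (i, μ.rowLen i) μ.cells := by
  rw [addCell, dif_pos h]

lemma mem_addCell {μ : YoungDiagram} {i : ℕ} (h : addable μ i) (x : ℕ × ℕ) :
    x ∈ addCell μ i ↔ x = (i, μ.rowLen i) ∨ x ∈ μ := by
  rw [← YoungDiagram.mem_cells, cells_addCell h, Finset.mem_insert, YoungDiagram.mem_cells]

lemma corner_not_mem (μ : YoungDiagram) (i : ℕ) : (i, μ.rowLen i) ∉ μ := by
  rw [YoungDiagram.mem_iff_lt_rowLen]; omega

lemma card_addCell {μ : YoungDiagram} {i : ℕ} (h : addable μ i) :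
    (addCell μ i).card = μ.card + 1 := by
  show (addCell μ i).cells.card = μ.cells.card + 1
  rw [cells_addCell h, Finset.card_insert_of_notMem (by
    rw [YoungDiagram.mem_cells]; exact corner_not_mem μ i)]

lemma le_addCell {μ : YoungDiagram} {i : ℕ} (h : addable μ i) : μ ≤ addCell μ i := by
  rw [← YoungDiagram.cells_subset_iff]
  intro x hx
  rw [YoungDiagram.mem_cells] at hx ⊢
  rw [mem_addCell h]
  exact Or.inr hx

lemma rowLen_addCell {μ : YoungDiagram} {i : ℕ} (h : addable μ i) (j : ℕ) :
    (addCell μ i).rowLen j = if j = i then μ.rowLen i + 1 else μ.rowLen j := by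
  split_ifs with hj
  · subst hj
    apply rowLen_eq_of
    intro b
    rw [mem_addCell h, YoungDiagram.mem_iff_lt_rowLen]
    constructor
    · rintro (hb | hb)
      · simp at hb; omega
      · omega
    · intro hb
      rcases Nat.lt_or_ge b (μ.rowLen j) with h' | h'
      · exact Or.inr h'
      · left; simp; omega
  · apply rowLen_eq_of
    intro b
    rw [mem_addCell h, YoungDiagram.mem_iff_lt_rowLen]
    simp [Prod.ext_iff, hj]

lemma contentSum_addCell {μ : YoungDiagram} {i : ℕ} (h : addable μ i) :
    (addCell μ i).contentSum = μ.contentSum + ((μ.rowLen i : ℤ) - i) := by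
  unfold YoungDiagram.contentSum
  rw [cells_addCell h, Finset.sum_insert (by
    rw [YoungDiagram.mem_cells]; exact corner_not_mem μ i)]
  ring

/-- Remove the box at the end of row `i` (if removable; junk value otherwise). -/
noncomputable def removeCell (μ : YoungDiagram) (i : ℕ) : YoungDiagram :=
  if h : removable μ i then
    { cells := μ.cells.erase (i, μ.rowLen i - 1)
      isLowerSet := by
        intro a b hba ha
        simp only [Finset.coe_erase, Set.mem_diff, Finset.mem_coe,
          YoungDiagram.mem_cells, Set.mem_singleton_iff] at ha ⊢
        obtain ⟨ha, hane⟩ := ha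
        obtain ⟨a1, a2⟩ := a
        obtain ⟨b1, b2⟩ := b
        obtain ⟨h1, h2⟩ := Prod.mk_le_mk.mp hba
        refine ⟨μ.up_left_mem h1 h2 ha, ?_⟩
        rintro ⟨rfl, rfl⟩
        have hLi : 0 < μ.rowLen i := by unfold removable at h; omega
        have ha2 : a2 < μ.rowLen a1 := YoungDiagram.mem_iff_lt_rowLen.mp ha
        have haa : μ.rowLen a1 ≤ μ.rowLen i := μ.rowLen_anti _ _ h1
        have ha1 : a1 = i := by
          by_contra hne
          have : μ.rowLen a1 ≤ μ.rowLen (i + 1) := μ.rowLen_anti _ _ (by omega)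
          unfold removable at h
          omega
        subst ha1
        exact hane (by simp only [Prod.mk.injEq, true_and]; omega) }
  else μ

lemma cells_removeCell {μ : YoungDiagram} {i : ℕ} (h : removable μ i) :
    (removeCell μ i).cells = μ.cells.erase (i, μ.rowLen i - 1) := by
  rw [removeCell, dif_pos h]

lemma mem_removeCell {μ : YoungDiagram} {i : ℕ} (h : removable μ i) (x : ℕ × ℕ) :
    x ∈ removeCell μ i ↔ x ∈ μ ∧ x ≠ (i, μ.rowLen i - 1) := by
  rw [← YoungDiagram.mem_cells, cells_removeCell h, Finset.mem_erase, YoungDiagram.mem_cells]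
  tauto

lemma rowLen_pos_of_removable {μ : YoungDiagram} {i : ℕ} (h : removable μ i) :
    0 < μ.rowLen i := by unfold removable at h; omega

lemma corner_mem {μ : YoungDiagram} {i : ℕ} (h : removable μ i) :
    (i, μ.rowLen i - 1) ∈ μ := by
  rw [YoungDiagram.mem_iff_lt_rowLen]
  have := rowLen_pos_of_removable h
  omega

lemma card_removeCell {μ : YoungDiagram} {i : ℕ} (h : removable μ i) :
    μ.card = (removeCell μ i).card + 1 := by
  show μ.cells.card = (removeCell μ i).cells.card + 1
  rw [cells_removeCell h, Finset.card_erase_of_mem (by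
    rw [YoungDiagram.mem_cells]; exact corner_mem h)]
  have : (i, μ.rowLen i - 1) ∈ μ.cells := by rw [YoungDiagram.mem_cells]; exact corner_mem h
  have := Finset.card_pos.mpr ⟨_, this⟩
  omega

lemma removeCell_le {μ : YoungDiagram} {i : ℕ} (h : removable μ i) : removeCell μ i ≤ μ := by
  rw [← YoungDiagram.cells_subset_iff]
  intro x hx
  rw [YoungDiagram.mem_cells] at hx ⊢
  exact ((mem_removeCell h x).mp hx).1

lemma rowLen_removeCell {μ : YoungDiagram} {i : ℕ} (h : removable μ i) (j : ℕ) :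
    (removeCell μ i).rowLen j = if j = i then μ.rowLen i - 1 else μ.rowLen j := by
  have hLi := rowLen_pos_of_removable h
  split_ifs with hj
  · subst hj
    apply rowLen_eq_of
    intro b
    rw [mem_removeCell h, YoungDiagram.mem_iff_lt_rowLen]
    simp only [ne_eq, Prod.mk.injEq, true_and]
    omega
  · apply rowLen_eq_of
    intro b
    rw [mem_removeCell h, YoungDiagram.mem_iff_lt_rowLen]
    simp [Prod.ext_iff, hj]

lemma contentSum_removeCell {μ : YoungDiagram} {i : ℕ} (h : removable μ i) :
    μ.contentSum = (removeCell μ i).contentSum + ((μ.rowLen i : ℤ) - 1 - i) := by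
  unfold YoungDiagram.contentSum
  rw [cells_removeCell h]
  rw [← Finset.sum_erase_add μ.cells _ (by rw [YoungDiagram.mem_cells]; exact corner_mem h)]
  have hLi := rowLen_pos_of_removable h
  have : ((μ.rowLen i - 1 : ℕ) : ℤ) = (μ.rowLen i : ℤ) - 1 := by omega
  simp [this]


lemma ext_mem {μ ν : YoungDiagram} (h : ∀ x, x ∈ μ ↔ x ∈ ν) : μ = ν := by
  ext x
  exact (h _)

lemma addable_removeCell {μ : YoungDiagram} {i : ℕ} (h : removable μ i) :
    addable (removeCell μ i) i := by
  intro k hk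
  rw [rowLen_removeCell h, rowLen_removeCell h, if_pos rfl, if_neg (by omega)]
  have h1 : μ.rowLen i ≤ μ.rowLen k := μ.rowLen_anti _ _ (by omega)
  have := rowLen_pos_of_removable h
  omega

lemma addCell_removeCell {μ : YoungDiagram} {i : ℕ} (h : removable μ i) :
    addCell (removeCell μ i) i = μ := by
  have ha := addable_removeCell h
  apply ext_mem
  intro x
  rw [mem_addCell ha, mem_removeCell h]
  rw [rowLen_removeCell h i, if_pos rfl]
  have hpos := rowLen_pos_of_removable h
  constructor
  · rintro (rfl | ⟨hx, _⟩)
    · exact corner_mem h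
    · exact hx
  · intro hx
    by_cases hc : x = (i, μ.rowLen i - 1)
    · exact Or.inl hc
    · exact Or.inr ⟨hx, hc⟩

lemma removable_addCell {μ : YoungDiagram} {i : ℕ} (h : addable μ i) :
    removable (addCell μ i) i := by
  unfold removable
  rw [rowLen_addCell h, rowLen_addCell h, if_pos rfl, if_neg (by omega)]
  have : μ.rowLen (i + 1) ≤ μ.rowLen i := μ.rowLen_anti _ _ (by omega)
  omega

lemma removeCell_addCell {μ : YoungDiagram} {i : ℕ} (h : addable μ i) :
    removeCell (addCell μ i) i = μ := by
  have hr := removable_addCell h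
  apply ext_mem
  intro x
  rw [mem_removeCell hr, mem_addCell h]
  rw [rowLen_addCell h i, if_pos rfl]
  simp only [Nat.add_sub_cancel]
  constructor
  · rintro ⟨rfl | hx, hne⟩
    · exact absurd rfl hne
    · exact hx
  · intro hx
    refine ⟨Or.inr hx, ?_⟩
    rintro rfl
    exact corner_not_mem μ i hx

lemma cover_iff_up {μ Λ : YoungDiagram} :
    (μ ≤ Λ ∧ Λ.card = μ.card + 1) ↔ ∃ i, addable μ i ∧ Λ = addCell μ i := by
  constructor
  · rintro ⟨hle, hcard⟩
    have hsub : μ.cells ⊆ Λ.cells := YoungDiagram.cells_subset_iff.mpr hle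
    have hcard' : Λ.cells.card = μ.cells.card + 1 := hcard
    have hsd : (Λ.cells \ μ.cells).card = 1 := by
      rw [Finset.card_sdiff_of_subset hsub]
      have := Finset.card_le_card hsub
      omega
    obtain ⟨x, hx⟩ := Finset.card_eq_one.mp hsd
    have hxmem : x ∈ Λ.cells ∧ x ∉ μ.cells := by
      have : x ∈ Λ.cells \ μ.cells := hx ▸ Finset.mem_singleton_self x
      simpa using this
    have hmem : ∀ a, a ∈ Λ ↔ a = x ∨ a ∈ μ := by
      intro a
      constructor
      · intro ha
        by_cases h' : a ∈ μ
        · exact Or.inr h'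
        · left
          have : a ∈ Λ.cells \ μ.cells := by
            rw [Finset.mem_sdiff, YoungDiagram.mem_cells, YoungDiagram.mem_cells]
            exact ⟨ha, h'⟩
          rw [hx] at this
          simpa using this
      · rintro (rfl | ha)
        · exact (YoungDiagram.mem_cells _).mp hxmem.1
        · exact hle ha
    obtain ⟨i, j⟩ := x
    have hj : j = μ.rowLen i := by
      have hge : μ.rowLen i ≤ j := by
        have := hxmem.2
        rw [YoungDiagram.mem_cells, YoungDiagram.mem_iff_lt_rowLen] at this
        omega
      have hle' : j ≤ μ.rowLen i := by
        rcases Nat.eq_zero_or_pos j with hj0 | hj0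
        · omega
        · have hmem' : (i, j - 1) ∈ Λ := Λ.up_left_mem (le_refl i) (by omega)
            ((hmem (i, j)).mpr (Or.inl rfl))
          have : (i, j - 1) ∈ μ := by
            rcases (hmem _).mp hmem' with he | hμ
            · exfalso; simp [Prod.ext_iff] at he; omega
            · exact hμ
          rw [YoungDiagram.mem_iff_lt_rowLen] at this
          omega
      omega
    subst hj
    have haddable : addable μ i := by
      intro k hk
      have hmem' : (k, μ.rowLen i) ∈ Λ := Λ.up_left_mem (le_of_lt hk) (le_refl _)
        ((hmem (i, μ.rowLen i)).mpr (Or.inl rfl))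
      have : (k, μ.rowLen i) ∈ μ := by
        rcases (hmem _).mp hmem' with he | hμ
        · exfalso; simp [Prod.ext_iff] at he; omega
        · exact hμ
      rwa [YoungDiagram.mem_iff_lt_rowLen] at this
    refine ⟨i, haddable, ?_⟩
    apply ext_mem
    intro a
    rw [hmem a, mem_addCell haddable]
  · rintro ⟨i, hi, rfl⟩
    exact ⟨le_addCell hi, card_addCell hi⟩

lemma cover_iff_down {ν μ : YoungDiagram} :
    (ν ≤ μ ∧ μ.card = ν.card + 1) ↔ ∃ i, removable μ i ∧ ν = removeCell μ i := by
  constructor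
  · intro hc
    obtain ⟨i, hi, rfl⟩ := cover_iff_up.mp hc
    exact ⟨i, removable_addCell hi, (removeCell_addCell hi).symm⟩
  · rintro ⟨i, hi, rfl⟩
    exact ⟨removeCell_le hi, card_removeCell hi⟩

lemma addCell_injOn {μ : YoungDiagram} {i i' : ℕ} (hi : addable μ i) (hi' : addable μ i')
    (he : addCell μ i = addCell μ i') : i = i' := by
  have h1 : (i, μ.rowLen i) ∈ addCell μ i' := by
    rw [← he, mem_addCell hi]; exact Or.inl rfl
  rw [mem_addCell hi'] at h1
  rcases h1 with h1 | h1
  · exact congrArg Prod.fst h1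
  · exact absurd h1 (corner_not_mem μ i)

lemma removeCell_injOn {μ : YoungDiagram} {i i' : ℕ} (hi : removable μ i) (hi' : removable μ i')
    (he : removeCell μ i = removeCell μ i') : i = i' := by
  by_contra hne
  have h1 : (i, μ.rowLen i - 1) ∉ removeCell μ i := by
    rw [mem_removeCell hi]
    tauto
  rw [he, mem_removeCell hi'] at h1
  push_neg at h1
  have := h1 (corner_mem hi)
  simp [Prod.ext_iff] at this
  omega

/-- The addable rows of `μ`. -/
noncomputable def ups (μ : YoungDiagram) : Finset ℕ :=
  (Finset.range (μ.colLen 0 + 1)).filter (addable μ)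

/-- The removable rows of `μ`. -/
noncomputable def downs (μ : YoungDiagram) : Finset ℕ :=
  (Finset.range (μ.colLen 0)).filter (removable μ)

lemma mem_ups {μ : YoungDiagram} {i : ℕ} : i ∈ ups μ ↔ addable μ i := by
  simp only [ups, Finset.mem_filter, Finset.mem_range]
  exact ⟨fun h => h.2, fun h => ⟨Nat.lt_succ_of_le (addable_le h), h⟩⟩

lemma mem_downs {μ : YoungDiagram} {i : ℕ} : i ∈ downs μ ↔ removable μ i := by
  simp only [downs, Finset.mem_filter, Finset.mem_range]
  exact ⟨fun h => h.2, fun h => ⟨removable_lt h, h⟩⟩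

/-- The diagrams covering `μ`. -/
noncomputable def uppers (μ : YoungDiagram) : Finset YoungDiagram :=
  (ups μ).image (addCell μ)

/-- The diagrams covered by `μ`. -/
noncomputable def lowers (μ : YoungDiagram) : Finset YoungDiagram :=
  (downs μ).image (removeCell μ)

lemma mem_uppers {μ Λ : YoungDiagram} :
    Λ ∈ uppers μ ↔ (μ ≤ Λ ∧ Λ.card = μ.card + 1) := by
  rw [cover_iff_up]
  simp only [uppers, Finset.mem_image]
  constructor
  · rintro ⟨i, hi, rfl⟩
    exact ⟨i, mem_ups.mp hi, rfl⟩
  · rintro ⟨i, hi, rfl⟩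
    exact ⟨i, mem_ups.mpr hi, rfl⟩

lemma mem_lowers {μ ν : YoungDiagram} :
    ν ∈ lowers μ ↔ (ν ≤ μ ∧ μ.card = ν.card + 1) := by
  rw [cover_iff_down]
  simp only [lowers, Finset.mem_image]
  constructor
  · rintro ⟨i, hi, rfl⟩
    exact ⟨i, mem_downs.mp hi, rfl⟩
  · rintro ⟨i, hi, rfl⟩
    exact ⟨i, mem_downs.mpr hi, rfl⟩

lemma sum_uppers {M : Type*} [AddCommMonoid M] (μ : YoungDiagram) (F : YoungDiagram → M) :
    ∑ Λ ∈ uppers μ, F Λ = ∑ i ∈ ups μ, F (addCell μ i) := by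
  rw [uppers, Finset.sum_image]
  intro i hi i' hi' he
  exact addCell_injOn (mem_ups.mp hi) (mem_ups.mp hi') he

lemma sum_lowers {M : Type*} [AddCommMonoid M] (μ : YoungDiagram) (F : YoungDiagram → M) :
    ∑ ν ∈ lowers μ, F ν = ∑ i ∈ downs μ, F (removeCell μ i) := by
  rw [lowers, Finset.sum_image]
  intro i hi i' hi' he
  exact removeCell_injOn (mem_downs.mp hi) (mem_downs.mp hi') he


/-- Chains of diagrams of length `n` ending at `μ`. -/
def Chains (n : ℕ) (μ : YoungDiagram) :=
  {c : Fin (n + 1) → YoungDiagram //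
    c 0 = ⊥ ∧ c (Fin.last n) = μ ∧
    ∀ i : Fin n, c i.castSucc ≤ c i.succ ∧ (c i.succ).card = (c i.castSucc).card + 1}

lemma sytCount_eq (μ : YoungDiagram) : sytCount μ = Nat.card (Chains μ.card μ) := rfl

lemma chain_mono {n : ℕ} {c : Fin (n + 1) → YoungDiagram}
    (h : ∀ i : Fin n, c i.castSucc ≤ c i.succ) :
    ∀ b : ℕ, ∀ a : ℕ, ∀ (hab : a ≤ b) (hb : b ≤ n), c ⟨a, by omega⟩ ≤ c ⟨b, by omega⟩ := by
  intro b
  induction b with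
  | zero =>
    intro a ha _
    have : a = 0 := by omega
    subst this
    exact le_refl _
  | succ k ih =>
    intro a ha hb
    rcases Nat.eq_or_lt_of_le ha with rfl | hlt
    · exact le_refl _
    · have h1 : c ⟨a, by omega⟩ ≤ c ⟨k, by omega⟩ := ih a (by omega) (by omega)
      have h2 := h ⟨k, by omega⟩
      rw [Fin.castSucc_mk, Fin.succ_mk] at h2
      exact le_trans h1 h2

lemma chain_le {n : ℕ} {c : Fin (n + 1) → YoungDiagram}
    (h : ∀ i : Fin n, c i.castSucc ≤ c i.succ) (i : Fin (n + 1)) :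
    c i ≤ c (Fin.last n) := by
  have := chain_mono h n i.1 (by omega) (le_refl n)
  simpa [Fin.eta, Fin.last] using this

lemma chains_finite (n : ℕ) (μ : YoungDiagram) : Finite (Chains n μ) := by
  let f : Chains n μ → (Fin (n + 1) → {s : Finset (ℕ × ℕ) // s ∈ μ.cells.powerset}) :=
    fun c i => ⟨(c.1 i).cells, by
      rw [Finset.mem_powerset]
      have hle := chain_le (fun j => (c.2.2.2 j).1) i
      rw [c.2.2.1] at hle
      exact YoungDiagram.cells_subset_iff.mpr hle⟩
  have hf : Function.Injective f := by
    intro c c' he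
    apply Subtype.ext
    funext i
    have h2 := congrFun he i
    apply YoungDiagram.ext
    exact congrArg Subtype.val h2
  exact Finite.of_injective f hf

lemma card_bot : (⊥ : YoungDiagram).card = 0 := by
  show (⊥ : YoungDiagram).cells.card = 0
  rw [YoungDiagram.cells_bot]
  rfl

lemma sytCount_bot : sytCount (⊥ : YoungDiagram) = 1 := by
  rw [sytCount_eq]
  simp only [card_bot]
  have hne : Nonempty (Chains 0 ⊥) := ⟨⟨fun _ => ⊥, rfl, rfl, fun i => i.elim0⟩⟩
  have hsub : Subsingleton (Chains 0 ⊥) := by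
    constructor
    intro c d
    apply Subtype.ext
    funext i
    have hi : i = 0 := Fin.fin_one_eq_zero i
    rw [hi, c.2.1, d.2.1]
  exact Nat.card_unique

lemma sytCount_pos_card {μ : YoungDiagram} {n : ℕ} (hμ : μ.card = n + 1) :
    sytCount μ = ∑ ν ∈ lowers μ, sytCount ν := by
  classical
  rw [sytCount_eq, hμ]
  have : Finite (Chains (n + 1) μ) := chains_finite _ _
  letI : Fintype (Chains (n + 1) μ) := Fintype.ofFinite _
  rw [Nat.card_eq_fintype_card, ← Finset.card_univ]
  let φ : Chains (n + 1) μ → YoungDiagram := fun c => c.1 (Fin.castSucc (Fin.last n))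
  have hφ : ∀ c : Chains (n + 1) μ, φ c ∈ lowers μ := by
    intro c
    rw [mem_lowers]
    have h := c.2.2.2 (Fin.last n)
    rw [Fin.succ_last, c.2.2.1] at h
    exact ⟨h.1, h.2⟩
  rw [Finset.card_eq_sum_card_fiberwise (fun c _ => hφ c)]
  apply Finset.sum_congr rfl
  intro ν hν
  have hν' := mem_lowers.mp hν
  have hνcard : ν.card = n := by omega
  rw [← Fintype.card_subtype, sytCount_eq, hνcard, ← Nat.card_eq_fintype_card]
  apply Nat.card_congr
  refine ⟨fun c => ⟨fun i => c.1.1 i.castSucc, ?_, ?_, ?_⟩,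
    fun d => ⟨⟨Fin.snoc d.1 μ, ?_, ?_, ?_⟩, ?_⟩, ?_, ?_⟩
  · show c.1.1 ((0 : Fin (n + 1)).castSucc) = ⊥
    rw [Fin.castSucc_zero]
    exact c.1.2.1
  · exact c.2
  · intro i
    have h := c.1.2.2.2 i.castSucc
    rw [Fin.succ_castSucc] at h
    exact h
  · rw [show (0 : Fin (n + 1 + 1)) = (0 : Fin (n + 1)).castSucc by simp, Fin.snoc_castSucc]
    exact d.2.1
  · rw [Fin.snoc_last]
  · intro i
    induction i using Fin.lastCases with
    | last =>
      rw [Fin.succ_last, Fin.snoc_last, Fin.snoc_castSucc, d.2.2.1]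
      exact ⟨hν'.1, hν'.2⟩
    | cast j =>
      rw [Fin.succ_castSucc, Fin.snoc_castSucc, Fin.snoc_castSucc]
      exact d.2.2.2 j
  · simp only [φ, Fin.snoc_castSucc]
    exact d.2.2.1
  · intro c
    apply Subtype.ext
    apply Subtype.ext
    funext i
    induction i using Fin.lastCases with
    | last =>
      simp only [Fin.snoc_last]
      exact c.1.2.2.1.symm
    | cast j =>
      simp only [Fin.snoc_castSucc]
  · intro d
    apply Subtype.ext
    funext i
    simp only [Fin.snoc_castSucc]

lemma lowers_nonempty {μ : YoungDiagram} (hμ : μ ≠ ⊥) : (lowers μ).Nonempty := by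
  have hK : 0 < μ.colLen 0 := by
    by_contra hc
    apply hμ
    apply ext_mem
    intro x
    simp only [YoungDiagram.notMem_bot, iff_false]
    intro hx
    obtain ⟨a, b⟩ := x
    have : (a, 0) ∈ μ := μ.up_left_mem (le_refl a) (Nat.zero_le b) hx
    rw [YoungDiagram.mem_iff_lt_colLen] at this
    omega
  refine ⟨removeCell μ (μ.colLen 0 - 1), ?_⟩
  rw [mem_lowers]
  have hrem : removable μ (μ.colLen 0 - 1) := by
    unfold removable
    have h1 : 0 < μ.rowLen (μ.colLen 0 - 1) := rowLen_pos_iff.mpr (by omega)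
    have h2 : μ.rowLen (μ.colLen 0 - 1 + 1) = 0 := by
      have := rowLen_pos_iff (μ := μ) (i := μ.colLen 0 - 1 + 1)
      omega
    omega
  exact ⟨removeCell_le hrem, card_removeCell hrem⟩

lemma card_eq_zero_iff_bot {μ : YoungDiagram} : μ.card = 0 ↔ μ = ⊥ := by
  constructor
  · intro h
    apply ext_mem
    intro x
    simp only [YoungDiagram.notMem_bot, iff_false]
    intro hx
    have hx' : x ∈ μ.cells := (YoungDiagram.mem_cells x).mpr hx
    have h2 := Finset.card_pos.mpr ⟨x, hx'⟩
    have h3 : μ.cells.card = 0 := h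
    omega
  · rintro rfl
    exact card_bot

lemma sytCount_pos (μ : YoungDiagram) : 0 < sytCount μ := by
  generalize hn : μ.card = n
  induction n using Nat.strong_induction_on generalizing μ with
  | _ n ih =>
    rcases n with _ | m
    · rw [card_eq_zero_iff_bot.mp hn, sytCount_bot]
      omega
    · rw [sytCount_pos_card hn]
      have hμbot : μ ≠ ⊥ := by
        intro hbot
        rw [hbot, card_bot] at hn
        omega
      obtain ⟨ν, hν⟩ := lowers_nonempty hμbot
      apply Finset.sum_pos'
      · intro i _
        exact Nat.zero_le _
      · refine ⟨ν, hν, ?_⟩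
        have hν' := mem_lowers.mp hν
        exact ih ν.card (by omega) ν rfl


lemma card_eq_sum_rowLen (μ : YoungDiagram) :
    μ.card = ∑ i ∈ Finset.range (μ.colLen 0), μ.rowLen i := by
  show μ.cells.card = _
  have hcells : μ.cells = (Finset.range (μ.colLen 0)).biUnion (fun i => μ.row i) := by
    ext x
    obtain ⟨a, b⟩ := x
    simp only [Finset.mem_biUnion, Finset.mem_range, YoungDiagram.mem_row_iff,
      YoungDiagram.mem_cells]
    constructor
    · intro h
      refine ⟨a, ?_, h, rfl⟩
      have : (a, 0) ∈ μ := μ.up_left_mem (le_refl a) (Nat.zero_le b) h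
      rwa [YoungDiagram.mem_iff_lt_colLen] at this
    · rintro ⟨i, _, h, rfl⟩
      exact h
  rw [hcells, Finset.card_biUnion]
  · exact Finset.sum_congr rfl (fun i _ => (μ.rowLen_eq_card).symm)
  · intro i _ j _ hij
    show Disjoint (μ.row i) (μ.row j)
    rw [Finset.disjoint_left]
    intro x hx hx'
    rw [YoungDiagram.mem_row_iff] at hx hx'
    exact hij (hx.2 ▸ hx'.2)

lemma corner_sum (μ : YoungDiagram) (g : ℤ → ℤ) :
    (∑ i ∈ ups μ, g ((μ.rowLen i : ℤ) - i)) - (∑ i ∈ downs μ, g ((μ.rowLen i : ℤ) - 1 - i))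
      = (∑ i ∈ Finset.range (μ.colLen 0 + 1), g ((μ.rowLen i : ℤ) - i))
        - (∑ i ∈ Finset.range (μ.colLen 0), g ((μ.rowLen i : ℤ) - 1 - i)) := by
  classical
  have h1 := Finset.sum_filter_add_sum_filter_not (Finset.range (μ.colLen 0 + 1))
    (addable μ) (fun i => g ((μ.rowLen i : ℤ) - i))
  have h2 := Finset.sum_filter_add_sum_filter_not (Finset.range (μ.colLen 0))
    (removable μ) (fun i => g ((μ.rowLen i : ℤ) - 1 - i))
  have hkey : ∑ i ∈ (Finset.range (μ.colLen 0 + 1)).filter (fun i => ¬ addable μ i),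
        g ((μ.rowLen i : ℤ) - i)
      = ∑ i ∈ (Finset.range (μ.colLen 0)).filter (fun i => ¬ removable μ i),
        g ((μ.rowLen i : ℤ) - 1 - i) := by
    apply Finset.sum_nbij' (fun i => i - 1) (fun j => j + 1)
    · intro a ha
      simp only [Finset.mem_filter, Finset.mem_range] at ha ⊢
      obtain ⟨ha1, ha2⟩ := ha
      have ha0 : a ≠ 0 := fun h => ha2 (h ▸ addable_zero μ)
      obtain ⟨k, rfl⟩ := Nat.exists_eq_succ_of_ne_zero ha0
      rw [addable_succ_iff] at ha2
      refine ⟨by omega, ?_⟩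
      unfold removable
      simpa using ha2
    · intro a ha
      simp only [Finset.mem_filter, Finset.mem_range] at ha ⊢
      obtain ⟨ha1, ha2⟩ := ha
      rw [addable_succ_iff]
      unfold removable at ha2
      exact ⟨by omega, by simpa using ha2⟩
    · intro a ha
      simp only [Finset.mem_filter, Finset.mem_range] at ha
      have ha0 : a ≠ 0 := fun h => ha.2 (h ▸ addable_zero μ)
      omega
    · intro a _
      omega
    · intro a ha
      simp only [Finset.mem_filter, Finset.mem_range] at ha
      obtain ⟨ha1, ha2⟩ := ha
      have ha0 : a ≠ 0 := fun h => ha2 (h ▸ addable_zero μ)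
      obtain ⟨k, rfl⟩ := Nat.exists_eq_succ_of_ne_zero ha0
      rw [addable_succ_iff] at ha2
      have heq : μ.rowLen (k + 1) = μ.rowLen k := by
        have := μ.rowLen_anti k (k + 1) (by omega)
        omega
      show g ((μ.rowLen (k + 1) : ℤ) - (k + 1))
          = g ((μ.rowLen (k + 1 - 1) : ℤ) - 1 - ((k + 1 - 1 : ℕ) : ℤ))
      have hs : k + 1 - 1 = k := rfl
      rw [hs, heq]
      congr 1
      ring
  have hups : ups μ = (Finset.range (μ.colLen 0 + 1)).filter (addable μ) := rfl
  have hdowns : downs μ = (Finset.range (μ.colLen 0)).filter (removable μ) := rfl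
  rw [hups, hdowns]
  rw [← h1, ← h2, hkey]
  ring

lemma gauss_cast (K : ℕ) : 2 * (∑ i ∈ Finset.range K, (i : ℤ)) = (K : ℤ) ^ 2 - K := by
  induction K with
  | zero => simp
  | succ m ih =>
    rw [Finset.sum_range_succ, mul_add, ih]
    push_cast
    ring

lemma card_ups_eq (μ : YoungDiagram) : (uppers μ).card = (ups μ).card := by
  apply Finset.card_image_of_injOn
  intro i hi j hj hij
  exact addCell_injOn (mem_ups.mp hi) (mem_ups.mp hj) hij

lemma card_downs_eq (μ : YoungDiagram) : (lowers μ).card = (downs μ).card := by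
  apply Finset.card_image_of_injOn
  intro i hi j hj hij
  exact removeCell_injOn (mem_downs.mp hi) (mem_downs.mp hj) hij

lemma corner_one (μ : YoungDiagram) :
    ((uppers μ).card : ℤ) = ((lowers μ).card : ℤ) + 1 := by
  have hc := corner_sum μ (fun _ => 1)
  simp only [Finset.sum_const, nsmul_eq_mul, mul_one, Finset.card_range] at hc
  rw [card_ups_eq, card_downs_eq]
  push_cast at hc ⊢
  linarith

lemma sum_uppers_g (μ : YoungDiagram) (g : ℤ → ℤ) :
    ∑ Λ ∈ uppers μ, g (Λ.contentSum - μ.contentSum)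
      = ∑ i ∈ ups μ, g ((μ.rowLen i : ℤ) - i) := by
  rw [sum_uppers]
  apply Finset.sum_congr rfl
  intro i hi
  rw [contentSum_addCell (mem_ups.mp hi)]
  congr 1
  ring

lemma sum_lowers_g (μ : YoungDiagram) (g : ℤ → ℤ) :
    ∑ ν ∈ lowers μ, g (μ.contentSum - ν.contentSum)
      = ∑ i ∈ downs μ, g ((μ.rowLen i : ℤ) - 1 - i) := by
  rw [sum_lowers]
  apply Finset.sum_congr rfl
  intro i hi
  rw [contentSum_removeCell (mem_downs.mp hi)]
  congr 1
  ring

lemma corner_lin (μ : YoungDiagram) :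
    ∑ Λ ∈ uppers μ, (Λ.contentSum - μ.contentSum)
      = ∑ ν ∈ lowers μ, (μ.contentSum - ν.contentSum) := by
  rw [sum_uppers_g μ (fun x => x), sum_lowers_g μ (fun x => x)]
  have hc := corner_sum μ (fun x => x)
  have h2 : ∑ i ∈ Finset.range (μ.colLen 0), (((μ.rowLen i : ℤ) - i) - ((μ.rowLen i : ℤ) - 1 - i))
      = ∑ _i ∈ Finset.range (μ.colLen 0), (1 : ℤ) :=
    Finset.sum_congr rfl (fun i _ => by ring)
  rw [Finset.sum_sub_distrib] at h2
  simp only [Finset.sum_const, nsmul_eq_mul, mul_one, Finset.card_range] at h2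
  rw [Finset.sum_range_succ, rowLen_colLen] at hc
  push_cast at hc
  linarith

lemma corner_sq (μ : YoungDiagram) :
    ∑ Λ ∈ uppers μ, (Λ.contentSum - μ.contentSum) ^ 2
      = (∑ ν ∈ lowers μ, (μ.contentSum - ν.contentSum) ^ 2) + 2 * (μ.card : ℤ) := by
  rw [sum_uppers_g μ (fun x => x ^ 2), sum_lowers_g μ (fun x => x ^ 2)]
  have hc := corner_sum μ (fun x => x ^ 2)
  have h2 : ∑ i ∈ Finset.range (μ.colLen 0),
        (((μ.rowLen i : ℤ) - i) ^ 2 - ((μ.rowLen i : ℤ) - 1 - i) ^ 2)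
      = ∑ i ∈ Finset.range (μ.colLen 0), (2 * (μ.rowLen i : ℤ) - 2 * (i : ℤ) - 1) :=
    Finset.sum_congr rfl (fun i _ => by ring)
  rw [Finset.sum_sub_distrib] at h2
  have h3 : ∑ i ∈ Finset.range (μ.colLen 0), (2 * (μ.rowLen i : ℤ) - 2 * (i : ℤ) - 1)
      = 2 * (∑ i ∈ Finset.range (μ.colLen 0), (μ.rowLen i : ℤ))
        - 2 * (∑ i ∈ Finset.range (μ.colLen 0), (i : ℤ)) - (μ.colLen 0) := by
    rw [Finset.sum_sub_distrib, Finset.sum_sub_distrib, ← Finset.mul_sum, ← Finset.mul_sum]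
    simp
  have h4 := gauss_cast (μ.colLen 0)
  have h5 : (μ.card : ℤ) = ∑ i ∈ Finset.range (μ.colLen 0), (μ.rowLen i : ℤ) := by
    rw [card_eq_sum_rowLen μ]
    push_cast
    rfl
  rw [Finset.sum_range_succ, rowLen_colLen] at hc
  push_cast at hc
  linarith


lemma eq_of_le_of_card_le {μ ν : YoungDiagram} (h : μ ≤ ν) (hc : ν.card ≤ μ.card) : μ = ν := by
  apply YoungDiagram.ext
  exact Finset.eq_of_subset_of_card_le (YoungDiagram.cells_subset_iff.mpr h) hc

lemma card_sup_add_card_inf (μ ν : YoungDiagram) :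
    (μ ⊔ ν).card + (μ ⊓ ν).card = μ.card + ν.card := by
  show (μ ⊔ ν).cells.card + (μ ⊓ ν).cells.card = μ.cells.card + ν.cells.card
  rw [YoungDiagram.cells_sup, YoungDiagram.cells_inf]
  exact Finset.card_union_add_card_inter _ _

lemma contentSum_sup_add_inf (μ ν : YoungDiagram) :
    (μ ⊔ ν).contentSum + (μ ⊓ ν).contentSum = μ.contentSum + ν.contentSum := by
  unfold YoungDiagram.contentSum
  rw [YoungDiagram.cells_sup, YoungDiagram.cells_inf]
  exact Finset.sum_union_inter

lemma card_le_of_le {μ ν : YoungDiagram} (h : μ ≤ ν) : μ.card ≤ ν.card :=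
  Finset.card_le_card (YoungDiagram.cells_subset_iff.mpr h)

lemma cross1 {μ Λ ρ : YoungDiagram} (hΛ : Λ ∈ uppers μ) (hρ : ρ ∈ lowers Λ) (hne : ρ ≠ μ) :
    μ ⊔ ρ = Λ ∧ (μ ⊓ ρ) ∈ lowers μ ∧ ρ ∈ uppers (μ ⊓ ρ) := by
  rw [mem_uppers] at hΛ
  rw [mem_lowers] at hρ
  obtain ⟨hle1, hc1⟩ := hΛ
  obtain ⟨hle2, hc2⟩ := hρ
  have hcρ : ρ.card = μ.card := by omega
  have hsuple : μ ⊔ ρ ≤ Λ := sup_le hle1 hle2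
  have hsupcard : (μ ⊔ ρ).card = μ.card + 1 := by
    have h1 : (μ ⊔ ρ).card ≤ Λ.card := card_le_of_le hsuple
    have h2 : μ.card ≤ (μ ⊔ ρ).card := card_le_of_le le_sup_left
    rcases Nat.eq_or_lt_of_le h2 with heq | hlt
    · exfalso
      have : μ = μ ⊔ ρ := eq_of_le_of_card_le le_sup_left (by omega)
      have hρμ : ρ ≤ μ := this ▸ le_sup_right
      exact hne (eq_of_le_of_card_le hρμ (by omega))
    · omega
  have hsup : μ ⊔ ρ = Λ := eq_of_le_of_card_le hsuple (by omega)
  have hinfcard : μ.card = (μ ⊓ ρ).card + 1 := by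
    have := card_sup_add_card_inf μ ρ
    omega
  refine ⟨hsup, mem_lowers.mpr ⟨inf_le_left, hinfcard⟩, mem_uppers.mpr ⟨inf_le_right, by omega⟩⟩

lemma cross2 {μ ν ρ : YoungDiagram} (hν : ν ∈ lowers μ) (hρ : ρ ∈ uppers ν) (hne : ρ ≠ μ) :
    μ ⊓ ρ = ν ∧ (μ ⊔ ρ) ∈ uppers μ ∧ ρ ∈ lowers (μ ⊔ ρ) := by
  rw [mem_lowers] at hν
  rw [mem_uppers] at hρ
  obtain ⟨hle1, hc1⟩ := hν
  obtain ⟨hle2, hc2⟩ := hρ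
  have hcρ : ρ.card = μ.card := by omega
  have hinfle : ν ≤ μ ⊓ ρ := le_inf hle1 hle2
  have hinfcard : (μ ⊓ ρ).card = ν.card := by
    have h1 : ν.card ≤ (μ ⊓ ρ).card := card_le_of_le hinfle
    have h2 : (μ ⊓ ρ).card ≤ μ.card := card_le_of_le inf_le_left
    rcases Nat.eq_or_lt_of_le h2 with heq | hlt
    · exfalso
      have : μ ⊓ ρ = μ := eq_of_le_of_card_le inf_le_left (by omega)
      have hμρ : μ ≤ ρ := this ▸ inf_le_right
      exact hne (eq_of_le_of_card_le hμρ (by omega)).symm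
    · omega
  have hinf : μ ⊓ ρ = ν := (eq_of_le_of_card_le hinfle (by omega)).symm
  have hsupcard : (μ ⊔ ρ).card = μ.card + 1 := by
    have := card_sup_add_card_inf μ ρ
    omega
  refine ⟨hinf, mem_uppers.mpr ⟨le_sup_left, hsupcard⟩,
    mem_lowers.mpr ⟨le_sup_right, by omega⟩⟩

lemma master (μ : YoungDiagram) (g : ℤ → ℤ) :
    ∑ Λ ∈ uppers μ, (sytCount Λ : ℤ) * g (Λ.contentSum - μ.contentSum)
      = (∑ ν ∈ lowers μ, ∑ ρ ∈ uppers ν, (sytCount ρ : ℤ) * g (ρ.contentSum - ν.contentSum))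
        + (sytCount μ : ℤ) *
          ((∑ Λ ∈ uppers μ, g (Λ.contentSum - μ.contentSum))
            - (∑ ν ∈ lowers μ, g (μ.contentSum - ν.contentSum))) := by
  classical
  have hA : ∑ Λ ∈ uppers μ, (sytCount Λ : ℤ) * g (Λ.contentSum - μ.contentSum)
      = (sytCount μ : ℤ) * (∑ Λ ∈ uppers μ, g (Λ.contentSum - μ.contentSum))
        + ∑ Λ ∈ uppers μ, ∑ ρ ∈ (lowers Λ).erase μ,
            (sytCount ρ : ℤ) * g (Λ.contentSum - μ.contentSum) := by
    rw [Finset.mul_sum, ← Finset.sum_add_distrib]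
    apply Finset.sum_congr rfl
    intro Λ hΛ
    have hΛ' := mem_uppers.mp hΛ
    have hμΛ : μ ∈ lowers Λ := mem_lowers.mpr ⟨hΛ'.1, hΛ'.2⟩
    have hrec : (sytCount Λ : ℤ) = ∑ ρ ∈ lowers Λ, (sytCount ρ : ℤ) := by
      rw [sytCount_pos_card hΛ'.2]
      push_cast
      rfl
    rw [hrec, ← Finset.add_sum_erase _ _ hμΛ, add_mul, Finset.sum_mul]
  have hB : ∑ ν ∈ lowers μ, ∑ ρ ∈ uppers ν, (sytCount ρ : ℤ) * g (ρ.contentSum - ν.contentSum)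
      = (sytCount μ : ℤ) * (∑ ν ∈ lowers μ, g (μ.contentSum - ν.contentSum))
        + ∑ ν ∈ lowers μ, ∑ ρ ∈ (uppers ν).erase μ,
            (sytCount ρ : ℤ) * g (ρ.contentSum - ν.contentSum) := by
    rw [Finset.mul_sum, ← Finset.sum_add_distrib]
    apply Finset.sum_congr rfl
    intro ν hν
    have hν' := mem_lowers.mp hν
    have hμν : μ ∈ uppers ν := mem_uppers.mpr ⟨hν'.1, hν'.2⟩
    rw [← Finset.add_sum_erase _ _ hμν]
  have hC : ∑ Λ ∈ uppers μ, ∑ ρ ∈ (lowers Λ).erase μ,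
        (sytCount ρ : ℤ) * g (Λ.contentSum - μ.contentSum)
      = ∑ ν ∈ lowers μ, ∑ ρ ∈ (uppers ν).erase μ,
        (sytCount ρ : ℤ) * g (ρ.contentSum - ν.contentSum) := by
    rw [Finset.sum_sigma', Finset.sum_sigma']
    apply Finset.sum_nbij' (fun x => ⟨μ ⊓ x.2, x.2⟩) (fun y => ⟨μ ⊔ y.2, y.2⟩)
    · rintro ⟨Λ, ρ⟩ hx
      rw [Finset.mem_sigma] at hx
      obtain ⟨hΛ, hρ⟩ := hx
      rw [Finset.mem_erase] at hρ
      obtain ⟨hsup, hlo, hup⟩ := cross1 hΛ hρ.2 hρ.1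
      rw [Finset.mem_sigma, Finset.mem_erase]
      refine ⟨hlo, ?_, hup⟩
      intro heq
      have h1 := (mem_uppers.mp hΛ).2
      have h2 := (mem_lowers.mp hρ.2).2
      have h3 := card_le_of_le (le_of_eq heq : ρ ≤ μ)
      exact hρ.1 (eq_of_le_of_card_le (le_of_eq heq) (by omega))
    · rintro ⟨ν, ρ⟩ hy
      rw [Finset.mem_sigma] at hy
      obtain ⟨hν, hρ⟩ := hy
      rw [Finset.mem_erase] at hρ
      obtain ⟨hinf, hup, hlo⟩ := cross2 hν hρ.2 hρ.1
      rw [Finset.mem_sigma, Finset.mem_erase]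
      exact ⟨hup, hρ.1, hlo⟩
    · rintro ⟨Λ, ρ⟩ hx
      rw [Finset.mem_sigma] at hx
      obtain ⟨hΛ, hρ⟩ := hx
      rw [Finset.mem_erase] at hρ
      obtain ⟨hsup, _, _⟩ := cross1 hΛ hρ.2 hρ.1
      simp only [hsup]
    · rintro ⟨ν, ρ⟩ hy
      rw [Finset.mem_sigma] at hy
      obtain ⟨hν, hρ⟩ := hy
      rw [Finset.mem_erase] at hρ
      obtain ⟨hinf, _, _⟩ := cross2 hν hρ.2 hρ.1
      simp only [hinf]
    · rintro ⟨Λ, ρ⟩ hx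
      rw [Finset.mem_sigma] at hx
      obtain ⟨hΛ, hρ⟩ := hx
      rw [Finset.mem_erase] at hρ
      obtain ⟨hsup, hlo, hup⟩ := cross1 hΛ hρ.2 hρ.1
      have hcs := contentSum_sup_add_inf μ ρ
      rw [hsup] at hcs
      show (sytCount ρ : ℤ) * g (Λ.contentSum - μ.contentSum)
          = (sytCount ρ : ℤ) * g (ρ.contentSum - (μ ⊓ ρ).contentSum)
      congr 1
      congr 1
      linarith [hcs]
  rw [hA, hB, hC]
  ring

lemma G1 : ∀ n : ℕ, ∀ μ : YoungDiagram, μ.card = n →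
    ∑ Λ ∈ uppers μ, (sytCount Λ : ℤ) = ((μ.card : ℤ) + 1) * (sytCount μ : ℤ) := by
  intro n
  induction n using Nat.strong_induction_on with
  | _ n ih =>
    intro μ hn
    have hm := master μ (fun _ => 1)
    simp only [mul_one] at hm
    have hup1 : ∑ Λ ∈ uppers μ, (1 : ℤ) = ((uppers μ).card : ℤ) := by simp
    have hlo1 : ∑ ν ∈ lowers μ, (1 : ℤ) = ((lowers μ).card : ℤ) := by simp
    rw [hup1, hlo1, corner_one μ] at hm
    have hinner : ∀ ν ∈ lowers μ, ∑ ρ ∈ uppers ν, (sytCount ρ : ℤ)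
        = ((ν.card : ℤ) + 1) * (sytCount ν : ℤ) := by
      intro ν hν
      have hν' := mem_lowers.mp hν
      exact ih ν.card (by omega) ν rfl
    rw [Finset.sum_congr rfl hinner] at hm
    have hc : ∀ ν ∈ lowers μ, ((ν.card : ℤ) + 1) * (sytCount ν : ℤ)
        = (n : ℤ) * (sytCount ν : ℤ) := by
      intro ν hν
      have hν' := mem_lowers.mp hν
      have : (ν.card : ℤ) + 1 = n := by omega
      rw [this]
    rw [Finset.sum_congr rfl hc, ← Finset.mul_sum] at hm
    have hlowsum : (n : ℤ) * (∑ ν ∈ lowers μ, (sytCount ν : ℤ)) = n * (sytCount μ : ℤ) := by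
      rcases n with _ | m
      · simp
      · congr 1
        rw [sytCount_pos_card hn]
        push_cast
        rfl
    rw [hlowsum] at hm
    rw [hm, hn]
    ring

lemma G2 : ∀ n : ℕ, ∀ μ : YoungDiagram, μ.card = n →
    ∑ Λ ∈ uppers μ, (sytCount Λ : ℤ) * (Λ.contentSum - μ.contentSum) = 0 := by
  intro n
  induction n using Nat.strong_induction_on with
  | _ n ih =>
    intro μ hn
    have hm := master μ (fun x => x)
    have hinner : ∀ ν ∈ lowers μ,
        ∑ ρ ∈ uppers ν, (sytCount ρ : ℤ) * (ρ.contentSum - ν.contentSum) = 0 := by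
      intro ν hν
      have hν' := mem_lowers.mp hν
      exact ih ν.card (by omega) ν rfl
    rw [Finset.sum_congr rfl hinner, corner_lin μ] at hm
    simpa using hm

lemma G3 : ∀ n : ℕ, ∀ μ : YoungDiagram, μ.card = n →
    ∑ Λ ∈ uppers μ, (sytCount Λ : ℤ) * (Λ.contentSum - μ.contentSum) ^ 2
      = (μ.card : ℤ) * ((μ.card : ℤ) + 1) * (sytCount μ : ℤ) := by
  intro n
  induction n using Nat.strong_induction_on with
  | _ n ih =>
    intro μ hn
    have hm := master μ (fun x => x ^ 2)
    have hinner : ∀ ν ∈ lowers μ,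
        ∑ ρ ∈ uppers ν, (sytCount ρ : ℤ) * (ρ.contentSum - ν.contentSum) ^ 2
          = ((n : ℤ) - 1) * (n : ℤ) * (sytCount ν : ℤ) := by
      intro ν hν
      have hν' := mem_lowers.mp hν
      have := ih ν.card (by omega) ν rfl
      rw [this]
      have h1 : (ν.card : ℤ) = (n : ℤ) - 1 := by
        have : ν.card + 1 = n := by omega
        omega
      rw [h1]
      ring_nf
    rw [Finset.sum_congr rfl hinner, corner_sq μ] at hm
    have hlowsum : ∑ ν ∈ lowers μ, ((n : ℤ) - 1) * (n : ℤ) * (sytCount ν : ℤ)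
        = ((n : ℤ) - 1) * (n : ℤ) * (sytCount μ : ℤ) := by
      rw [← Finset.mul_sum]
      rcases n with _ | m
      · simp
      · congr 1
        rw [sytCount_pos_card hn]
        push_cast
        rfl
    rw [hlowsum] at hm
    rw [hn] at hm ⊢
    rw [hm]
    ring

end YoungPG

/-- Under the Plancherel growth process on partitions (transition probability
`dim(Λ)/((j+1)·dim(μ))` from `μ` of size `j` to `Λ` of size `j+1`), the sequence
`Y_j^2 − C(j,2)`, where `Y_j` is the total content of the `j`-th partition, is a martingale:
for every partition `μ` of size `j`,
`Σ_Λ P(μ → Λ) · ((Σ_{x∈Λ} c(x))^2 − C(j+1,2)) = (Σ_{x∈μ} c(x))^2 − C(j,2)`. -/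
theorem content_squared_minus_choose_is_martingale (μ : YoungDiagram) :
    (∑ᶠ Λ ∈ {Λ : YoungDiagram | μ ≤ Λ ∧ Λ.card = μ.card + 1},
      ((sytCount Λ : ℚ) / ((μ.card + 1) * (sytCount μ : ℚ))) *
        (((Λ.contentSum : ℚ)) ^ 2 - ((μ.card + 1).choose 2 : ℚ))) =
      ((μ.contentSum : ℚ)) ^ 2 - (μ.card.choose 2 : ℚ) := by
  classical
  have hset : {Λ : YoungDiagram | μ ≤ Λ ∧ Λ.card = μ.card + 1} = ↑(YoungPG.uppers μ) := by
    ext Λ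
    simp [YoungPG.mem_uppers]
  rw [hset, finsum_mem_coe_finset]
  have hn' : μ.card = μ.card := rfl
  set n := μ.card with hn
  -- integer identities
  have h1 := YoungPG.G1 n μ hn.symm
  have h2 := YoungPG.G2 n μ hn.symm
  have h3 := YoungPG.G3 n μ hn.symm
  rw [← hn] at h1 h3
  -- derive the first-moment identity in ℤ
  have h2' : ∑ Λ ∈ YoungPG.uppers μ, (sytCount Λ : ℤ) * Λ.contentSum
      = ((n : ℤ) + 1) * (sytCount μ : ℤ) * μ.contentSum := by
    have hexp : ∑ Λ ∈ YoungPG.uppers μ, (sytCount Λ : ℤ) * (Λ.contentSum - μ.contentSum)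
        = ∑ Λ ∈ YoungPG.uppers μ,
            ((sytCount Λ : ℤ) * Λ.contentSum - (sytCount Λ : ℤ) * μ.contentSum) :=
      Finset.sum_congr rfl (fun _ _ => by ring)
    rw [hexp, Finset.sum_sub_distrib, ← Finset.sum_mul, h1] at h2
    linarith [h2]
  -- derive the second-moment identity in ℤ
  have h3' : ∑ Λ ∈ YoungPG.uppers μ, (sytCount Λ : ℤ) * Λ.contentSum ^ 2
      = ((n : ℤ) + 1) * (sytCount μ : ℤ) * μ.contentSum ^ 2
        + (n : ℤ) * ((n : ℤ) + 1) * (sytCount μ : ℤ) := by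
    have hexp : ∑ Λ ∈ YoungPG.uppers μ, (sytCount Λ : ℤ) * (Λ.contentSum - μ.contentSum) ^ 2
        = ∑ Λ ∈ YoungPG.uppers μ,
            ((sytCount Λ : ℤ) * Λ.contentSum ^ 2
              - 2 * μ.contentSum * ((sytCount Λ : ℤ) * Λ.contentSum)
              + μ.contentSum ^ 2 * (sytCount Λ : ℤ)) :=
      Finset.sum_congr rfl (fun _ _ => by ring)
    rw [hexp, Finset.sum_add_distrib, Finset.sum_sub_distrib, ← Finset.mul_sum,
      ← Finset.mul_sum, h1, h2'] at h3
    linarith [h3]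
  -- move to ℚ
  have q1 : ∑ Λ ∈ YoungPG.uppers μ, (sytCount Λ : ℚ)
      = ((n : ℚ) + 1) * (sytCount μ : ℚ) := by exact_mod_cast h1
  have q3 : ∑ Λ ∈ YoungPG.uppers μ, (sytCount Λ : ℚ) * (Λ.contentSum : ℚ) ^ 2
      = ((n : ℚ) + 1) * (sytCount μ : ℚ) * (μ.contentSum : ℚ) ^ 2
        + (n : ℚ) * ((n : ℚ) + 1) * (sytCount μ : ℚ) := by exact_mod_cast h3'
  have hNpos : 0 < sytCount μ := YoungPG.sytCount_pos μ
  have hD : ((n : ℚ) + 1) * (sytCount μ : ℚ) ≠ 0 := by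
    have hq : (0 : ℚ) < (sytCount μ : ℚ) := by exact_mod_cast hNpos
    have hq2 : (0 : ℚ) < (n : ℚ) + 1 := by positivity
    exact ne_of_gt (mul_pos hq2 hq)
  have hch : (((n + 1).choose 2 : ℕ) : ℚ) = ((n.choose 2 : ℕ) : ℚ) + (n : ℚ) := by
    have hnat : (n + 1).choose 2 = n.choose 2 + n := by
      rw [Nat.choose_succ_succ, Nat.choose_one_right]
      exact Nat.add_comm _ _
    rw [hnat]
    push_cast
    ring
  have hterm : ∀ Λ ∈ YoungPG.uppers μ,
      ((sytCount Λ : ℚ) / (((n : ℚ) + 1) * (sytCount μ : ℚ))) *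
        (((Λ.contentSum : ℚ)) ^ 2 - (((n + 1).choose 2 : ℕ) : ℚ))
      = ((sytCount Λ : ℚ) * (((Λ.contentSum : ℚ)) ^ 2 - (((n + 1).choose 2 : ℕ) : ℚ)))
          / (((n : ℚ) + 1) * (sytCount μ : ℚ)) := by
    intro Λ _
    rw [div_mul_eq_mul_div]
  rw [Finset.sum_congr rfl hterm, ← Finset.sum_div, div_eq_iff hD]
  have hsplit : ∑ Λ ∈ YoungPG.uppers μ,
      (sytCount Λ : ℚ) * (((Λ.contentSum : ℚ)) ^ 2 - (((n + 1).choose 2 : ℕ) : ℚ))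
      = (∑ Λ ∈ YoungPG.uppers μ, (sytCount Λ : ℚ) * (Λ.contentSum : ℚ) ^ 2)
        - (∑ Λ ∈ YoungPG.uppers μ, (sytCount Λ : ℚ)) * (((n + 1).choose 2 : ℕ) : ℚ) := by
    rw [Finset.sum_mul, ← Finset.sum_sub_distrib]
    exact Finset.sum_congr rfl (fun _ _ => by ring)
  rw [hsplit, q1, q3, hch]
  ring
end
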